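/- arXiv:1710.07885 — 9 statements merged into one kernel-verified Lean document; each statement's English description precedes it below -/
import Mathlib

section
/- If π is a permutation of {1,...,n} with π(i) ≥ i - 1 for all i ∈ {2,...,n}, then every cycle of π consists of a set of consecutive integers {m, m+1, ..., m+k-1}, and the cycle maps m+j to m+j-1 for 1 ≤ j ≤ k-1 and maps m to m+k-1. -/
open Finset

/-- `c` is closed for `π` if `π` maps `{0,...,c-1}` into itself. -/
def B2Closed {n : ℕ} (π : Equiv.Perm (Fin n)) (c : ℕ) : Prop :=
  ∀ a : Fin n, (a : ℕ) < c → (π a : ℕ) < c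

instance {n : ℕ} (π : Equiv.Perm (Fin n)) : DecidablePred (B2Closed π) := fun _ => by
  unfold B2Closed; infer_instance

lemma b2closed_zero {n : ℕ} (π : Equiv.Perm (Fin n)) : B2Closed π 0 :=
  fun _ h => absurd h (Nat.not_lt_zero _)

lemma b2closed_n {n : ℕ} (π : Equiv.Perm (Fin n)) : B2Closed π n :=
  fun a _ => (π a).isLt

lemma b2card_lt {n : ℕ} (c : ℕ) (hc : c ≤ n) :
    (univ.filter (fun x : Fin n => (x : ℕ) < c)).card = c := by
  have : Finset.image Fin.val (univ.filter (fun x : Fin n => (x : ℕ) < c))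
      = Finset.range c := by
    ext t
    simp only [Finset.mem_image, Finset.mem_filter, Finset.mem_univ, true_and,
      Finset.mem_range]
    constructor
    · rintro ⟨x, hx, rfl⟩; exact hx
    · intro ht; exact ⟨⟨t, lt_of_lt_of_le ht hc⟩, ht, rfl⟩
  have h2 := congrArg Finset.card this
  rwa [Finset.card_image_of_injective _ Fin.val_injective, Finset.card_range] at h2

lemma b2card_pi_lt {n : ℕ} (π : Equiv.Perm (Fin n)) (c : ℕ) :
    (univ.filter (fun x : Fin n => (π x : ℕ) < c)).card
      = (univ.filter (fun x : Fin n => (x : ℕ) < c)).card := by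
  have : univ.filter (fun x : Fin n => (π x : ℕ) < c)
      = Finset.image π.symm (univ.filter (fun x : Fin n => (x : ℕ) < c)) := by
    ext x
    simp only [Finset.mem_filter, Finset.mem_univ, true_and, Finset.mem_image]
    constructor
    · intro h; exact ⟨π x, h, π.symm_apply_apply x⟩
    · rintro ⟨y, hy, rfl⟩; rwa [π.apply_symm_apply]
  rw [this, Finset.card_image_of_injective _ π.symm.injective]

/-- If `j` is not a closed point, then `π j < j`. -/
lemma b2pi_lt_of_not_closed {n : ℕ} (π : Equiv.Perm (Fin n))
    (hreg : ∀ i : Fin n, (i : ℕ) ≤ (π i : ℕ) + 1)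
    (j : Fin n) (h : ¬ B2Closed π (j : ℕ)) : (π j : ℕ) < (j : ℕ) := by
  by_contra hge
  push_neg at hge
  -- get a witness a < j with π a ≥ j
  unfold B2Closed at h
  push_neg at h
  obtain ⟨a, ha, hpa⟩ := h
  -- T = preimages of values < j ; A = indices ≤ j
  set T := univ.filter (fun x : Fin n => (π x : ℕ) < (j : ℕ)) with hT
  set A := univ.filter (fun x : Fin n => (x : ℕ) < (j : ℕ) + 1) with hA
  have hTcard : T.card = (j : ℕ) := by
    rw [hT, b2card_pi_lt, b2card_lt _ (le_of_lt j.isLt)]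
  have hAcard : A.card = (j : ℕ) + 1 := b2card_lt _ j.isLt
  have haj : a ≠ j := by intro e; rw [e] at ha; exact lt_irrefl _ ha
  have hsub : T ⊆ A \ {a, j} := by
    intro x hx
    rw [hT, Finset.mem_filter] at hx
    have hxlt : (π x : ℕ) < (j : ℕ) := hx.2
    rw [Finset.mem_sdiff]
    constructor
    · rw [hA, Finset.mem_filter]
      exact ⟨Finset.mem_univ _, lt_of_le_of_lt (hreg x) (by omega)⟩
    · simp only [Finset.mem_insert, Finset.mem_singleton]
      rintro (rfl | rfl)
      · omega
      · omega
  have hpairsub : ({a, j} : Finset (Fin n)) ⊆ A := by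
    intro x hx
    simp only [Finset.mem_insert, Finset.mem_singleton] at hx
    rw [hA, Finset.mem_filter]
    rcases hx with rfl | rfl
    · exact ⟨Finset.mem_univ _, by omega⟩
    · exact ⟨Finset.mem_univ _, by omega⟩
  have hpaircard : ({a, j} : Finset (Fin n)).card = 2 :=
    Finset.card_pair haj
  have := Finset.card_le_card hsub
  rw [Finset.card_sdiff_of_subset hpairsub, hpaircard, hAcard, hTcard] at this
  omega

lemma b2pi_eq_of_not_closed {n : ℕ} (π : Equiv.Perm (Fin n))
    (hreg : ∀ i : Fin n, (i : ℕ) ≤ (π i : ℕ) + 1)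
    (j : Fin n) (h : ¬ B2Closed π (j : ℕ)) : (π j : ℕ) = (j : ℕ) - 1 := by
  have h1 := b2pi_lt_of_not_closed π hreg j h
  have h2 := hreg j
  omega

/-- If `c` is closed and `c ≤ j` then `c ≤ π j`. -/
lemma b2closed_ge {n : ℕ} (π : Equiv.Perm (Fin n)) {c : ℕ} (hc : B2Closed π c)
    (j : Fin n) (hj : c ≤ (j : ℕ)) : c ≤ (π j : ℕ) := by
  by_contra hlt
  push_neg at hlt
  set A := univ.filter (fun x : Fin n => (x : ℕ) < c) with hA
  have hmaps : Finset.image π A ⊆ A := by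
    intro y hy
    rw [Finset.mem_image] at hy
    obtain ⟨x, hx, rfl⟩ := hy
    rw [hA, Finset.mem_filter] at hx ⊢
    exact ⟨Finset.mem_univ _, hc x hx.2⟩
  have heq : Finset.image π A = A :=
    Finset.eq_of_subset_of_card_le hmaps
      (le_of_eq (Finset.card_image_of_injective _ π.injective).symm)
  have hmem : π j ∈ A := by rw [hA, Finset.mem_filter]; exact ⟨Finset.mem_univ _, hlt⟩
  rw [← heq, Finset.mem_image] at hmem
  obtain ⟨x, hx, hxe⟩ := hmem
  have : x = j := π.injective hxe
  rw [this] at hx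
  rw [hA, Finset.mem_filter] at hx
  omega

/-- If `π` is a permutation of `{1,...,n}` with `π(i) ≥ i - 1` for
`i ∈ {2,...,n}` (encoded 0-based on `Fin n` as `(π i) + 1 ≥ i`), then every cycle
(orbit) of `π` is a set of consecutive integers `{m, m+1, ..., m+k-1}`, the cycle
maps `m+j` to `m+j-1` for `1 ≤ j ≤ k-1`, and maps `m` to `m+k-1`. -/
theorem b2_cycle_structure (n : ℕ) (π : Equiv.Perm (Fin n))
    (hreg : ∀ i : Fin n, (i : ℕ) ≤ (π i : ℕ) + 1) :
    ∀ i : Fin n, ∃ m k : ℕ, 1 ≤ k ∧ m + k ≤ n ∧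
      (∀ j : Fin n, π.SameCycle i j ↔ (m ≤ (j : ℕ) ∧ (j : ℕ) < m + k)) ∧
      (∀ j : Fin n, m < (j : ℕ) → (j : ℕ) < m + k → (π j : ℕ) = (j : ℕ) - 1) ∧
      (∀ j : Fin n, (j : ℕ) = m → (π j : ℕ) = m + k - 1) := by
  intro i
  -- m : greatest closed point ≤ i
  set m := Nat.findGreatest (B2Closed π) (i : ℕ) with hm_def
  have hm_le : m ≤ (i : ℕ) := Nat.findGreatest_le _
  have hm_closed : B2Closed π m :=
    Nat.findGreatest_spec (Nat.zero_le _) (b2closed_zero π)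
  have hnc1 : ∀ c, m < c → c ≤ (i : ℕ) → ¬ B2Closed π c :=
    fun c h1 h2 => Nat.findGreatest_is_greatest h1 h2
  -- m' : least closed point > i
  have hex : ∃ d, B2Closed π ((i : ℕ) + 1 + d) ∧ (i : ℕ) + 1 + d ≤ n := by
    refine ⟨n - ((i : ℕ) + 1), ?_, by omega⟩
    have : (i : ℕ) + 1 + (n - ((i : ℕ) + 1)) = n := by have := i.isLt; omega
    rw [this]; exact b2closed_n π
  set m' := (i : ℕ) + 1 + Nat.find hex with hm'_def
  have hm'_spec := Nat.find_spec hex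
  have hm'_closed : B2Closed π m' := hm'_spec.1
  have hm'_le_n : m' ≤ n := hm'_spec.2
  have hi_lt : (i : ℕ) < m' := by omega
  have hnc2 : ∀ c, (i : ℕ) < c → c < m' → ¬ B2Closed π c := by
    intro c h1 h2 hcl
    have hd : c - ((i : ℕ) + 1) < Nat.find hex := by omega
    exact Nat.find_min hex hd ⟨by
      have : (i : ℕ) + 1 + (c - ((i : ℕ) + 1)) = c := by omega
      rw [this]; exact hcl, by omega⟩
  have hnc : ∀ c, m < c → c < m' → ¬ B2Closed π c := by
    intro c h1 h2
    rcases le_or_gt c (i : ℕ) with h | h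
    · exact hnc1 c h1 h
    · exact hnc2 c h h2
  have hmm' : m < m' := lt_of_le_of_lt hm_le hi_lt
  refine ⟨m, m' - m, by omega, by omega, ?_, ?_, ?_⟩
  -- helper facts first, via `suffices`-style: prove the two π-value claims first
  rotate_left
  · -- interior points go down by one
    intro j h1 h2
    exact b2pi_eq_of_not_closed π hreg j (hnc _ h1 (by omega))
  · -- bottom point maps to top
    intro j hj
    have hub : (π j : ℕ) < m' := hm'_closed j (by omega)
    have hlb : m ≤ (π j : ℕ) := b2closed_ge π hm_closed j (by omega)
    by_contra hne
    have hlt : (π j : ℕ) < m' - 1 := by omega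
    set t : Fin n := ⟨(π j : ℕ) + 1, by omega⟩ with ht
    have hdown : (π t : ℕ) = (t : ℕ) - 1 :=
      b2pi_eq_of_not_closed π hreg t (hnc _ (by simp [ht]; omega) (by simp [ht]; omega))
    have : π t = π j := by
      apply Fin.ext
      simp only [hdown]
      simp [ht]
    have heq := π.injective this
    have hv : ((π j : ℕ) + 1) = (j : ℕ) := congrArg Fin.val heq
    omega
  · -- the SameCycle characterization
    -- block invariance
    have hmapsto : ∀ j : Fin n, m ≤ (j : ℕ) → (j : ℕ) < m' →
        m ≤ (π j : ℕ) ∧ (π j : ℕ) < m' := by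
      intro j h1 h2
      exact ⟨b2closed_ge π hm_closed j h1, hm'_closed j h2⟩
    have hmlt : m < n := by have := i.isLt; omega
    -- descending chain: from any block element we reach ⟨m⟩ by a ℕ-power
    have hchain : ∀ d : ℕ, ∀ j : Fin n, m ≤ (j : ℕ) → (j : ℕ) < m' →
        (j : ℕ) = m + d → (π ^ d) j = ⟨m, hmlt⟩ := by
      intro d
      induction d with
      | zero =>
          intro j h1 h2 h3
          simp only [pow_zero, Equiv.Perm.coe_one, id_eq]
          exact Fin.ext (show (j : ℕ) = m by omega)
      | succ d ih =>
          intro j h1 h2 h3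
          have hstep : (π j : ℕ) = (j : ℕ) - 1 :=
            b2pi_eq_of_not_closed π hreg j (hnc _ (by omega) h2)
          have hmem := hmapsto j h1 h2
          rw [pow_succ]
          simp only [Equiv.Perm.coe_mul, Function.comp_apply]
          exact ih (π j) hmem.1 hmem.2 (by omega)
    have hto_m : ∀ j : Fin n, m ≤ (j : ℕ) → (j : ℕ) < m' →
        π.SameCycle j ⟨m, hmlt⟩ := by
      intro j h1 h2
      exact ⟨((j : ℕ) - m : ℕ), by
        rw [zpow_natCast]; exact hchain _ j h1 h2 (by omega)⟩
    intro j
    constructor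
    · -- SameCycle i j → j in block
      rintro hsc
      obtain ⟨t, _, _, ht⟩ := hsc.exists_pow_eq π
      have : ∀ s : ℕ, m ≤ (((π ^ s) i : Fin n) : ℕ) ∧ (((π ^ s) i : Fin n) : ℕ) < m' := by
        intro s
        induction s with
        | zero => simpa using ⟨hm_le, hi_lt⟩
        | succ s ih =>
            rw [pow_succ']
            simp only [Equiv.Perm.coe_mul, Function.comp_apply]
            exact hmapsto _ ih.1 ih.2
      have := this t
      rw [ht] at this
      omega
    · rintro ⟨h1, h2⟩
      have hi1 : π.SameCycle i ⟨m, hmlt⟩ := hto_m i hm_le hi_lt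
      have hj1 : π.SameCycle j ⟨m, hmlt⟩ := hto_m j h1 (by omega)
      exact hi1.trans hj1.symm
end

section
/- There is a bijection between the set of permutations π of {1,...,n} satisfying π(i) ≥ i - 1 for i ∈ {2,...,n} and the set of compositions of n, such that for every k, the number of k-cycles of a permutation equals the number of parts equal to k in the corresponding composition. -/
/-- The number of `k`-cycles (orbits of size exactly `k`) of a permutation `π` of `Fin n`:
the number of points lying on an orbit of size `k`, divided by `k`. -/
def numKCycles {n : ℕ} (π : Equiv.Perm (Fin n)) (k : ℕ) : ℕ :=
  (Finset.univ.filter (fun i : Fin n =>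
    (Finset.univ.filter (fun j : Fin n => π.SameCycle i j)).card = k)).card / k

open Finset

namespace B2Aux

def nxt (n : ℕ) (B : Finset ℕ) (i : ℕ) : ℕ := WithTop.untopD n ((B.filter fun b => i < b).min)

def prv (B : Finset ℕ) (i : ℕ) : ℕ := WithBot.unbotD 0 ((B.filter fun b => b ≤ i).max)

variable {n : ℕ} {B : Finset ℕ}

theorem nxt_spec (hn : n ∈ B) {i : ℕ} (hi : i < n) :
    nxt n B i ∈ B ∧ i < nxt n B i ∧ ∀ b ∈ B, i < b → nxt n B i ≤ b := by
  have hne : (B.filter fun b => i < b).Nonempty := ⟨n, by simp [hn, hi]⟩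
  have : nxt n B i = (B.filter fun b => i < b).min' hne := by
    rw [nxt, ← Finset.coe_min' hne, WithTop.untopD_coe]
  rw [this]
  have hmem := Finset.min'_mem _ hne
  simp only [Finset.mem_filter] at hmem
  refine ⟨hmem.1, hmem.2, fun b hb hib => Finset.min'_le _ _ (by simp [hb, hib])⟩

theorem prv_spec (h0 : 0 ∈ B) (i : ℕ) :
    prv B i ∈ B ∧ prv B i ≤ i ∧ ∀ b ∈ B, b ≤ i → b ≤ prv B i := by
  have hne : (B.filter fun b => b ≤ i).Nonempty := ⟨0, by simp [h0]⟩
  have : prv B i = (B.filter fun b => b ≤ i).max' hne := by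
    rw [prv, ← Finset.coe_max' hne, WithBot.unbotD_coe]
  rw [this]
  have hmem := Finset.max'_mem _ hne
  simp only [Finset.mem_filter] at hmem
  refine ⟨hmem.1, hmem.2, fun b hb hib => Finset.le_max' _ _ (by simp [hb, hib])⟩

theorem prv_eq_self (h0 : 0 ∈ B) {i : ℕ} (hi : i ∈ B) : prv B i = i :=
  le_antisymm (prv_spec h0 i).2.1 ((prv_spec h0 i).2.2 i hi le_rfl)

theorem prv_sub_one (h0 : 0 ∈ B) {i : ℕ} (hi : (i : ℕ) ∉ B) (hi0 : i ≠ 0) :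
    prv B (i - 1) = prv B i := by
  have : (B.filter fun b => b ≤ i - 1) = B.filter fun b => b ≤ i := by
    ext b
    simp only [Finset.mem_filter, and_congr_right_iff]
    intro hb
    constructor
    · omega
    · intro hbi
      have : b ≠ i := fun hc => hi (hc ▸ hb)
      omega
  rw [prv, this, prv]

theorem prv_nxt_sub_one (h0 : 0 ∈ B) (hn : n ∈ B) {i : ℕ} (hi : i < n) (hmem : i ∈ B) :
    prv B (nxt n B i - 1) = i := by
  obtain ⟨hm, hlt, hmin⟩ := nxt_spec hn hi
  obtain ⟨hq1, hq2, hq3⟩ := prv_spec h0 (nxt n B i - 1)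
  have hle : i ≤ prv B (nxt n B i - 1) := hq3 _ hmem (by omega)
  have : ¬ i < prv B (nxt n B i - 1) := fun hc => by
    have := hmin _ hq1 hc; omega
  omega


section Perm

variable (n B)
variable (h0 : 0 ∈ B) (hn : n ∈ B) (hub : ∀ b ∈ B, b ≤ n)
include h0 hn hub

/-- forward map: block starts go to block ends, other elements step down by one. -/
def pfun (i : Fin n) : Fin n :=
  ⟨if (i : ℕ) ∈ B then nxt n B i - 1 else (i : ℕ) - 1, by
    split_ifs with h
    · obtain ⟨hm, hlt, -⟩ := nxt_spec hn i.isLt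
      have := hub _ hm
      have := i.pos
      omega
    · have := i.isLt; omega⟩

/-- backward map: block ends go to block starts, other elements step up by one. -/
def qfun (i : Fin n) : Fin n :=
  ⟨if (i : ℕ) + 1 ∈ B then prv B i else (i : ℕ) + 1, by
    split_ifs with h
    · exact lt_of_le_of_lt (prv_spec h0 i).2.1 i.isLt
    · have hi := i.isLt
      rcases Nat.lt_or_ge ((i : ℕ) + 1) n with h' | h'
      · exact h'
      · have : (i : ℕ) + 1 = n := by omega
        exact absurd (by rw [this]; exact hn) h⟩

theorem qp (i : Fin n) : qfun n B h0 hn (pfun n B hn hub i) = i := by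
  apply Fin.ext
  by_cases h : (i : ℕ) ∈ B
  · -- start: pfun i = nxt i - 1
    obtain ⟨hm, hlt, hmin⟩ := nxt_spec hn i.isLt
    have hval : ((pfun n B hn hub i : Fin n) : ℕ) = nxt n B i - 1 := by
      simp [pfun, h]
    have hsucc : nxt n B i - 1 + 1 = nxt n B i := by omega
    simp only [qfun, hval, hsucc, hm, if_pos]
    -- prv (nxt i - 1) = i
    obtain ⟨hq1, hq2, hq3⟩ := prv_spec h0 (nxt n B i - 1)
    have hle : (i : ℕ) ≤ prv B (nxt n B i - 1) := hq3 _ h (by omega)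
    have : ¬ (i : ℕ) < prv B (nxt n B i - 1) := fun hc => by
      have := hmin _ hq1 hc; omega
    omega
  · -- non-start: pfun i = i - 1
    have hi0 : (i : ℕ) ≠ 0 := fun hc => h (by rw [hc]; exact h0)
    have hval : ((pfun n B hn hub i : Fin n) : ℕ) = (i : ℕ) - 1 := by
      simp [pfun, h]
    have hsucc : (i : ℕ) - 1 + 1 = (i : ℕ) := by omega
    simp only [qfun, hval, hsucc, h, if_neg, not_false_iff]

theorem pq (i : Fin n) : pfun n B hn hub (qfun n B h0 hn i) = i := by
  apply Fin.ext
  by_cases h : (i : ℕ) + 1 ∈ B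
  · -- block end: qfun i = prv i
    have hval : ((qfun n B h0 hn i : Fin n) : ℕ) = prv B i := by
      simp [qfun, h]
    obtain ⟨hq1, hq2, hq3⟩ := prv_spec h0 (i : ℕ)
    simp only [pfun, hval, hq1, if_pos]
    -- nxt (prv i) = i + 1
    obtain ⟨hm, hlt, hmin⟩ := nxt_spec hn (lt_of_le_of_lt hq2 i.isLt)
    have h1 : nxt n B (prv B i) ≤ (i : ℕ) + 1 := hmin _ h (by omega)
    have h2 : ¬ nxt n B (prv B i) ≤ (i : ℕ) := fun hc => by
      have := hq3 _ hm hc; omega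
    omega
  · -- interior: qfun i = i + 1
    have hval : ((qfun n B h0 hn i : Fin n) : ℕ) = (i : ℕ) + 1 := by
      simp [qfun, h]
    simp only [pfun, hval, h, if_neg, not_false_iff]
    omega

/-- The permutation associated to a boundary set. -/
def gPerm : Equiv.Perm (Fin n) :=
  ⟨pfun n B hn hub, qfun n B h0 hn, qp n B h0 hn hub, pq n B h0 hn hub⟩

theorem gPerm_apply (i : Fin n) :
    ((gPerm n B h0 hn hub i : Fin n) : ℕ) =
      if (i : ℕ) ∈ B then nxt n B i - 1 else (i : ℕ) - 1 := rfl

theorem gPerm_adm (i : Fin n) : (i : ℕ) ≤ (gPerm n B h0 hn hub i : ℕ) + 1 := by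
  rw [gPerm_apply]
  split_ifs with h
  · obtain ⟨-, hlt, -⟩ := nxt_spec hn i.isLt
    omega
  · have hi0 : (i : ℕ) ≠ 0 := fun hc => h (by rw [hc]; exact h0)
    omega

end Perm

section Cycles

variable (n B)
variable (h0 : 0 ∈ B) (hn : n ∈ B) (hub : ∀ b ∈ B, b ≤ n)
include h0 hn hub

theorem prv_gPerm_apply (i : Fin n) :
    prv B ((gPerm n B h0 hn hub i : Fin n) : ℕ) = prv B (i : ℕ) := by
  by_cases h : (i : ℕ) ∈ B
  · have hval : ((gPerm n B h0 hn hub i : Fin n) : ℕ) = nxt n B (i : ℕ) - 1 := by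
      rw [gPerm_apply, if_pos h]
    rw [hval, prv_nxt_sub_one h0 hn i.isLt h, prv_eq_self h0 h]
  · have hi0 : (i : ℕ) ≠ 0 := fun hc => h (by rw [hc]; exact h0)
    have hval : ((gPerm n B h0 hn hub i : Fin n) : ℕ) = (i : ℕ) - 1 := by
      rw [gPerm_apply, if_neg h]
    rw [hval, prv_sub_one h0 h hi0]

theorem prv_gPerm_pow (k : ℕ) :
    ∀ i : Fin n, prv B (((gPerm n B h0 hn hub ^ k) i : Fin n) : ℕ) = prv B (i : ℕ) := by
  induction k with
  | zero => intro i; rfl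
  | succ m ih =>
    intro i
    rw [pow_succ, Equiv.Perm.mul_apply, ih, prv_gPerm_apply]

theorem prv_lt (i : Fin n) : prv B (i : ℕ) < n :=
  lt_of_le_of_lt (prv_spec h0 (i : ℕ)).2.1 i.isLt

theorem sameCycle_prv_aux :
    ∀ (m : ℕ) (i : Fin n), (i : ℕ) = m → ∀ s : Fin n, (s : ℕ) = prv B (i : ℕ) →
      (gPerm n B h0 hn hub).SameCycle s i := by
  intro m
  induction m using Nat.strong_induction_on with
  | _ m IH =>
    intro i him s hs
    by_cases h : (i : ℕ) ∈ B
    · have : s = i := Fin.ext (by rw [hs, prv_eq_self h0 h])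
      rw [this]
    · have hi0 : (i : ℕ) ≠ 0 := fun hc => h (by rw [hc]; exact h0)
      set j : Fin n := ⟨(i : ℕ) - 1, by have := i.isLt; omega⟩ with hj
      have hji : gPerm n B h0 hn hub i = j := by
        apply Fin.ext
        rw [gPerm_apply, if_neg h]
      have hprv : prv B ((j : Fin n) : ℕ) = prv B (i : ℕ) := prv_sub_one h0 h hi0
      have hIH := IH ((j : Fin n) : ℕ) (by simp only [hj]; omega) j rfl s
        (hs.trans hprv.symm)
      rw [← hji] at hIH
      exact (Equiv.Perm.sameCycle_apply_right).mp hIH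

theorem sameCycle_prv (i : Fin n) :
    (gPerm n B h0 hn hub).SameCycle ⟨prv B (i : ℕ), prv_lt n B h0 hn hub i⟩ i :=
  sameCycle_prv_aux n B h0 hn hub (i : ℕ) i rfl _ rfl

theorem sameCycle_iff (i j : Fin n) :
    (gPerm n B h0 hn hub).SameCycle i j ↔ prv B (i : ℕ) = prv B (j : ℕ) := by
  constructor
  · intro hsc
    obtain ⟨m, -, -, hm⟩ := hsc.exists_pow_eq _
    rw [← hm, prv_gPerm_pow]
  · intro hprv
    have h1 := sameCycle_prv n B h0 hn hub i
    have h2 := sameCycle_prv n B h0 hn hub j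
    have heq : (⟨prv B (i : ℕ), prv_lt n B h0 hn hub i⟩ : Fin n)
        = ⟨prv B (j : ℕ), prv_lt n B h0 hn hub j⟩ := Fin.ext hprv
    rw [heq] at h1
    exact h1.symm.trans h2

theorem card_prv_fiber {s : ℕ} (hs : s ∈ B) (hsn : s < n) :
    (Finset.univ.filter fun j : Fin n => prv B (j : ℕ) = s).card = nxt n B s - s := by
  obtain ⟨hm, hlt, hmin⟩ := nxt_spec hn hsn
  have hchar : ∀ j : Fin n, prv B (j : ℕ) = s ↔ s ≤ (j : ℕ) ∧ (j : ℕ) < nxt n B s := by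
    intro j
    obtain ⟨hq1, hq2, hq3⟩ := prv_spec h0 (j : ℕ)
    constructor
    · intro hpj
      refine ⟨hpj ▸ hq2, ?_⟩
      by_contra hcon
      push_neg at hcon
      have := hq3 _ hm hcon
      omega
    · rintro ⟨h1, h2⟩
      have hge : s ≤ prv B (j : ℕ) := hq3 _ hs h1
      have : ¬ s < prv B (j : ℕ) := fun hc => by
        have := hmin _ hq1 hc; omega
      omega
  have : (Finset.univ.filter fun j : Fin n => prv B (j : ℕ) = s)
      = (Finset.univ.filter fun j : Fin n => (j : ℕ) ∈ Finset.Ico s (nxt n B s)) := by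
    apply Finset.filter_congr
    intro j _
    simp only [Finset.mem_Ico, hchar j]
  rw [this]
  have hcard : (Finset.univ.filter fun j : Fin n => (j : ℕ) ∈ Finset.Ico s (nxt n B s)).card
      = (Finset.Ico s (nxt n B s)).card := by
    refine Finset.card_bij (fun j _ => (j : ℕ)) ?_ ?_ ?_
    · intro a ha
      exact (Finset.mem_filter.mp ha).2
    · intro a ha b hb hab
      exact Fin.ext hab
    · intro b hb
      have hbn : b < n := lt_of_lt_of_le (Finset.mem_Ico.mp hb).2 (hub _ hm)
      exact ⟨⟨b, hbn⟩, Finset.mem_filter.mpr ⟨Finset.mem_univ _, hb⟩, rfl⟩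
  rw [hcard, Nat.card_Ico]

theorem cycle_card (i : Fin n) :
    (Finset.univ.filter fun j : Fin n => (gPerm n B h0 hn hub).SameCycle i j).card
      = nxt n B (prv B (i : ℕ)) - prv B (i : ℕ) := by
  have : (Finset.univ.filter fun j : Fin n => (gPerm n B h0 hn hub).SameCycle i j)
      = Finset.univ.filter fun j : Fin n => prv B (j : ℕ) = prv B (i : ℕ) := by
    apply Finset.filter_congr
    intro j _
    rw [sameCycle_iff n B h0 hn hub i j]
    exact ⟨fun h => h.symm, fun h => h.symm⟩
  rw [this, card_prv_fiber n B h0 hn hub (prv_spec h0 (i : ℕ)).1 (prv_lt n B h0 hn hub i)]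

theorem numKCycles_gPerm (k : ℕ) (hk : 1 ≤ k) :
    numKCycles (gPerm n B h0 hn hub) k
      = (B.filter fun b => b < n ∧ nxt n B b - b = k).card := by
  rw [numKCycles]
  have hset : (Finset.univ.filter fun i : Fin n =>
      (Finset.univ.filter fun j => (gPerm n B h0 hn hub).SameCycle i j).card = k)
      = Finset.univ.filter fun i : Fin n => nxt n B (prv B (i : ℕ)) - prv B (i : ℕ) = k := by
    apply Finset.filter_congr
    intro i _
    rw [cycle_card n B h0 hn hub i]
  rw [hset]
  set T := B.filter fun b => b < n ∧ nxt n B b - b = k with hT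
  have hmap : ∀ i ∈ (Finset.univ.filter fun i : Fin n =>
      nxt n B (prv B (i : ℕ)) - prv B (i : ℕ) = k), prv B (i : ℕ) ∈ T := by
    intro i hi
    rw [Finset.mem_filter] at hi
    rw [hT, Finset.mem_filter]
    exact ⟨(prv_spec h0 (i : ℕ)).1, prv_lt n B h0 hn hub i, hi.2⟩
  rw [Finset.card_eq_sum_card_fiberwise hmap]
  have hfib : ∀ b ∈ T, ((Finset.univ.filter fun i : Fin n =>
      nxt n B (prv B (i : ℕ)) - prv B (i : ℕ) = k).filter fun i : Fin n => prv B (i : ℕ) = b).card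
      = k := by
    intro b hb
    rw [hT, Finset.mem_filter] at hb
    obtain ⟨hbB, hbn, hbk⟩ := hb
    have : ((Finset.univ.filter fun i : Fin n =>
        nxt n B (prv B (i : ℕ)) - prv B (i : ℕ) = k).filter fun i : Fin n => prv B (i : ℕ) = b)
        = Finset.univ.filter fun i : Fin n => prv B (i : ℕ) = b := by
      ext i
      simp only [Finset.mem_filter, Finset.mem_univ, true_and]
      constructor
      · rintro ⟨-, h2⟩; exact h2
      · intro h2; exact ⟨by rw [h2, hbk], h2⟩
    rw [this, card_prv_fiber n B h0 hn hub hbB hbn, hbk]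
  rw [Finset.sum_congr rfl hfib, Finset.sum_const, smul_eq_mul]
  exact Nat.mul_div_cancel _ (by omega)

end Cycles

theorem count_ofFn : ∀ {m : ℕ} (f : Fin m → ℕ) (k : ℕ),
    (List.ofFn f).count k = (Finset.univ.filter fun i : Fin m => f i = k).card := by
  intro m
  induction m with
  | zero => intro f k; simp
  | succ m ih =>
    intro f k
    rw [Finset.card_filter, Fin.sum_univ_succ, List.ofFn_succ, List.count_cons,
      ← Finset.card_filter, ih]
    by_cases h : f 0 = k <;> simp [h, beq_iff_eq, add_comm]

section CAS
variable (d : CompositionAsSet n)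

def Bof : Finset ℕ := d.boundaries.image Fin.val

theorem Bof_zero : 0 ∈ Bof d := Finset.mem_image.mpr ⟨0, d.zero_mem, rfl⟩

theorem Bof_n : n ∈ Bof d := Finset.mem_image.mpr ⟨Fin.last n, d.getLast_mem, rfl⟩

theorem Bof_ub : ∀ b ∈ Bof d, b ≤ n := by
  intro b hb
  obtain ⟨x, -, rfl⟩ := Finset.mem_image.mp hb
  exact Nat.lt_succ_iff.mp x.isLt

theorem count_blocks (k : ℕ) :
    d.blocks.count k = ((Bof d).filter fun b => b < n ∧ nxt n (Bof d) b - b = k).card := by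
  set B := Bof d with hB
  set F : Fin d.boundaries.card → ℕ := fun j => (d.boundary j : ℕ) with hF
  have hSM : StrictMono F := fun a b h => d.boundary.strictMono h
  have hmemF : ∀ j, F j ∈ B := fun j =>
    Finset.mem_image.mpr ⟨d.boundary j, Finset.orderEmbOfFin_mem _ rfl j, rfl⟩
  have hsurjF : ∀ c ∈ B, ∃ j, F j = c := by
    intro c hc
    obtain ⟨x, hx, rfl⟩ := Finset.mem_image.mp hc
    have : x ∈ Set.range (d.boundaries.orderEmbOfFin rfl) := by
      rw [Finset.range_orderEmbOfFin]; exact hx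
    obtain ⟨j, hj⟩ := this
    exact ⟨j, by rw [hF]; exact congrArg Fin.val hj⟩
  have hlastF : F ⟨d.length, d.length_lt_card_boundaries⟩ = n := by
    show ((d.boundary ⟨d.length, d.length_lt_card_boundaries⟩ : Fin (n + 1)) : ℕ) = n
    rw [CompositionAsSet.boundary_length]
    simp
  have hFi_lt : ∀ i : Fin d.length, F ⟨(i : ℕ), d.lt_length' i⟩ < n := by
    intro i
    have h := hSM (show (⟨(i : ℕ), d.lt_length' i⟩ : Fin d.boundaries.card)
      < ⟨d.length, d.length_lt_card_boundaries⟩ from Fin.mk_lt_mk.mpr i.isLt)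
    rwa [hlastF] at h
  have hnxtF : ∀ i : Fin d.length,
      nxt n B (F ⟨(i : ℕ), d.lt_length' i⟩) = F ⟨(i : ℕ) + 1, d.lt_length i⟩ := by
    intro i
    obtain ⟨h1, h2, h3⟩ := nxt_spec (Bof_n d) (hFi_lt i)
    have hle := h3 _ (hmemF ⟨(i : ℕ) + 1, d.lt_length i⟩)
      (hSM (Fin.mk_lt_mk.mpr (Nat.lt_succ_self _)))
    obtain ⟨j, hj⟩ := hsurjF _ h1
    have h2' : F ⟨(i : ℕ), d.lt_length' i⟩ < F j := by rw [hj]; exact h2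
    have hij : ((i : ℕ)) < (j : ℕ) := hSM.lt_iff_lt.mp h2'
    have h4 : (⟨(i : ℕ) + 1, d.lt_length i⟩ : Fin d.boundaries.card) ≤ j :=
      Fin.mk_le_of_le_val hij
    have h5 : F ⟨(i : ℕ) + 1, d.lt_length i⟩ ≤ F j := hSM.le_iff_le.mpr h4
    apply le_antisymm hle
    rw [← hj]
    exact h5
  have hblocksFun : ∀ i : Fin d.length,
      d.blocksFun i = F ⟨(i : ℕ) + 1, d.lt_length i⟩ - F ⟨(i : ℕ), d.lt_length' i⟩ := by
    intro i; rfl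
  rw [CompositionAsSet.blocks, count_ofFn]
  refine Finset.card_bij (fun i _ => F ⟨(i : ℕ), d.lt_length' i⟩) ?_ ?_ ?_
  · intro i hi
    rw [Finset.mem_filter] at hi ⊢
    refine ⟨hmemF _, hFi_lt i, ?_⟩
    rw [hnxtF i, ← hblocksFun i]
    exact hi.2
  · intro a ha b hb hab
    have h1 := hSM.injective hab
    rw [Fin.mk.injEq] at h1
    exact Fin.ext h1
  · intro c hc
    rw [Finset.mem_filter] at hc
    obtain ⟨hcB, hcn, hck⟩ := hc
    obtain ⟨j, hj⟩ := hsurjF _ hcB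
    have hjlt : (j : ℕ) < d.length := by
      by_contra hcon
      push_neg at hcon
      have h4 : (⟨d.length, d.length_lt_card_boundaries⟩ : Fin d.boundaries.card) ≤ j :=
        Fin.mk_le_of_le_val hcon
      have h5 := hSM.le_iff_le.mpr h4
      rw [hlastF] at h5
      omega
    set i' : Fin d.length := ⟨(j : ℕ), hjlt⟩ with hi'
    have e1 : F ⟨((i' : Fin d.length) : ℕ), d.lt_length' i'⟩ = c := by
      rw [← hj]
    refine ⟨i', Finset.mem_filter.mpr ⟨Finset.mem_univ _, ?_⟩, e1⟩
    rw [hblocksFun i', ← hnxtF i', e1, hck]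

end CAS

section Structural

variable (π : Equiv.Perm (Fin n))

/-- The boundary set (in `ℕ`) associated to a permutation: `n` together with all
"starts", i.e. indices `i` with `i ≤ π i`. -/
def BofPerm : Finset ℕ :=
  insert n ((Finset.univ.filter fun i : Fin n => (i : ℕ) ≤ ((π i : Fin n) : ℕ)).image Fin.val)

theorem mem_BofPerm_iff (i : Fin n) :
    (i : ℕ) ∈ BofPerm π ↔ (i : ℕ) ≤ ((π i : Fin n) : ℕ) := by
  rw [BofPerm, Finset.mem_insert]
  constructor
  · rintro (h | h)
    · exact absurd h (Nat.ne_of_lt i.isLt)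
    · obtain ⟨x, hx, hxi⟩ := Finset.mem_image.mp h
      have : x = i := Fin.ext hxi
      subst this
      exact (Finset.mem_filter.mp hx).2
  · intro h
    exact Or.inr (Finset.mem_image.mpr ⟨i, Finset.mem_filter.mpr ⟨Finset.mem_univ _, h⟩, rfl⟩)

theorem BofPerm_zero : 0 ∈ BofPerm π := by
  rcases Nat.eq_zero_or_pos n with h | h
  · subst h; exact Finset.mem_insert_self _ _
  · have := (mem_BofPerm_iff π ⟨0, h⟩).mpr (Nat.zero_le _)
    exact this

theorem BofPerm_n : n ∈ BofPerm π := Finset.mem_insert_self _ _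

theorem BofPerm_ub : ∀ b ∈ BofPerm π, b ≤ n := by
  intro b hb
  rcases Finset.mem_insert.mp hb with h | h
  · omega
  · obtain ⟨x, -, rfl⟩ := Finset.mem_image.mp h
    exact le_of_lt x.isLt

variable (hπ : ∀ i : Fin n, (i : ℕ) ≤ ((π i : Fin n) : ℕ) + 1)
include hπ

theorem nonstart_apply {j : Fin n} (hj : ¬ (j : ℕ) ≤ ((π j : Fin n) : ℕ)) :
    ((π j : Fin n) : ℕ) = (j : ℕ) - 1 := by
  have := hπ j
  omega

/-- Key structural step: every admissible permutation is the canonical permutation of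
its boundary set. -/
theorem gPerm_BofPerm :
    gPerm n (BofPerm π) (BofPerm_zero π) (BofPerm_n π) (BofPerm_ub π) = π := by
  apply Equiv.ext
  intro i
  apply Fin.ext
  show (if (i : ℕ) ∈ BofPerm π then nxt n (BofPerm π) (i : ℕ) - 1 else (i : ℕ) - 1)
      = ((π i : Fin n) : ℕ)
  by_cases h : (i : ℕ) ∈ BofPerm π
  · rw [if_pos h]
    have hstart : (i : ℕ) ≤ ((π i : Fin n) : ℕ) := (mem_BofPerm_iff π i).mp h
    obtain ⟨htB, hti, htmin⟩ := nxt_spec (BofPerm_n π) i.isLt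
    set t := nxt n (BofPerm π) (i : ℕ) with ht
    have htn : t ≤ n := BofPerm_ub π t htB
    -- Step C : things mapping below `t` live below `t`
    have hC : ∀ j : Fin n, ((π j : Fin n) : ℕ) < t → (j : ℕ) < t := by
      intro j hjt
      by_cases hj : (j : ℕ) ≤ ((π j : Fin n) : ℕ)
      · omega
      · have hj1 : ((π j : Fin n) : ℕ) = (j : ℕ) - 1 := nonstart_apply π hπ hj
        have hj0 : (j : ℕ) ≠ 0 := by
          intro hc
          rw [hc] at hj
          exact hj (Nat.zero_le _)
        have hjle : (j : ℕ) ≤ t := by omega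
        rcases Nat.lt_or_ge (j : ℕ) t with h' | h'
        · exact h'
        · have hjt' : (j : ℕ) = t := by omega
          have : (j : ℕ) ∈ BofPerm π := by rw [hjt']; exact htB
          rw [mem_BofPerm_iff π j] at this
          exact absurd this hj
    -- Step 2 : `π` maps `[0,t)` into `[0,t)`
    have hinv : ∀ j : Fin n, (j : ℕ) < t → ((π j : Fin n) : ℕ) < t := by
      intro j hjt
      set S : Finset (Fin n) := Finset.univ.filter fun a : Fin n => (a : ℕ) < t with hS
      have hsurj := Finset.surj_on_of_inj_on_of_card_le
        (s := S) (t := S) (fun a _ => π.symm a)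
        (fun a ha => by
          show π.symm a ∈ S
          rw [hS, Finset.mem_filter] at ha ⊢
          refine ⟨Finset.mem_univ _, ?_⟩
          apply hC
          rw [Equiv.apply_symm_apply]
          exact ha.2)
        (fun a₁ a₂ h1 h2 heq => π.symm.injective heq)
        le_rfl
      obtain ⟨a, haS, hae⟩ := hsurj j (by rw [hS, Finset.mem_filter]; exact ⟨Finset.mem_univ _, hjt⟩)
      have : π j = a := by rw [hae, Equiv.apply_symm_apply]
      rw [this]
      rw [hS, Finset.mem_filter] at haS
      exact haS.2
    have hub2 : ((π i : Fin n) : ℕ) < t := hinv i hti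
    -- Step 3 : `π i ≥ t - 1`
    have hlb : t - 1 ≤ ((π i : Fin n) : ℕ) := by
      by_contra hcon
      push_neg at hcon
      set v : ℕ := ((π i : Fin n) : ℕ) + 1 with hv
      have hvt : v < t := by omega
      have hvn : v < n := by omega
      have hvi : (i : ℕ) < v := by omega
      set vF : Fin n := ⟨v, hvn⟩ with hvF
      have hvB : (v : ℕ) ∉ BofPerm π := by
        intro hc
        have := htmin v hc hvi
        omega
      have hvns : ¬ (vF : ℕ) ≤ ((π vF : Fin n) : ℕ) := fun hc =>
        hvB ((mem_BofPerm_iff π vF).mpr hc)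
      have hveq : ((π vF : Fin n) : ℕ) = v - 1 := nonstart_apply π hπ hvns
      have : π vF = π i := by
        apply Fin.ext
        rw [hveq]
        omega
      have := π.injective this
      rw [hvF] at this
      have := congrArg Fin.val this
      simp at this
      omega
    omega
  · rw [if_neg h]
    have hns : ¬ (i : ℕ) ≤ ((π i : Fin n) : ℕ) := fun hc => h ((mem_BofPerm_iff π i).mpr hc)
    exact (nonstart_apply π hπ hns).symm

end Structural

section Assemble

theorem BofPerm_gPerm (B : Finset ℕ) (h0 : 0 ∈ B) (hn : n ∈ B) (hub : ∀ b ∈ B, b ≤ n) :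
    BofPerm (gPerm n B h0 hn hub) = B := by
  ext b
  constructor
  · intro hb
    rcases Finset.mem_insert.mp hb with h | h
    · rw [h]; exact hn
    · obtain ⟨x, hx, rfl⟩ := Finset.mem_image.mp h
      have hx2 := (Finset.mem_filter.mp hx).2
      by_contra hxB
      have hx0 : (x : ℕ) ≠ 0 := fun hc => hxB (by rw [hc]; exact h0)
      have : ((gPerm n B h0 hn hub x : Fin n) : ℕ) = (x : ℕ) - 1 := by
        rw [gPerm_apply, if_neg hxB]
      omega
  · intro hb
    have hbn := hub b hb
    rcases Nat.lt_or_ge b n with h | h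
    · set bF : Fin n := ⟨b, h⟩ with hbF
      apply (mem_BofPerm_iff _ bF).mpr
      have hval : ((gPerm n B h0 hn hub bF : Fin n) : ℕ) = nxt n B b - 1 := by
        rw [gPerm_apply, if_pos hb]
      obtain ⟨-, hlt, -⟩ := nxt_spec hn (show (bF : ℕ) < n from h)
      rw [hval]
      have hbv : ((bF : Fin n) : ℕ) = b := rfl
      have hnx : nxt n B ((bF : Fin n) : ℕ) = nxt n B b := rfl
      omega
    · have : b = n := by omega
      rw [this]
      exact Finset.mem_insert_self _ _

/-- The `CompositionAsSet` associated to a permutation. -/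
def casOf (π : Equiv.Perm (Fin n)) : CompositionAsSet n where
  boundaries := Finset.univ.filter fun j : Fin (n + 1) => (j : ℕ) ∈ BofPerm π
  zero_mem := Finset.mem_filter.mpr ⟨Finset.mem_univ _, BofPerm_zero π⟩
  getLast_mem := Finset.mem_filter.mpr ⟨Finset.mem_univ _, BofPerm_n π⟩

theorem Bof_casOf (π : Equiv.Perm (Fin n)) : Bof (casOf π) = BofPerm π := by
  ext b
  rw [Bof, Finset.mem_image]
  constructor
  · rintro ⟨x, hx, rfl⟩
    exact (Finset.mem_filter.mp hx).2
  · intro hb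
    have hbn : b ≤ n := BofPerm_ub π b hb
    exact ⟨⟨b, Nat.lt_succ_of_le hbn⟩, Finset.mem_filter.mpr ⟨Finset.mem_univ _, hb⟩, rfl⟩

theorem gPerm_congr {B B' : Finset ℕ} (h : B = B') (h0 : 0 ∈ B) (hn : n ∈ B)
    (hub : ∀ b ∈ B, b ≤ n) (h0' : 0 ∈ B') (hn' : n ∈ B') (hub' : ∀ b ∈ B', b ≤ n) :
    gPerm n B h0 hn hub = gPerm n B' h0' hn' hub' := by
  subst h
  rfl

variable (n)

/-- The forward map of the bijection. -/
def Fwd (π : {π : Equiv.Perm (Fin n) // ∀ i : Fin n, (i : ℕ) ≤ (π i : ℕ) + 1}) :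
    Composition n :=
  (casOf π.1).toComposition

/-- The backward map of the bijection. -/
def Bwd (c : Composition n) :
    {π : Equiv.Perm (Fin n) // ∀ i : Fin n, (i : ℕ) ≤ (π i : ℕ) + 1} :=
  ⟨gPerm n (Bof c.toCompositionAsSet) (Bof_zero _) (Bof_n _) (Bof_ub _),
    gPerm_adm n _ (Bof_zero _) (Bof_n _) (Bof_ub _)⟩

theorem bwd_fwd (π : {π : Equiv.Perm (Fin n) // ∀ i : Fin n, (i : ℕ) ≤ (π i : ℕ) + 1}) :
    Bwd n (Fwd n π) = π := by
  apply Subtype.ext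
  show gPerm n (Bof (Fwd n π).toCompositionAsSet) _ _ _ = π.1
  have hbd : Bof (Fwd n π).toCompositionAsSet = BofPerm π.1 := by
    rw [Bof]
    rw [Composition.toCompositionAsSet_boundaries]
    rw [show (Fwd n π).boundaries = (casOf π.1).boundaries from
      CompositionAsSet.toComposition_boundaries _]
    rw [← Bof, Bof_casOf]
  rw [gPerm_congr hbd _ _ _ (BofPerm_zero π.1) (BofPerm_n π.1) (BofPerm_ub π.1)]
  exact gPerm_BofPerm π.1 π.2

theorem fwd_bwd (c : Composition n) : Fwd n (Bwd n c) = c := by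
  have hcas : casOf (Bwd n c).1 = c.toCompositionAsSet := by
    apply CompositionAsSet.ext
    show (Finset.univ.filter fun j : Fin (n + 1) => (j : ℕ) ∈ BofPerm (Bwd n c).1)
        = c.toCompositionAsSet.boundaries
    have : BofPerm (Bwd n c).1 = Bof c.toCompositionAsSet :=
      BofPerm_gPerm _ _ _ _
    rw [this]
    ext j
    rw [Finset.mem_filter, Bof, Finset.mem_image]
    constructor
    · rintro ⟨-, x, hx, hxj⟩
      have : x = j := Fin.ext hxj
      rwa [← this]
    · intro hj
      exact ⟨Finset.mem_univ _, j, hj, rfl⟩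
  ext1
  show (casOf (Bwd n c).1).toComposition.blocks = c.blocks
  rw [hcas]
  have := Composition.toCompositionAsSet_blocks c
  rw [show c.toCompositionAsSet.toComposition.blocks = c.toCompositionAsSet.blocks from rfl]
  exact this

theorem count_eq (π : {π : Equiv.Perm (Fin n) // ∀ i : Fin n, (i : ℕ) ≤ (π i : ℕ) + 1})
    (k : ℕ) (hk : 1 ≤ k) : numKCycles π.1 k = (Fwd n π).blocks.count k := by
  conv_lhs => rw [← congrArg Subtype.val (bwd_fwd n π)]
  show numKCycles (gPerm n (Bof (Fwd n π).toCompositionAsSet) _ _ _) k = _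
  rw [numKCycles_gPerm n _ (Bof_zero _) (Bof_n _) (Bof_ub _) k hk]
  rw [← count_blocks (Fwd n π).toCompositionAsSet k]
  rw [Composition.toCompositionAsSet_blocks]

end Assemble

end B2Aux


/-- There is a bijection between the set of permutations `π` of `{1,...,n}`
with `π(i) ≥ i - 1` for `i ∈ {2,...,n}` (encoded 0-based on `Fin n`) and the set of
compositions of `n`, such that for every `k ≥ 1` the number of `k`-cycles of a
permutation equals the number of parts equal to `k` of the corresponding composition. -/
theorem b2_composition_bijection (n : ℕ) :
    ∃ f : {π : Equiv.Perm (Fin n) // ∀ i : Fin n, (i : ℕ) ≤ (π i : ℕ) + 1} ≃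
          Composition n,
      ∀ (π : {π : Equiv.Perm (Fin n) // ∀ i : Fin n, (i : ℕ) ≤ (π i : ℕ) + 1})
        (k : ℕ), 1 ≤ k → numKCycles π.1 k = (f π).blocks.count k := by
  exact ⟨⟨B2Aux.Fwd n, B2Aux.Bwd n, B2Aux.bwd_fwd n, B2Aux.fwd_bwd n⟩,
    fun π k hk => B2Aux.count_eq n π k hk⟩
end

section
/- The sum over all permutations π of {1,...,n} satisfying π(i) ≥ i - 1 (for i ∈ {2,...,n}) of the number of fixed points of π equals (n+2)·2^(n-3), for n ≥ 2. Equivalently, the expected number of fixed points of a uniformly random such permutation is (n+2)/4. -/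
open Finset Equiv

private def Qp (n : ℕ) (π : Equiv.Perm (Fin n)) : Prop :=
  ∀ i : Fin n, ((π i : ℕ)) ≤ (i : ℕ) + 1

private instance (n : ℕ) : DecidablePred (Qp n) :=
  fun π => inferInstanceAs (Decidable (∀ i : Fin n, ((π i : ℕ)) ≤ (i : ℕ) + 1))

private def fixc {n : ℕ} (π : Equiv.Perm (Fin n)) : ℕ :=
  (univ.filter (fun i => π i = i)).card

private def Tn (n : ℕ) : ℕ := ∑ π ∈ univ.filter (Qp n), fixc π
private def Dn (n : ℕ) : ℕ := (univ.filter (Qp n)).card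
private def Gn (k : ℕ) : ℕ :=
  ∑ e ∈ univ.filter (Qp (k+1)), (if e 0 = 0 then 1 else 0)

private lemma succ_ne_one {k : ℕ} {x : Fin (k+1)} (hx : x ≠ 0) :
    x.succ ≠ (1 : Fin (k+2)) := by
  rw [← Fin.succ_zero_eq_one]
  exact fun hh => hx (Fin.succ_inj.mp hh)

private lemma Q_zero (k : ℕ) (e : Equiv.Perm (Fin (k+1))) :
    Qp (k+2) (Equiv.Perm.decomposeFin.symm (0, e)) ↔ Qp (k+1) e := by
  unfold Qp
  rw [Fin.forall_fin_succ]
  simp [Equiv.Perm.decomposeFin_symm_apply_zero,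
    Equiv.Perm.decomposeFin_symm_apply_succ, Equiv.swap_self, Fin.val_succ]

private lemma Q_one (k : ℕ) (e : Equiv.Perm (Fin (k+1))) :
    Qp (k+2) (Equiv.Perm.decomposeFin.symm (1, e)) ↔ Qp (k+1) e := by
  unfold Qp
  rw [Fin.forall_fin_succ]
  simp only [Equiv.Perm.decomposeFin_symm_apply_zero,
    Equiv.Perm.decomposeFin_symm_apply_succ, Fin.val_succ]
  have key : ∀ i : Fin (k+1),
      (((swap (0 : Fin (k+2)) 1) ((e i).succ) : Fin (k+2)) : ℕ) ≤ (i : ℕ) + 1 + 1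
        ↔ (e i : ℕ) ≤ (i : ℕ) + 1 := by
    intro i
    rcases eq_or_ne (e i) 0 with h0 | h0
    · rw [h0, Fin.succ_zero_eq_one, swap_apply_right]
      simp [h0]
    · rw [swap_apply_of_ne_of_ne (Fin.succ_ne_zero _) (succ_ne_one h0), Fin.val_succ]
      omega
  constructor
  · rintro ⟨-, h⟩ i
    exact (key i).mp (h i)
  · intro h
    exact ⟨by simp, fun i => (key i).mpr (h i)⟩

private lemma fix_zero (k : ℕ) (e : Equiv.Perm (Fin (k+1))) :
    fixc (Equiv.Perm.decomposeFin.symm ((0 : Fin (k+2)), e)) = fixc e + 1 := by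
  unfold fixc
  rw [Finset.card_filter, Finset.card_filter, Fin.sum_univ_succ]
  simp [Equiv.Perm.decomposeFin_symm_apply_zero,
    Equiv.Perm.decomposeFin_symm_apply_succ, Equiv.swap_self, Fin.succ_inj, add_comm]

private lemma fix_one (k : ℕ) (e : Equiv.Perm (Fin (k+1))) :
    fixc (Equiv.Perm.decomposeFin.symm ((1 : Fin (k+2)), e))
      + (if e 0 = 0 then 1 else 0) = fixc e := by
  unfold fixc
  rw [Finset.card_filter, Finset.card_filter, Fin.sum_univ_succ]
  have h0 : ¬ (Equiv.Perm.decomposeFin.symm ((1 : Fin (k+2)), e)) 0 = 0 := by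
    rw [Equiv.Perm.decomposeFin_symm_apply_zero]; exact one_ne_zero
  rw [if_neg h0, zero_add]
  have key : ∀ i : Fin (k+1),
      (if Equiv.Perm.decomposeFin.symm ((1 : Fin (k+2)), e) i.succ = i.succ then 1 else 0)
        + (if 0 = i then (if e i = i then 1 else 0) else 0)
      = (if e i = i then 1 else 0) := by
    intro i
    rw [Equiv.Perm.decomposeFin_symm_apply_succ]
    rcases eq_or_ne (e i) 0 with h | h
    · rw [h, Fin.succ_zero_eq_one, swap_apply_right,
        if_neg (Fin.succ_ne_zero i).symm]
      rcases eq_or_ne i 0 with rfl | hi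
      · simp [h]
      · simp [Ne.symm hi]
    · rw [swap_apply_of_ne_of_ne (Fin.succ_ne_zero _) (succ_ne_one h)]
      simp only [Fin.succ_inj]
      rcases eq_or_ne i 0 with rfl | hi
      · simp [h]
      · simp [Ne.symm hi]
  have hsum : (if e 0 = 0 then 1 else 0)
      = ∑ i : Fin (k+1), (if 0 = i then (if e i = i then 1 else 0) else 0) := by
    rw [Finset.sum_ite_eq]
    simp
  rw [hsum, ← Finset.sum_add_distrib]
  exact Finset.sum_congr rfl (fun i _ => key i)

private lemma sum_decompose (k : ℕ) (f : Equiv.Perm (Fin (k+2)) → ℕ) :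
    ∑ π ∈ univ.filter (Qp (k+2)), f π
      = (∑ e ∈ univ.filter (Qp (k+1)), f (Equiv.Perm.decomposeFin.symm (0, e)))
      + ∑ e ∈ univ.filter (Qp (k+1)), f (Equiv.Perm.decomposeFin.symm (1, e)) := by
  rw [Finset.sum_filter, Finset.sum_filter, Finset.sum_filter,
    ← Equiv.sum_comp (Equiv.Perm.decomposeFin (n := k+1)).symm
      (fun π => if Qp (k+2) π then f π else 0),
    Fintype.sum_prod_type, Fin.sum_univ_succ, Fin.sum_univ_succ]
  have hz : ∀ p : Fin k, ∀ e : Equiv.Perm (Fin (k+1)),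
      ¬ Qp (k+2) (Equiv.Perm.decomposeFin.symm (p.succ.succ, e)) := by
    intro p e hq
    have := hq 0
    rw [Equiv.Perm.decomposeFin_symm_apply_zero] at this
    simp [Fin.val_succ] at this
  have h3 : ∑ p : Fin k, ∑ e : Equiv.Perm (Fin (k+1)),
      (if Qp (k+2) (Equiv.Perm.decomposeFin.symm ((p.succ.succ : Fin (k+2)), e))
        then f (Equiv.Perm.decomposeFin.symm (p.succ.succ, e)) else 0) = 0 := by
    apply Finset.sum_eq_zero
    intro p _
    apply Finset.sum_eq_zero
    intro e _
    rw [if_neg (hz p e)]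
  rw [Fin.succ_zero_eq_one, h3, add_zero]
  congr 1
  · apply Finset.sum_congr rfl
    intro e _
    rw [if_congr (Q_zero k e) rfl rfl]
  · apply Finset.sum_congr rfl
    intro e _
    rw [if_congr (Q_one k e) rfl rfl]

private lemma Dn_sum (n : ℕ) : Dn n = ∑ π ∈ univ.filter (Qp n), 1 := by
  rw [Dn, Finset.card_eq_sum_ones]

private lemma Dn_rec (k : ℕ) : Dn (k+2) = 2 * Dn (k+1) := by
  rw [Dn_sum, sum_decompose k (fun _ => 1), ← Dn_sum]
  ring

private lemma Gn_rec (k : ℕ) : Gn (k+1) = Dn (k+1) := by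
  rw [Gn, sum_decompose k (fun π => if π 0 = 0 then 1 else 0)]
  have h0 : ∀ e : Equiv.Perm (Fin (k+1)),
      (if Equiv.Perm.decomposeFin.symm ((0 : Fin (k+2)), e) 0 = 0 then 1 else 0) = 1 := by
    intro e; rw [if_pos]; rw [Equiv.Perm.decomposeFin_symm_apply_zero]
  have h1 : ∀ e : Equiv.Perm (Fin (k+1)),
      (if Equiv.Perm.decomposeFin.symm ((1 : Fin (k+2)), e) 0 = 0 then 1 else 0) = 0 := by
    intro e; rw [if_neg]
    rw [Equiv.Perm.decomposeFin_symm_apply_zero]; exact one_ne_zero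
  rw [Finset.sum_congr rfl (fun e _ => h0 e), Finset.sum_congr rfl (fun e _ => h1 e),
    Finset.sum_const_zero, add_zero, ← Finset.card_eq_sum_ones, Dn]

private lemma Tn_rec (k : ℕ) : Tn (k+2) + Gn k = 2 * Tn (k+1) + Dn (k+1) := by
  rw [Tn, sum_decompose k fixc]
  have h0 : ∑ e ∈ univ.filter (Qp (k+1)), fixc (Equiv.Perm.decomposeFin.symm (0, e))
      = Tn (k+1) + Dn (k+1) := by
    rw [Finset.sum_congr rfl (fun e _ => fix_zero k e), Finset.sum_add_distrib,
      ← Dn_sum, Tn]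
  have h1 : (∑ e ∈ univ.filter (Qp (k+1)), fixc (Equiv.Perm.decomposeFin.symm (1, e)))
      + Gn k = Tn (k+1) := by
    rw [Gn, ← Finset.sum_add_distrib, Tn]
    exact Finset.sum_congr rfl (fun e _ => fix_one k e)
  omega

private lemma Dn_one : Dn 1 = 1 := by decide
private lemma Gn_zero : Gn 0 = 1 := by decide
private lemma Tn_two : Tn 2 = 2 := by decide

private lemma Dn_pow (k : ℕ) : Dn (k+1) = 2 ^ k := by
  induction k with
  | zero => exact Dn_one
  | succ m ih => rw [Dn_rec, ih, pow_succ]; ring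

private lemma Gn_pow (k : ℕ) : Gn (k+1) = 2 ^ k := by
  rw [Gn_rec, Dn_pow]

private lemma Tn_closed (m : ℕ) : 8 * Tn (m+2) = (m+4) * 2 ^ (m+2) := by
  induction m with
  | zero => rw [Tn_two]; norm_num
  | succ m ih =>
    have E0 := Tn_rec (m+1)
    rw [Gn_pow, Dn_pow] at E0
    have E : Tn (m+3) + 2 ^ m = 2 * Tn (m+2) + 2 ^ (m+1) := E0
    have A : 8 * Tn (m+3) + 8 * 2 ^ m = 8 * (2 * Tn (m+2)) + 8 * 2 ^ (m+1) := by omega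
    rw [show (8 : ℕ) * (2 * Tn (m+2)) = 2 * (8 * Tn (m+2)) by ring, ih] at A
    have goal : 8 * Tn (m+3) = (m+5) * 2 ^ (m+3) := by
      zify at A ⊢
      simp only [pow_succ] at A ⊢
      linear_combination A
    exact goal

private lemma sum_rev (n : ℕ) :
    ∑ π ∈ Finset.univ.filter (fun π : Equiv.Perm (Fin n) =>
        ∀ i : Fin n, (i : ℕ) ≤ (π i : ℕ) + 1),
      (Finset.univ.filter (fun i : Fin n => π i = i)).card = Tn n := by
  rw [Tn, Finset.sum_filter, Finset.sum_filter,
    ← Equiv.sum_comp (Equiv.permCongr Fin.revPerm) (fun π => if Qp n π then fixc π else 0)]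
  apply Finset.sum_congr rfl
  intro π _hmem
  have happ : ∀ x : Fin n, (Equiv.permCongr Fin.revPerm π) x = Fin.rev (π (Fin.rev x)) := by
    intro x
    rfl
  have hval : ∀ a b : Fin n, ((Fin.rev a : Fin n) : ℕ) ≤ ((Fin.rev b : Fin n) : ℕ) + 1
      ↔ (b : ℕ) ≤ (a : ℕ) + 1 := by
    intro a b
    rw [Fin.val_rev, Fin.val_rev]
    have := a.isLt; have := b.isLt
    omega
  have hQ : Qp n (Equiv.permCongr Fin.revPerm π)
      ↔ ∀ i : Fin n, (i : ℕ) ≤ (π i : ℕ) + 1 := by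
    constructor
    · intro h j
      have := h (Fin.rev j)
      rw [happ, Fin.rev_rev] at this
      exact (hval _ _).mp this
    · intro h i
      rw [happ]
      have h2 := (hval (π (Fin.rev i)) (Fin.rev i)).mpr (h (Fin.rev i))
      rwa [Fin.rev_rev] at h2
  have hF : fixc (Equiv.permCongr Fin.revPerm π) = fixc π := by
    unfold fixc
    have himg : univ.filter (fun i => (Equiv.permCongr Fin.revPerm π) i = i)
        = (univ.filter (fun i => π i = i)).image Fin.rev := by
      ext j
      simp only [Finset.mem_filter, Finset.mem_image, Finset.mem_univ, true_and]
      constructor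
      · intro hj
        refine ⟨Fin.rev j, ?_, Fin.rev_rev j⟩
        rw [happ] at hj
        have := congrArg Fin.rev hj
        rwa [Fin.rev_rev] at this
      · rintro ⟨i, hi, rfl⟩
        rw [happ, Fin.rev_rev, hi]
    rw [himg, Finset.card_image_of_injective _ Fin.rev_injective]
  rw [hF, if_congr hQ rfl rfl]
  rfl

/-- For `n ≥ 2`, the sum over all permutations `π` of `{1,...,n}` with
`π(i) ≥ i - 1` for `i ∈ {2,...,n}` (encoded 0-based on `Fin n`) of the number of
fixed points of `π` equals `(n+2)·2^(n-3)`; to avoid truncated subtraction in the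
exponent this is stated in the equivalent form `8·S = (n+2)·2^n`. -/
theorem b2_fixed_point_sum (n : ℕ) (hn : 2 ≤ n) :
    8 * ∑ π ∈ Finset.univ.filter (fun π : Equiv.Perm (Fin n) =>
          ∀ i : Fin n, (i : ℕ) ≤ (π i : ℕ) + 1),
        (Finset.univ.filter (fun i : Fin n => π i = i)).card
      = (n + 2) * 2 ^ n := by
  obtain ⟨m, rfl⟩ : ∃ m, n = m + 2 := ⟨n - 2, by omega⟩
  rw [sum_rev, show m + 2 + 2 = m + 4 from by omega]
  exact Tn_closed m
end

section
/- For 1 ≤ k ≤ n with 2k ≤ n, the sum over all permutations π of {1,...,n} satisfying π(i) ≥ i - 1 (for i ∈ {2,...,n}) of C(π)·(C(π)-1), where C(π) is the number of k-cycles of π, equals (n+2-2k)(n+7-2k)·2^(n-2k-3). -/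
namespace B2aux

open Equiv Finset

variable {n a k : ℕ}

def phiFun (ha : a < n) (p : Equiv.Perm (Fin a)) (i : Fin n) : Fin n :=
  if h : (i : ℕ) < a then ⟨(p ⟨(i : ℕ), h⟩ : ℕ), lt_trans (p ⟨(i : ℕ), h⟩).2 ha⟩
  else if (i : ℕ) = a then ⟨n - 1, by omega⟩
  else ⟨(i : ℕ) - 1, by have := i.2; omega⟩

theorem phiFun_low (ha : a < n) (p : Equiv.Perm (Fin a)) {i : Fin n} (h : (i : ℕ) < a) :
    (phiFun ha p i : ℕ) = (p ⟨(i : ℕ), h⟩ : ℕ) := by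
  simp only [phiFun, dif_pos h]

theorem phiFun_mid (ha : a < n) (p : Equiv.Perm (Fin a)) {i : Fin n} (h : (i : ℕ) = a) :
    (phiFun ha p i : ℕ) = n - 1 := by
  simp only [phiFun]
  rw [dif_neg (by omega), if_pos h]

theorem phiFun_high (ha : a < n) (p : Equiv.Perm (Fin a)) {i : Fin n} (h : a < (i : ℕ)) :
    (phiFun ha p i : ℕ) = (i : ℕ) - 1 := by
  simp only [phiFun]
  rw [dif_neg (by omega), if_neg (by omega)]

theorem phiFun_inj (ha : a < n) (p : Equiv.Perm (Fin a)) :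
    Function.Injective (phiFun ha p) := by
  intro i j hij
  have hv : (phiFun ha p i : ℕ) = (phiFun ha p j : ℕ) := congrArg Fin.val hij
  have hi2 := i.2; have hj2 := j.2
  rcases lt_trichotomy (i : ℕ) a with h1 | h1 | h1 <;>
    rcases lt_trichotomy (j : ℕ) a with h2 | h2 | h2
  · rw [phiFun_low ha p h1, phiFun_low ha p h2] at hv
    have h3 : p ⟨(i : ℕ), h1⟩ = p ⟨(j : ℕ), h2⟩ := Fin.ext hv
    have h4 := p.injective h3
    have h5 := congrArg Fin.val h4
    exact Fin.ext h5
  · rw [phiFun_low ha p h1, phiFun_mid ha p h2] at hv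
    have := (p ⟨(i : ℕ), h1⟩).2; omega
  · rw [phiFun_low ha p h1, phiFun_high ha p h2] at hv
    have := (p ⟨(i : ℕ), h1⟩).2; omega
  · rw [phiFun_mid ha p h1, phiFun_low ha p h2] at hv
    have := (p ⟨(j : ℕ), h2⟩).2; omega
  · exact Fin.ext (by omega)
  · rw [phiFun_mid ha p h1, phiFun_high ha p h2] at hv; omega
  · rw [phiFun_high ha p h1, phiFun_low ha p h2] at hv
    have := (p ⟨(j : ℕ), h2⟩).2; omega
  · rw [phiFun_high ha p h1, phiFun_mid ha p h2] at hv; omega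
  · rw [phiFun_high ha p h1, phiFun_high ha p h2] at hv
    exact Fin.ext (by omega)

noncomputable def phi (ha : a < n) (p : Equiv.Perm (Fin a)) : Equiv.Perm (Fin n) :=
  Equiv.ofBijective (phiFun ha p) (Finite.injective_iff_bijective.mp (phiFun_inj ha p))

theorem phi_apply (ha : a < n) (p : Equiv.Perm (Fin a)) (i : Fin n) :
    phi ha p i = phiFun ha p i := rfl

theorem phi_castLE (ha : a < n) (p : Equiv.Perm (Fin a)) (x : Fin a) :
    phi ha p (Fin.castLE ha.le x) = Fin.castLE ha.le (p x) := by
  apply Fin.ext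
  have hx : ((Fin.castLE ha.le x : Fin n) : ℕ) < a := by simp [x.2]
  rw [phi_apply, phiFun_low ha p hx]
  have : (⟨((Fin.castLE ha.le x : Fin n) : ℕ), hx⟩ : Fin a) = x := Fin.ext (by simp)
  rw [this]
  simp

theorem phi_pow_low (ha : a < n) (p : Equiv.Perm (Fin a)) (m : ℕ) (x : Fin a) :
    ((phi ha p) ^ m) (Fin.castLE ha.le x) = Fin.castLE ha.le ((p ^ m) x) := by
  induction m with
  | zero => simp
  | succ m ih =>
      rw [pow_succ', pow_succ', Equiv.Perm.mul_apply, Equiv.Perm.mul_apply, ih, phi_castLE]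

theorem phi_pow_top_val (ha : a < n) (p : Equiv.Perm (Fin a)) (h1 : n - 1 < n) (t : ℕ)
    (ht : t + a ≤ n - 1) :
    ((((phi ha p) ^ t) ⟨n - 1, h1⟩ : Fin n) : ℕ) = n - 1 - t := by
  induction t with
  | zero => simp
  | succ t ih =>
      have hv := ih (by omega)
      rw [pow_succ', Equiv.Perm.mul_apply, phi_apply, phiFun_high ha p (by omega)]
      omega


theorem sc_top (ha : a < n) (p : Equiv.Perm (Fin a)) (h1 : n - 1 < n) (x : Fin n)
    (hx : a ≤ (x : ℕ)) : (phi ha p).SameCycle ⟨n - 1, h1⟩ x := by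
  refine ⟨((n - 1 - (x : ℕ) : ℕ) : ℤ), ?_⟩
  rw [zpow_natCast]
  apply Fin.ext
  rw [phi_pow_top_val ha p h1 _ (by have := x.2; omega)]
  have := x.2; omega

theorem sc_high (ha : a < n) (p : Equiv.Perm (Fin a)) {x y : Fin n}
    (hx : a ≤ (x : ℕ)) (hy : a ≤ (y : ℕ)) : (phi ha p).SameCycle x y :=
  (sc_top ha p (by omega) x hx).symm.trans (sc_top ha p (by omega) y hy)

theorem low_closed (ha : a < n) (p : Equiv.Perm (Fin a)) (m : ℕ) {x : Fin n}
    (hx : (x : ℕ) < a) : ((((phi ha p) ^ m) x : Fin n) : ℕ) < a := by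
  have hx' : x = Fin.castLE ha.le ⟨(x : ℕ), hx⟩ := Fin.ext (by simp)
  rw [hx', phi_pow_low]
  simp [((p ^ m) ⟨(x : ℕ), hx⟩).2]

theorem sc_low_mem (ha : a < n) (p : Equiv.Perm (Fin a)) {x y : Fin n}
    (h : (phi ha p).SameCycle x y) (hx : (x : ℕ) < a) : (y : ℕ) < a := by
  obtain ⟨m, -, hm⟩ := h.exists_pow_eq'
  rw [← hm]
  exact low_closed ha p m hx

theorem sc_low_iff (ha : a < n) (p : Equiv.Perm (Fin a)) (x y : Fin a) :
    (phi ha p).SameCycle (Fin.castLE ha.le x) (Fin.castLE ha.le y) ↔ p.SameCycle x y := by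
  constructor
  · intro h
    obtain ⟨m, -, hm⟩ := h.exists_pow_eq'
    rw [phi_pow_low] at hm
    have : (p ^ m) x = y := by
      apply Fin.ext
      have := congrArg Fin.val hm
      simpa using this
    exact ⟨(m : ℤ), by rw [zpow_natCast]; exact this⟩
  · intro h
    obtain ⟨m, -, hm⟩ := h.exists_pow_eq'
    exact ⟨(m : ℤ), by rw [zpow_natCast, phi_pow_low, hm]⟩

theorem orb_low_eq (ha : a < n) (p : Equiv.Perm (Fin a)) (x : Fin a) :
    (Finset.univ.filter (fun j : Fin n => (phi ha p).SameCycle (Fin.castLE ha.le x) j))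
      = (Finset.univ.filter (fun j : Fin a => p.SameCycle x j)).image (Fin.castLE ha.le) := by
  ext j
  simp only [mem_filter, mem_univ, true_and, mem_image]
  constructor
  · intro hsc
    have hj : (j : ℕ) < a := sc_low_mem ha p hsc (by simp [x.2])
    refine ⟨⟨(j : ℕ), hj⟩, ?_, Fin.ext (by simp)⟩
    have hj' : j = Fin.castLE ha.le ⟨(j : ℕ), hj⟩ := Fin.ext (by simp)
    rw [hj'] at hsc
    exact (sc_low_iff ha p x _).mp hsc
  · rintro ⟨y, hy, rfl⟩
    exact (sc_low_iff ha p x y).mpr hy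

theorem orb_high_eq (ha : a < n) (p : Equiv.Perm (Fin a)) (x : Fin n) (hx : a ≤ (x : ℕ)) :
    (Finset.univ.filter (fun j : Fin n => (phi ha p).SameCycle x j))
      = Finset.univ.filter (fun j : Fin n => a ≤ (j : ℕ)) := by
  ext j
  simp only [mem_filter, mem_univ, true_and]
  constructor
  · intro hsc
    by_contra hj
    exact absurd (sc_low_mem ha p hsc.symm (by omega)) (by omega)
  · intro hj
    exact sc_high ha p hx hj

theorem card_high (ha : a < n) :
    (Finset.univ.filter (fun j : Fin n => a ≤ (j : ℕ))).card = n - a := by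
  have he : (Finset.univ.filter (fun j : Fin n => a ≤ (j : ℕ)))
      = Finset.map ⟨fun t : Fin (n - a) => (⟨a + (t : ℕ), by have := t.2; omega⟩ : Fin n),
          fun s t hst => by
            have h := congrArg Fin.val hst
            dsimp only at h
            exact Fin.ext (by omega)⟩ Finset.univ := by
    ext j
    simp only [mem_filter, mem_univ, true_and, Finset.mem_map, Function.Embedding.coeFn_mk]
    constructor
    · intro hj
      have hj2 := j.2
      exact ⟨⟨(j : ℕ) - a, by omega⟩, Fin.ext (by show a + ((j : ℕ) - a) = j; omega)⟩
    · rintro ⟨t, -, rfl⟩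
      show a ≤ a + (t : ℕ)
      omega
  rw [he, Finset.card_map, Finset.card_univ, Fintype.card_fin]


theorem filter_card_phi (ha : a < n) (p : Equiv.Perm (Fin a)) :
    (Finset.univ.filter (fun i : Fin n =>
        (Finset.univ.filter (fun j : Fin n => (phi ha p).SameCycle i j)).card = k)).card
      = (Finset.univ.filter (fun i : Fin a =>
          (Finset.univ.filter (fun j : Fin a => p.SameCycle i j)).card = k)).card
        + (if n - a = k then n - a else 0) := by
  classical
  set S := Finset.univ.filter (fun i : Fin n =>
      (Finset.univ.filter (fun j : Fin n => (phi ha p).SameCycle i j)).card = k) with hS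
  set S' := Finset.univ.filter (fun i : Fin a =>
      (Finset.univ.filter (fun j : Fin a => p.SameCycle i j)).card = k) with hS'
  have h1 : S.filter (fun i : Fin n => (i : ℕ) < a) = S'.image (Fin.castLE ha.le) := by
    ext j
    simp only [hS, hS', Finset.mem_filter, mem_univ, true_and, Finset.mem_image]
    constructor
    · rintro ⟨hcard, hja⟩
      refine ⟨⟨(j : ℕ), hja⟩, ?_, Fin.ext (by simp)⟩
      have hj' : j = Fin.castLE ha.le ⟨(j : ℕ), hja⟩ := Fin.ext (by simp)
      rw [hj', orb_low_eq ha p,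
        Finset.card_image_of_injective _ (Fin.castLE_injective ha.le)] at hcard
      exact hcard
    · rintro ⟨y, hy, rfl⟩
      refine ⟨?_, by simp [y.2]⟩
      rw [orb_low_eq ha p, Finset.card_image_of_injective _ (Fin.castLE_injective ha.le)]
      exact hy
  have h2 : S.filter (fun i : Fin n => ¬ (i : ℕ) < a)
      = if n - a = k then Finset.univ.filter (fun j : Fin n => a ≤ (j : ℕ)) else ∅ := by
    split_ifs with h
    · ext j
      simp only [hS, Finset.mem_filter, mem_univ, true_and, not_lt]
      constructor
      · rintro ⟨-, hj⟩; exact hj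
      · intro hj
        refine ⟨?_, hj⟩
        rw [orb_high_eq ha p j hj, card_high ha, h]
    · ext j
      simp only [hS, Finset.mem_filter, mem_univ, true_and, not_lt, Finset.notMem_empty,
        iff_false, not_and]
      intro hcard hj
      rw [orb_high_eq ha p j hj, card_high ha] at hcard
      exact h hcard
  have hsplit := Finset.card_filter_add_card_filter_not
    (s := S) (fun i : Fin n => (i : ℕ) < a)
  rw [h1, h2] at hsplit
  rw [Finset.card_image_of_injective _ (Fin.castLE_injective ha.le)] at hsplit
  rw [← hsplit]
  congr 1
  split_ifs with h
  · exact card_high ha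
  · simp

theorem numK_phi (ha : a < n) (p : Equiv.Perm (Fin a)) (hk : 0 < k) :
    numKCycles (phi ha p) k = numKCycles p k + (if n - a = k then 1 else 0) := by
  unfold numKCycles
  rw [filter_card_phi ha p]
  split_ifs with h
  · rw [h, Nat.add_div_right _ hk]
  · simp


def B2set (n : ℕ) : Finset (Equiv.Perm (Fin n)) :=
  Finset.univ.filter (fun π : Equiv.Perm (Fin n) => ∀ i : Fin n, (i : ℕ) ≤ (π i : ℕ) + 1)

theorem mem_B2set {m : ℕ} {π : Equiv.Perm (Fin m)} :
    π ∈ B2set m ↔ ∀ i : Fin m, (i : ℕ) ≤ (π i : ℕ) + 1 := by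
  simp [B2set]

theorem phi_mem_B2 (ha : a < n) (p : Equiv.Perm (Fin a)) (hp : p ∈ B2set a) :
    phi ha p ∈ B2set n := by
  rw [mem_B2set] at hp ⊢
  intro i
  rcases lt_trichotomy (i : ℕ) a with h | h | h
  · rw [phi_apply, phiFun_low ha p h]
    exact hp ⟨(i : ℕ), h⟩
  · rw [phi_apply, phiFun_mid ha p h]
    omega
  · rw [phi_apply, phiFun_high ha p h]
    omega

section Inverse

variable (π : Equiv.Perm (Fin n))

def Pprop (b : ℕ) : Prop := ∀ i : Fin n, b < (i : ℕ) → ((π i : ℕ) = (i : ℕ) - 1)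

instance : DecidablePred (Pprop π) := fun _ => by unfold Pprop; infer_instance

theorem Pexists : ∃ b, Pprop π b :=
  ⟨n - 1, fun i hi => absurd i.2 (by omega)⟩

noncomputable def lowA : ℕ := Nat.find (Pexists π)

theorem lowA_lt (hn : 0 < n) : lowA π < n := by
  have h : lowA π ≤ n - 1 :=
    Nat.find_min' (Pexists π) (m := n - 1) (fun i hi => absurd i.2 (by omega))
  omega

theorem lowA_spec : Pprop π (lowA π) := Nat.find_spec _

theorem lowA_min {b : ℕ} (h : b < lowA π) : ¬ Pprop π b := Nat.find_min _ h

theorem apply_lowA (hn : 0 < n) (hb : ∀ i : Fin n, (i : ℕ) ≤ (π i : ℕ) + 1) :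
    (π ⟨lowA π, lowA_lt π hn⟩ : ℕ) = n - 1 := by
  have hv : (π ⟨lowA π, lowA_lt π hn⟩ : ℕ) < n := (π _).2
  by_contra hne
  have hvb : (lowA π) ≤ (π ⟨lowA π, lowA_lt π hn⟩ : ℕ) + 1 := by
    have := hb ⟨lowA π, lowA_lt π hn⟩
    simpa using this
  rcases lt_or_ge (π ⟨lowA π, lowA_lt π hn⟩ : ℕ) (lowA π) with h | h
  · have hva : (π ⟨lowA π, lowA_lt π hn⟩ : ℕ) = lowA π - 1 := by omega
    have ha1 : 0 < lowA π := by omega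
    refine lowA_min π (b := lowA π - 1) (by omega) ?_
    intro i hi
    rcases Nat.lt_or_ge (lowA π) (i : ℕ) with h2 | h2
    · exact lowA_spec π i h2
    · have hie : i = ⟨lowA π, lowA_lt π hn⟩ := Fin.ext (by simp; omega)
      rw [hie, hva]
  · have hjlt : (π ⟨lowA π, lowA_lt π hn⟩ : ℕ) + 1 < n := by omega
    have hja : lowA π < ((⟨(π ⟨lowA π, lowA_lt π hn⟩ : ℕ) + 1, hjlt⟩ : Fin n) : ℕ) := by
      simp; omega
    have hs := lowA_spec π ⟨(π ⟨lowA π, lowA_lt π hn⟩ : ℕ) + 1, hjlt⟩ hja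
    have hs' : (π ⟨(π ⟨lowA π, lowA_lt π hn⟩ : ℕ) + 1, hjlt⟩ : ℕ)
        = (π ⟨lowA π, lowA_lt π hn⟩ : ℕ) := by simpa using hs
    have hji := π.injective (Fin.ext hs')
    have := congrArg Fin.val hji
    simp at this
    omega

theorem apply_low (hn : 0 < n) (hb : ∀ i : Fin n, (i : ℕ) ≤ (π i : ℕ) + 1)
    {i : Fin n} (hi : (i : ℕ) < lowA π) : (π i : ℕ) < lowA π := by
  by_contra hge
  push_neg at hge
  rcases Nat.lt_or_ge (π i : ℕ) (n - 1) with h | h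
  · have hjlt : (π i : ℕ) + 1 < n := by omega
    have hja : lowA π < ((⟨(π i : ℕ) + 1, hjlt⟩ : Fin n) : ℕ) := by simp; omega
    have hs := lowA_spec π ⟨(π i : ℕ) + 1, hjlt⟩ hja
    have hs' : (π ⟨(π i : ℕ) + 1, hjlt⟩ : ℕ) = (π i : ℕ) := by simpa using hs
    have hji := π.injective (Fin.ext hs')
    have := congrArg Fin.val hji
    simp at this
    omega
  · have hvn : (π i : ℕ) = n - 1 := by have := (π i).2; omega
    have hie : π i = π ⟨lowA π, lowA_lt π hn⟩ :=
      Fin.ext (by rw [hvn, apply_lowA π hn hb])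
    have := congrArg Fin.val (π.injective hie)
    simp at this
    omega

noncomputable def res (hn : 0 < n) (hb : ∀ i : Fin n, (i : ℕ) ≤ (π i : ℕ) + 1) :
    Equiv.Perm (Fin (lowA π)) :=
  Equiv.ofBijective
    (fun x : Fin (lowA π) =>
      (⟨(π (Fin.castLE (lowA_lt π hn).le x) : ℕ),
        apply_low π hn hb (by simp [x.2])⟩ : Fin (lowA π)))
    (Finite.injective_iff_bijective.mp (by
      intro x y hxy
      have h1 := congrArg Fin.val hxy
      dsimp only at h1
      have h2 : π (Fin.castLE (lowA_lt π hn).le x) = π (Fin.castLE (lowA_lt π hn).le y) :=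
        Fin.ext h1
      have h3 := π.injective h2
      have h4 := congrArg Fin.val h3
      simp at h4
      exact Fin.ext h4))

theorem res_apply (hn : 0 < n) (hb : ∀ i : Fin n, (i : ℕ) ≤ (π i : ℕ) + 1)
    (x : Fin (lowA π)) :
    (res π hn hb x : ℕ) = (π (Fin.castLE (lowA_lt π hn).le x) : ℕ) := rfl

theorem res_mem_B2 (hn : 0 < n) (hb : ∀ i : Fin n, (i : ℕ) ≤ (π i : ℕ) + 1) :
    res π hn hb ∈ B2set (lowA π) := by
  rw [mem_B2set]
  intro i
  rw [res_apply]
  have := hb (Fin.castLE (lowA_lt π hn).le i)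
  simpa using this

theorem phi_res (hn : 0 < n) (hb : ∀ i : Fin n, (i : ℕ) ≤ (π i : ℕ) + 1) :
    phi (lowA_lt π hn) (res π hn hb) = π := by
  apply Equiv.ext
  intro i
  apply Fin.ext
  rcases lt_trichotomy (i : ℕ) (lowA π) with h | h | h
  · rw [phi_apply, phiFun_low _ _ h, res_apply]
    have hce : Fin.castLE (lowA_lt π hn).le ⟨(i : ℕ), h⟩ = i := Fin.ext (by simp)
    rw [hce]
  · rw [phi_apply, phiFun_mid _ _ h]
    have hie : i = ⟨lowA π, lowA_lt π hn⟩ := Fin.ext (by simpa using h)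
    rw [hie, apply_lowA π hn hb]
  · rw [phi_apply, phiFun_high _ _ h]
    exact (lowA_spec π i h).symm

end Inverse

theorem phi_inj {a1 a2 : ℕ} (h1 : a1 < n) (h2 : a2 < n)
    (p1 : Equiv.Perm (Fin a1)) (p2 : Equiv.Perm (Fin a2))
    (he : phi h1 p1 = phi h2 p2) :
    (⟨a1, p1⟩ : (b : ℕ) × Equiv.Perm (Fin b)) = ⟨a2, p2⟩ := by
  have key : ∀ {b1 b2 : ℕ} (g1 : b1 < n) (g2 : b2 < n) (q1 : Equiv.Perm (Fin b1))
      (q2 : Equiv.Perm (Fin b2)), phi g1 q1 = phi g2 q2 → b1 < b2 → False := by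
    intro b1 b2 g1 g2 q1 q2 hee hlt
    have hv : ((phi g1 q1 ⟨b2, g2⟩ : Fin n) : ℕ) = ((phi g2 q2 ⟨b2, g2⟩ : Fin n) : ℕ) := by
      rw [hee]
    rw [phi_apply, phi_apply, phiFun_high g1 q1 (by simpa using hlt),
      phiFun_mid g2 q2 (by simp)] at hv
    simp at hv
    omega
  have haa : a1 = a2 := by
    rcases lt_trichotomy a1 a2 with h | h | h
    · exact absurd (key h1 h2 p1 p2 he h) (fun f => f)
    · exact h
    · exact absurd (key h2 h1 p2 p1 he.symm h) (fun f => f)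
  subst haa
  have hpp : p1 = p2 := by
    apply Equiv.ext
    intro x
    have hx : phi h1 p1 (Fin.castLE h1.le x) = phi h2 p2 (Fin.castLE h2.le x) := by rw [he]
    rw [phi_castLE h1 p1 x, phi_castLE h2 p2 x] at hx
    exact Fin.castLE_injective h1.le hx
  rw [hpp]


theorem rec_sum (hk : 0 < k) (hn : 0 < n) (F : ℕ → ℕ) :
    ∑ π ∈ B2set n, F (numKCycles π k)
      = ∑ x ∈ (Finset.range n).sigma (fun b => B2set b),
          F (numKCycles x.2 k + if n - x.1 = k then 1 else 0) := by
  refine (Finset.sum_bij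
    (i := fun (x : (b : ℕ) × Equiv.Perm (Fin b)) (hx : x ∈ (Finset.range n).sigma (fun b => B2set b)) =>
      phi (Finset.mem_range.mp (Finset.mem_sigma.mp hx).1) x.2)
    ?_ ?_ ?_ ?_).symm
  · intro x hx
    exact phi_mem_B2 _ _ (Finset.mem_sigma.mp hx).2
  · intro x1 hx1 x2 hx2 he
    rcases x1 with ⟨a1, p1⟩
    rcases x2 with ⟨a2, p2⟩
    exact phi_inj _ _ p1 p2 he
  · intro π hπ
    have hb := mem_B2set.mp hπ
    refine ⟨⟨lowA π, res π hn hb⟩, ?_, ?_⟩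
    · rw [Finset.mem_sigma]
      exact ⟨Finset.mem_range.mpr (lowA_lt π hn), res_mem_B2 π hn hb⟩
    · exact phi_res π hn hb
  · intro x hx
    rw [numK_phi _ _ hk]


/-! ### Numeric closed forms -/

def Tval (k n : ℕ) : ℕ :=
  if n < k then 0 else if n = k then 1 else if n = k + 1 then 2
  else (n - k + 3) * 2 ^ (n - k - 2)

def PST (k n : ℕ) : ℕ :=
  if n ≤ k then 0 else if n = k + 1 then 1 else (n - k + 1) * 2 ^ (n - k - 2)

def Sval (k n : ℕ) : ℕ :=
  if n < 2 * k then 0 else if n = 2 * k then 2 else if n = 2 * k + 1 then 6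
  else if n = 2 * k + 2 then 18
  else (n - 2 * k + 2) * (n - 2 * k + 7) * 2 ^ (n - 2 * k - 3)

def PSS (k n : ℕ) : ℕ :=
  if n ≤ 2 * k then 0 else if n = 2 * k + 1 then 2 else if n = 2 * k + 2 then 8
  else ((n - 2 * k) * (n - 2 * k) + 5 * (n - 2 * k) + 2) * 2 ^ (n - 2 * k - 3)

theorem Tval_low (h : n < k) : Tval k n = 0 := by simp only [Tval]; rw [if_pos h]
theorem Tval_k : Tval k k = 1 := by
  simp only [Tval]; rw [if_neg (by omega)]; simp
theorem Tval_k1 : Tval k (k + 1) = 2 := by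
  simp only [Tval]; rw [if_neg (by omega), if_neg (by omega)]; simp
theorem Tval_big (h : k + 2 ≤ n) : Tval k n = (n - k + 3) * 2 ^ (n - k - 2) := by
  simp only [Tval]; rw [if_neg (by omega), if_neg (by omega), if_neg (by omega)]

theorem PST_le (h : n ≤ k) : PST k n = 0 := by simp only [PST]; rw [if_pos h]
theorem PST_k1 : PST k (k + 1) = 1 := by
  simp only [PST]; rw [if_neg (by omega)]; simp
theorem PST_big (h : k + 2 ≤ n) : PST k n = (n - k + 1) * 2 ^ (n - k - 2) := by
  simp only [PST]; rw [if_neg (by omega), if_neg (by omega)]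

theorem Sval_low (h : n < 2 * k) : Sval k n = 0 := by simp only [Sval]; rw [if_pos h]
theorem Sval_0 : Sval k (2 * k) = 2 := by
  simp only [Sval]; rw [if_neg (by omega)]; simp
theorem Sval_1 : Sval k (2 * k + 1) = 6 := by
  simp only [Sval]; rw [if_neg (by omega), if_neg (by omega)]; simp
theorem Sval_2 : Sval k (2 * k + 2) = 18 := by
  simp only [Sval]; rw [if_neg (by omega), if_neg (by omega), if_neg (by omega)]; simp
theorem Sval_big (h : 2 * k + 3 ≤ n) :
    Sval k n = (n - 2 * k + 2) * (n - 2 * k + 7) * 2 ^ (n - 2 * k - 3) := by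
  simp only [Sval]
  rw [if_neg (by omega), if_neg (by omega), if_neg (by omega), if_neg (by omega)]

theorem PSS_le (h : n ≤ 2 * k) : PSS k n = 0 := by simp only [PSS]; rw [if_pos h]
theorem PSS_1 : PSS k (2 * k + 1) = 2 := by
  simp only [PSS]; rw [if_neg (by omega)]; simp
theorem PSS_2 : PSS k (2 * k + 2) = 8 := by
  simp only [PSS]; rw [if_neg (by omega), if_neg (by omega)]; simp
theorem PSS_big (h : 2 * k + 3 ≤ n) :
    PSS k n = ((n - 2 * k) * (n - 2 * k) + 5 * (n - 2 * k) + 2) * 2 ^ (n - 2 * k - 3) := by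
  simp only [PSS]
  rw [if_neg (by omega), if_neg (by omega), if_neg (by omega)]

theorem geo : ∀ n : ℕ, 0 < n → (∑ a ∈ Finset.range n, 2 ^ (a - 1)) = 2 ^ (n - 1) := by
  intro n
  induction n with
  | zero => intro h; omega
  | succ m ih =>
      intro _
      rcases Nat.eq_zero_or_pos m with rfl | hm
      · simp
      · rw [Finset.sum_range_succ, ih hm]
        have h1 : m - 1 + 1 = m := by omega
        have h2 : m + 1 - 1 = m := by omega
        rw [h2, ← two_mul, ← pow_succ', h1]

theorem PST_sum (hk : 0 < k) : ∀ n : ℕ, (∑ a ∈ Finset.range n, Tval k a) = PST k n := by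
  intro n
  induction n with
  | zero => rw [Finset.sum_range_zero, PST_le (by omega)]
  | succ m ih =>
      rw [Finset.sum_range_succ, ih]
      rcases Nat.lt_or_ge m k with h1 | h1
      · rw [Tval_low h1, PST_le (by omega), PST_le (by omega)]
      · rcases Nat.eq_or_lt_of_le h1 with h2 | h2
        · subst h2
          rw [Tval_k, PST_le (by omega), PST_k1]
        · rcases (by omega : m = k + 1 ∨ k + 2 ≤ m) with h3 | h3
          · subst h3
            rw [Tval_k1, PST_k1, PST_big (by omega)]
            have e1 : k + 1 + 1 - k + 1 = 3 := by omega
            have e2 : k + 1 + 1 - k - 2 = 0 := by omega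
            rw [e1, e2]
            norm_num
          · obtain ⟨t, rfl⟩ : ∃ t, m = k + 2 + t := ⟨m - k - 2, by omega⟩
            rw [Tval_big (by omega), PST_big (by omega), PST_big (by omega)]
            have e1 : k + 2 + t - k + 1 = t + 3 := by omega
            have e2 : k + 2 + t - k - 2 = t := by omega
            have e3 : k + 2 + t - k + 3 = t + 5 := by omega
            have e4 : k + 2 + t + 1 - k + 1 = t + 4 := by omega
            have e5 : k + 2 + t + 1 - k - 2 = t + 1 := by omega
            rw [e2, e5, e1, e3, e4, pow_succ]
            ring

theorem Tval_rec (hk : 0 < k) (n : ℕ) :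
    PST k n + (if k ≤ n then 2 ^ (n - k - 1) else 0) = Tval k n := by
  rcases Nat.lt_or_ge n k with h1 | h1
  · rw [PST_le (by omega), Tval_low h1, if_neg (by omega)]
  · rw [if_pos h1]
    rcases Nat.eq_or_lt_of_le h1 with h2 | h2
    · subst h2
      rw [PST_le (by omega), Tval_k]
      have e : k - k - 1 = 0 := by omega
      rw [e]
      norm_num
    · rcases (by omega : n = k + 1 ∨ k + 2 ≤ n) with h3 | h3
      · subst h3
        rw [PST_k1, Tval_k1]
        have e : k + 1 - k - 1 = 0 := by omega
        rw [e]
        norm_num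
      · obtain ⟨t, rfl⟩ : ∃ t, n = k + 2 + t := ⟨n - k - 2, by omega⟩
        rw [PST_big (by omega), Tval_big (by omega)]
        have e1 : k + 2 + t - k + 1 = t + 3 := by omega
        have e2 : k + 2 + t - k - 2 = t := by omega
        have e3 : k + 2 + t - k - 1 = t + 1 := by omega
        have e4 : k + 2 + t - k + 3 = t + 5 := by omega
        rw [e2, e3, e1, e4, pow_succ]
        ring

theorem PSS_sum (hk : 0 < k) : ∀ n : ℕ, (∑ a ∈ Finset.range n, Sval k a) = PSS k n := by
  intro n
  induction n with
  | zero => rw [Finset.sum_range_zero, PSS_le (by omega)]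
  | succ m ih =>
      rw [Finset.sum_range_succ, ih]
      rcases Nat.lt_or_ge m (2 * k) with h1 | h1
      · rw [Sval_low h1, PSS_le (by omega), PSS_le (by omega)]
      · rcases Nat.eq_or_lt_of_le h1 with h2 | h2
        · subst h2
          rw [Sval_0, PSS_le (by omega), PSS_1]
        · rcases (by omega : m = 2 * k + 1 ∨ m = 2 * k + 2 ∨ m = 2 * k + 3 ∨ 2 * k + 4 ≤ m)
            with h3 | h3 | h3 | h3
          · subst h3
            rw [Sval_1, PSS_1, PSS_2]
          · subst h3
            rw [Sval_2, PSS_2, PSS_big (by omega)]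
            have e2 : 2 * k + 2 + 1 - 2 * k - 3 = 0 := by omega
            have e1 : 2 * k + 2 + 1 - 2 * k = 3 := by omega
            rw [e2, e1]
            norm_num
          · subst h3
            rw [Sval_big (by omega), PSS_big (by omega), PSS_big (by omega)]
            have e2 : 2 * k + 3 - 2 * k - 3 = 0 := by omega
            have e6 : 2 * k + 3 + 1 - 2 * k - 3 = 1 := by omega
            have e1 : 2 * k + 3 - 2 * k = 3 := by omega
            have e5 : 2 * k + 3 + 1 - 2 * k = 4 := by omega
            rw [e2, e6, e1, e5]
            norm_num
          · obtain ⟨t, rfl⟩ : ∃ t, m = 2 * k + 4 + t := ⟨m - 2 * k - 4, by omega⟩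
            rw [Sval_big (by omega), PSS_big (by omega), PSS_big (by omega)]
            have e2 : 2 * k + 4 + t - 2 * k - 3 = t + 1 := by omega
            have e6 : 2 * k + 4 + t + 1 - 2 * k - 3 = t + 2 := by omega
            have e1 : 2 * k + 4 + t - 2 * k = t + 4 := by omega
            have e5 : 2 * k + 4 + t + 1 - 2 * k = t + 5 := by omega
            rw [e2, e6, e1, e5, pow_succ, pow_succ]
            ring

theorem Sval_rec (hk : 0 < k) (n : ℕ) :
    PSS k n + (if k ≤ n then 2 * Tval k (n - k) else 0) = Sval k n := by
  rcases Nat.lt_or_ge n k with h1 | h1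
  · rw [PSS_le (by omega), Sval_low (by omega), if_neg (by omega)]
  · rw [if_pos h1]
    rcases Nat.lt_or_ge n (2 * k) with h2 | h2
    · rw [PSS_le (by omega), Sval_low h2]
      have e : Tval k (n - k) = 0 := Tval_low (by omega)
      rw [e]
    · rcases Nat.eq_or_lt_of_le h2 with h3 | h3
      · obtain rfl : n = 2 * k := h3.symm
        rw [PSS_le (by omega), Sval_0]
        have e : 2 * k - k = k := by omega
        rw [e, Tval_k]
      · rcases (by omega : n = 2 * k + 1 ∨ n = 2 * k + 2 ∨ 2 * k + 3 ≤ n) with h4 | h4 | h4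
        · subst h4
          rw [PSS_1, Sval_1]
          have e : 2 * k + 1 - k = k + 1 := by omega
          rw [e, Tval_k1]
        · subst h4
          rw [PSS_2, Sval_2]
          have e : 2 * k + 2 - k = k + 2 := by omega
          rw [e, Tval_big (by omega)]
          have e2 : k + 2 - k - 2 = 0 := by omega
          have e1 : k + 2 - k + 3 = 5 := by omega
          rw [e2, e1]
          norm_num
        · obtain ⟨t, rfl⟩ : ∃ t, n = 2 * k + 3 + t := ⟨n - 2 * k - 3, by omega⟩
          rw [PSS_big (by omega), Sval_big (by omega)]
          have e : 2 * k + 3 + t - k = k + 3 + t := by omega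
          rw [e, Tval_big (by omega)]
          have e2 : 2 * k + 3 + t - 2 * k - 3 = t := by omega
          have e4 : k + 3 + t - k - 2 = t + 1 := by omega
          have e1 : 2 * k + 3 + t - 2 * k = t + 3 := by omega
          have e3 : k + 3 + t - k = t + 3 := by omega
          rw [e2, e4, e1, e3, pow_succ]
          ring

/-! ### Summation lemmas -/

theorem ite_sum (hk : 0 < k) (n : ℕ) (f : ℕ → ℕ) :
    (∑ a ∈ Finset.range n, if n - a = k then f a else 0)
      = if k ≤ n then f (n - k) else 0 := by
  split_ifs with h
  · have step : ∀ a ∈ Finset.range n,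
        (if n - a = k then f a else 0) = (if a = n - k then f a else 0) := by
      intro a ha
      have haa := Finset.mem_range.mp ha
      by_cases h2 : a = n - k
      · rw [if_pos h2, if_pos (by omega)]
      · rw [if_neg (by omega), if_neg h2]
    rw [Finset.sum_congr rfl step, Finset.sum_ite_eq' (Finset.range n) (n - k) f,
      if_pos (Finset.mem_range.mpr (by omega))]
  · refine Finset.sum_eq_zero (fun a ha => ?_)
    rw [if_neg (by have := Finset.mem_range.mp ha; omega)]

theorem numK_fin0 (π : Equiv.Perm (Fin 0)) (k : ℕ) : numKCycles π k = 0 := by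
  simp [numKCycles]

theorem sum_one : ∀ n : ℕ, (∑ _π ∈ B2set n, 1) = 2 ^ (n - 1) := by
  intro n
  induction n using Nat.strong_induction_on with
  | _ n ih =>
    rcases Nat.eq_zero_or_pos n with rfl | hn
    · rw [Finset.sum_const, smul_eq_mul, mul_one]
      have hB : B2set 0 = Finset.univ := by
        apply Finset.filter_true_of_mem
        intro π _
        intro i
        exact absurd i.2 (by omega)
      rw [hB, Finset.card_univ]
      simp
    · rw [rec_sum (k := 1) one_pos hn (fun _ => 1), Finset.sum_sigma]
      rw [Finset.sum_congr rfl (fun a ha => ih a (Finset.mem_range.mp ha))]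
      exact geo n hn

theorem sum_numK (hk : 0 < k) : ∀ n : ℕ, (∑ π ∈ B2set n, numKCycles π k) = Tval k n := by
  intro n
  induction n using Nat.strong_induction_on with
  | _ n ih =>
    rcases Nat.eq_zero_or_pos n with rfl | hn
    · rw [Finset.sum_eq_zero (fun π _ => numK_fin0 π k)]
      exact (Tval_low hk).symm
    · rw [rec_sum hk hn (fun c => c), Finset.sum_sigma]
      have inner : ∀ a ∈ Finset.range n,
          (∑ p ∈ B2set a, (numKCycles p k + if n - a = k then 1 else 0))
            = Tval k a + (if n - a = k then 2 ^ (a - 1) else 0) := by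
        intro a ha
        rw [Finset.sum_add_distrib, ih a (Finset.mem_range.mp ha)]
        congr 1
        split_ifs with h
        · exact sum_one a
        · exact Finset.sum_const_zero
      rw [Finset.sum_congr rfl inner, Finset.sum_add_distrib, PST_sum hk n,
        ite_sum hk n (fun a => 2 ^ (a - 1))]
      exact Tval_rec hk n

theorem cc_succ (c : ℕ) : (c + 1) * (c + 1 - 1) = c * (c - 1) + 2 * c := by
  cases c with
  | zero => rfl
  | succ m =>
      simp only [Nat.add_sub_cancel]
      ring

theorem sum_CC (hk : 0 < k) :
    ∀ n : ℕ, (∑ π ∈ B2set n, numKCycles π k * (numKCycles π k - 1)) = Sval k n := by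
  intro n
  induction n using Nat.strong_induction_on with
  | _ n ih =>
    rcases Nat.eq_zero_or_pos n with rfl | hn
    · rw [Finset.sum_eq_zero (fun π _ => by simp [numK_fin0 π k])]
      exact (Sval_low (by omega)).symm
    · rw [rec_sum hk hn (fun c => c * (c - 1)), Finset.sum_sigma]
      have inner : ∀ a ∈ Finset.range n,
          (∑ p ∈ B2set a,
            ((numKCycles p k + if n - a = k then 1 else 0)
              * ((numKCycles p k + if n - a = k then 1 else 0) - 1)))
            = Sval k a + (if n - a = k then 2 * Tval k a else 0) := by
        intro a ha
        split_ifs with h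
        · rw [Finset.sum_congr rfl (fun p _ => cc_succ (numKCycles p k)),
            Finset.sum_add_distrib, ih a (Finset.mem_range.mp ha), ← Finset.mul_sum,
            sum_numK hk a]
        · simp only [add_zero]
          rw [ih a (Finset.mem_range.mp ha)]
      rw [Finset.sum_congr rfl inner, Finset.sum_add_distrib, PSS_sum hk n,
        ite_sum hk n (fun a => 2 * Tval k a)]
      exact Sval_rec hk n

end B2aux

/-- For `1 ≤ k` with `n ≥ 2k+3`, the sum over all permutations `π` of
`{1,...,n}` with `π(i) ≥ i - 1` for `i ∈ {2,...,n}` (encoded 0-based on `Fin n`) of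
`C(π)·(C(π)-1)`, where `C(π)` is the number of `k`-cycles of `π`, equals
`(n+2-2k)(n+7-2k)·2^(n-2k-3)`. -/
theorem b2_k_cycle_second_factorial_moment (n k : ℕ) (hk : 1 ≤ k) (hn : 2 * k + 3 ≤ n) :
    (∑ π ∈ Finset.univ.filter (fun π : Equiv.Perm (Fin n) =>
          ∀ i : Fin n, (i : ℕ) ≤ (π i : ℕ) + 1),
        numKCycles π k * (numKCycles π k - 1))
      = (n + 2 - 2 * k) * (n + 7 - 2 * k) * 2 ^ (n - 2 * k - 3) := by
  have e : Finset.univ.filter (fun π : Equiv.Perm (Fin n) =>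
      ∀ i : Fin n, (i : ℕ) ≤ (π i : ℕ) + 1) = B2aux.B2set n := rfl
  rw [e, B2aux.sum_CC (by omega) n, B2aux.Sval_big hn]
  have e1 : n - 2 * k + 2 = n + 2 - 2 * k := by omega
  have e2 : n - 2 * k + 7 = n + 7 - 2 * k := by omega
  rw [e1, e2]
end

section
/- The total number of parts equal to k over all compositions of n is (n - k + 3)·2^(n-k-2) for 1 ≤ k < n, and equals 1 when k = n. -/
open Finset

namespace CompPartCount

lemma blocks_ne_nil {n : ℕ} (c : Composition (n+1)) : c.blocks ≠ [] := by
  intro h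
  have := c.blocks_sum
  rw [h] at this
  simp at this

lemma cons_headI_tail {l : List ℕ} (h : l ≠ []) : l.headI :: l.tail = l := by
  cases l with
  | nil => exact absurd rfl h
  | cons a t => rfl

lemma headI_mem {l : List ℕ} (h : l ≠ []) : l.headI ∈ l := by
  cases l with
  | nil => exact absurd rfl h
  | cons a t => simp

/-- prepend 1 -/
def ext1 {n : ℕ} (c : Composition n) : Composition (n+1) :=
  ⟨1 :: c.blocks, by
    intro i hi
    rcases List.mem_cons.mp hi with h | h
    · omega
    · exact c.blocks_pos h, by simp [c.blocks_sum, Nat.add_comm]⟩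

/-- increment the head -/
def ext2 {n : ℕ} (c : Composition (n+1)) : Composition (n+2) :=
  ⟨(c.blocks.headI + 1) :: c.blocks.tail, by
    intro i hi
    rcases List.mem_cons.mp hi with h | h
    · omega
    · exact c.blocks_pos (List.mem_of_mem_tail h), by
    have h1 : c.blocks.headI :: c.blocks.tail = c.blocks :=
      cons_headI_tail (blocks_ne_nil c)
    have := c.blocks_sum
    calc ((c.blocks.headI + 1) :: c.blocks.tail).sum
        = (c.blocks.headI :: c.blocks.tail).sum + 1 := by simp [Nat.add_comm, Nat.add_assoc, Nat.add_left_comm]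
      _ = n + 2 := by rw [h1, this]⟩

def F2 (n : ℕ) : Composition (n+1) ⊕ Composition (n+1) → Composition (n+2) :=
  Sum.elim (fun c => ext1 c) (fun c => ext2 c)

lemma F2_bij (n : ℕ) : Function.Bijective (F2 n) := by
  rw [Fintype.bijective_iff_injective_and_card]
  constructor
  · rintro (a | a) (b | b) h <;> simp only [F2, Sum.elim_inl, Sum.elim_inr] at h
    · apply congrArg
      ext1
      have : (ext1 a).blocks = (ext1 b).blocks := by rw [h]
      simpa [ext1] using this
    · exfalso
      have : (ext1 a).blocks = (ext2 b).blocks := by rw [h]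
      simp only [ext1, ext2] at this
      have : 1 = b.blocks.headI + 1 := (List.cons.injEq _ _ _ _ ▸ this).1
      have hpos : 0 < b.blocks.headI := by
        apply b.blocks_pos
        exact headI_mem (blocks_ne_nil b)
      omega
    · exfalso
      have : (ext2 a).blocks = (ext1 b).blocks := by rw [h]
      simp only [ext1, ext2] at this
      have : a.blocks.headI + 1 = 1 := (List.cons.injEq _ _ _ _ ▸ this).1
      have hpos : 0 < a.blocks.headI := by
        apply a.blocks_pos
        exact headI_mem (blocks_ne_nil a)
      omega
    · apply congrArg
      ext1
      have h' : (ext2 a).blocks = (ext2 b).blocks := by rw [h]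
      simp only [ext2] at h'
      have h1 : a.blocks.headI = b.blocks.headI := by
        have := (List.cons.injEq _ _ _ _ ▸ h').1; omega
      have h2 : a.blocks.tail = b.blocks.tail := (List.cons.injEq _ _ _ _ ▸ h').2
      have ha : a.blocks.headI :: a.blocks.tail = a.blocks :=
        cons_headI_tail (blocks_ne_nil a)
      have hb : b.blocks.headI :: b.blocks.tail = b.blocks :=
        cons_headI_tail (blocks_ne_nil b)
      rw [← ha, ← hb, h1, h2]
  · simp [composition_card]
    ring

lemma sum_split (n : ℕ) (φ : Composition (n+2) → ℕ) :
    ∑ c : Composition (n+2), φ c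
      = ∑ c : Composition (n+1), φ (ext1 c) + ∑ c : Composition (n+1), φ (ext2 c) := by
  rw [← Fintype.sum_bijective (F2 n) (F2_bij n) (fun x => φ (F2 n x)) φ (fun x => rfl)]
  rw [Fintype.sum_sum_type]
  rfl

/-- number of compositions of `n` whose first part is `j` -/
def Fh (n j : ℕ) : ℕ := ∑ c : Composition n, (if c.blocks.headI = j then 1 else 0)

/-- total number of parts equal to `k` over compositions of `n` -/
def T (n k : ℕ) : ℕ := ∑ c : Composition n, c.blocks.count k

lemma Fh_zero (n : ℕ) : Fh (n+1) 0 = 0 := by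
  apply Finset.sum_eq_zero
  intro c _
  have : 0 < c.blocks.headI := c.blocks_pos (headI_mem (blocks_ne_nil c))
  simp only [ite_eq_right_iff]
  omega

lemma cardC (n : ℕ) : Fintype.card (Composition (n+1)) = 2 ^ n := by
  simp [composition_card]

lemma Fh_rec (n j : ℕ) (hj : 1 ≤ j) :
    Fh (n+2) j = (if j = 1 then 2^n else 0) + Fh (n+1) (j-1) := by
  rw [Fh, sum_split]
  congr 1
  · simp only [ext1]
    rcases eq_or_ne j 1 with h | h
    · subst h
      simp [cardC]
    · simp [Ne.symm h, h]
  · apply Finset.sum_congr rfl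
    intro c _
    have hiff : (c.blocks.headI + 1 = j) ↔ (c.blocks.headI = j - 1) := by omega
    simp [ext2, hiff]

lemma subsingleton_comp1 : Subsingleton (Composition 1) :=
  Fintype.card_le_one_iff_subsingleton.mp (by simp [composition_card])

lemma subsingleton_comp0 : Subsingleton (Composition 0) :=
  Fintype.card_le_one_iff_subsingleton.mp (by simp [composition_card])

lemma Fh_one (j : ℕ) : Fh 1 j = if j = 1 then 1 else 0 := by
  haveI := subsingleton_comp1
  rw [Fh, Fintype.sum_subsingleton _ (Composition.ones 1)]
  simp [Composition.ones_blocks]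
  rcases eq_or_ne j 1 with h | h
  · simp [h]
  · simp [h, Ne.symm h]

lemma Fh_val (n : ℕ) : ∀ j, 1 ≤ j →
    ((j < n+1 → 2^(j+1) * Fh (n+1) j = 2^(n+1)) ∧
     (j = n+1 → Fh (n+1) j = 1) ∧
     (n+1 < j → Fh (n+1) j = 0)) := by
  induction n with
  | zero =>
    intro j hj
    refine ⟨fun h => by omega, fun h => ?_, fun h => ?_⟩
    · subst h; simp [Fh_one]
    · rw [Fh_one]; have : j ≠ 1 := by omega
      simp [this]
  | succ m ih =>
    intro j hj
    rcases eq_or_ne j 1 with h1 | h1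
    · subst h1
      refine ⟨fun h => ?_, fun h => by omega, fun h => by omega⟩
      rw [Fh_rec _ _ le_rfl]
      simp [Fh_zero]
      ring
    · have hj2 : 2 ≤ j := by omega
      have hrec := Fh_rec m j (by omega)
      have hif : (if j = 1 then 2^m else 0) = 0 := by simp [h1]
      rw [hif, Nat.zero_add] at hrec
      obtain ⟨ha, hb, hc⟩ := ih (j-1) (by omega)
      refine ⟨fun h => ?_, fun h => ?_, fun h => ?_⟩
      · have := ha (by omega)
        rw [hrec]
        have hj1 : j - 1 + 1 = j := by omega
        rw [hj1] at this
        calc 2^(j+1) * Fh (m+1) (j-1) = 2 * (2^j * Fh (m+1) (j-1)) := by ring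
          _ = 2 * 2^(m+1) := by rw [this]
          _ = 2^(m+2) := by ring
      · rw [hrec, hb (by omega)]
      · rw [hrec, hc (by omega)]

lemma T_rec (n k : ℕ) (hk : 1 ≤ k) :
    T (n+2) k + Fh (n+1) k
      = 2 * T (n+1) k + (if k = 1 then 2^n else 0) + Fh (n+1) (k-1) := by
  have hsplit : T (n+2) k
      = ∑ c : Composition (n+1), ((1 :: c.blocks).count k)
        + ∑ c : Composition (n+1), (((c.blocks.headI + 1) :: c.blocks.tail).count k) := by
    rw [T, sum_split]
    rfl
  have h1 : ∑ c : Composition (n+1), ((1 :: c.blocks).count k)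
      = T (n+1) k + (if k = 1 then 2^n else 0) := by
    simp only [List.count_cons]
    rw [Finset.sum_add_distrib]
    congr 1
    rcases eq_or_ne k 1 with h | h
    · subst h; simp [cardC]
    · simp [h, Ne.symm h]
  have h2 : ∑ c : Composition (n+1), (((c.blocks.headI + 1) :: c.blocks.tail).count k)
      = ∑ c : Composition (n+1), c.blocks.tail.count k + Fh (n+1) (k-1) := by
    simp only [List.count_cons]
    rw [Finset.sum_add_distrib]
    congr 1
    apply Finset.sum_congr rfl
    intro c _
    have : (c.blocks.headI + 1 = k) ↔ (c.blocks.headI = k - 1) := by omega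
    simp [this]
  have h3 : T (n+1) k = ∑ c : Composition (n+1), c.blocks.tail.count k + Fh (n+1) k := by
    rw [T, Fh, ← Finset.sum_add_distrib]
    apply Finset.sum_congr rfl
    intro c _
    conv_lhs => rw [← cons_headI_tail (blocks_ne_nil c)]
    simp [List.count_cons]
  rw [hsplit, h1, h2]
  omega

lemma T_zero (k : ℕ) : T 0 k = 0 := by
  haveI := subsingleton_comp0
  rw [T, Fintype.sum_subsingleton _ (Composition.ones 0)]
  simp [Composition.ones_blocks]

lemma T_one (k : ℕ) : T 1 k = if k = 1 then 1 else 0 := by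
  haveI := subsingleton_comp1
  rw [T, Fintype.sum_subsingleton _ (Composition.ones 1)]
  rcases eq_or_ne k 1 with h | h
  · simp [Composition.ones_blocks, h, List.count_cons]
  · simp [Composition.ones_blocks, h, List.count_cons, Ne.symm h]

lemma T_val (n : ℕ) : ∀ k, 1 ≤ k →
    ((k < n → 2^(k+2) * T n k = (n - k + 3) * 2^n) ∧
     (k = n → T n k = 1) ∧
     (n < k → T n k = 0)) := by
  induction n with
  | zero =>
    intro k hk
    exact ⟨fun h => by omega, fun h => by omega, fun h => by rw [T_zero]⟩
  | succ m ih =>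
    cases m with
    | zero =>
      intro k hk
      refine ⟨fun h => by omega, fun h => ?_, fun h => ?_⟩
      · subst h; simp [T_one]
      · rw [T_one]; have : k ≠ 1 := by omega
        simp [this]
    | succ m =>
      intro k hk
      rw [show m + 1 + 1 = m + 2 from rfl]
      have hrec := T_rec m k hk
      refine ⟨fun h => ?_, fun h => ?_, fun h => ?_⟩
      · -- k < m + 2
        rcases Nat.lt_or_ge k (m+1) with hkm | hkm
        · -- k ≤ m : generic case
          obtain ⟨hT, _, _⟩ := ih k hk
          have hTv := hT hkm
          obtain ⟨hF1, _, _⟩ := Fh_val m k hk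
          have hFk := hF1 hkm
          -- extra := (if k=1 then 2^n ..) + Fh (m+1) (k-1), times 2^(k+2) equals 4*2^(m+1)
          have hextra : 2^(k+2) * ((if k = 1 then 2^m else 0) + Fh (m+1) (k-1))
              = 4 * 2^(m+1) := by
            rcases eq_or_ne k 1 with h1 | h1
            · subst h1
              simp [Fh_zero]
              ring
            · have hk2 : 2 ≤ k := by omega
              obtain ⟨hF1', _, _⟩ := Fh_val m (k-1) (by omega)
              have := hF1' (by omega)
              have hkk : k - 1 + 1 = k := by omega
              rw [hkk] at this
              simp only [h1, if_false, Nat.zero_add]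
              calc 2^(k+2) * Fh (m+1) (k-1) = 4 * (2^k * Fh (m+1) (k-1)) := by ring
                _ = 4 * 2^(m+1) := by rw [this]
          -- multiply the recurrence by 2^(k+2)
          have hmul : 2^(k+2) * T (m+2) k + 2^(k+2) * Fh (m+1) k
              = 2 * (2^(k+2) * T (m+1) k) + 2^(k+2) * ((if k = 1 then 2^m else 0) + Fh (m+1) (k-1)) := by
            calc 2^(k+2) * T (m+2) k + 2^(k+2) * Fh (m+1) k
                = 2^(k+2) * (T (m+2) k + Fh (m+1) k) := by ring
              _ = 2^(k+2) * (2 * T (m+1) k + ((if k = 1 then 2^m else 0) + Fh (m+1) (k-1))) := by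
                  rw [hrec]; ring_nf
              _ = 2 * (2^(k+2) * T (m+1) k) + 2^(k+2) * ((if k = 1 then 2^m else 0) + Fh (m+1) (k-1)) := by ring
          have hFk' : 2^(k+2) * Fh (m+1) k = 2 * 2^(m+1) := by
            calc 2^(k+2) * Fh (m+1) k = 2 * (2^(k+1) * Fh (m+1) k) := by ring
              _ = 2 * 2^(m+1) := by rw [hFk]
          rw [hFk', hTv, hextra] at hmul
          -- now pure arithmetic: X + 2*P = 2*((m+1-k+3)*P) + 4*P, want X = (m+2-k+3)*(2*P)
          have hsub : m + 2 - k + 3 = (m + 1 - k + 3) + 1 := by omega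
          rw [hsub]
          have hpow : (2:ℕ)^(m+2) = 2 * 2^(m+1) := by ring
          rw [hpow]
          have expand : ((m + 1 - k + 3) + 1) * (2 * 2^(m+1)) + 2 * 2^(m+1)
              = 2 * ((m + 1 - k + 3) * 2^(m+1)) + 4 * 2^(m+1) := by ring
          omega
        · -- k = m + 1
          have hkeq : k = m + 1 := by omega
          subst hkeq
          obtain ⟨_, hTeq, _⟩ := ih (m+1) hk
          have hT1 : T (m+1) (m+1) = 1 := hTeq rfl
          obtain ⟨_, hFeq, _⟩ := Fh_val m (m+1) hk
          have hF1 : Fh (m+1) (m+1) = 1 := hFeq rfl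
          have hFm : (if m + 1 = 1 then 2^m else 0) + Fh (m+1) (m+1-1) = 1 := by
            cases m with
            | zero => simp [Fh_zero]
            | succ p =>
              have hne : p + 1 + 1 ≠ 1 := by omega
              rw [if_neg hne, Nat.zero_add, show p + 1 + 1 - 1 = p + 1 from by omega]
              obtain ⟨hFa, _, _⟩ := Fh_val (p+1) (p+1) (by omega)
              have hFa' := hFa (by omega)
              have hpos : 0 < (2:ℕ)^(p+1+1) := Nat.pow_pos (by norm_num)
              have h2 : 2^(p+1+1) * Fh (p+1+1) (p+1) = 2^(p+1+1) * 1 := by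
                rw [Nat.mul_one]; exact hFa'
              exact Nat.eq_of_mul_eq_mul_left hpos h2
          have hT2 : T (m+2) (m+1) = 2 := by omega
          rw [hT2]
          have h4 : m + 2 - (m+1) + 3 = 4 := by omega
          rw [h4]
          ring
      · -- k = m + 2
        subst h
        obtain ⟨_, _, hTgt⟩ := ih (m+2) hk
        obtain ⟨_, _, hFgt⟩ := Fh_val m (m+2) hk
        obtain ⟨_, hFeq, _⟩ := Fh_val m (m+1) (by omega)
        have h1 : T (m+1) (m+2) = 0 := hTgt (by omega)
        have h2 : Fh (m+1) (m+2) = 0 := hFgt (by omega)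
        have h3 : Fh (m+1) (m+2-1) = 1 := by
          have : m + 2 - 1 = m + 1 := by omega
          rw [this]; exact hFeq rfl
        have h4 : (if m + 2 = 1 then 2^m else 0) = 0 := by simp
        omega
      · -- m + 2 < k
        obtain ⟨_, _, hTgt⟩ := ih k hk
        obtain ⟨_, _, hFgt⟩ := Fh_val m k hk
        obtain ⟨_, _, hFgt'⟩ := Fh_val m (k-1) (by omega)
        have h1 : T (m+1) k = 0 := hTgt (by omega)
        have h2 : Fh (m+1) k = 0 := hFgt (by omega)
        have h3 : Fh (m+1) (k-1) = 0 := hFgt' (by omega)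
        have h4 : (if k = 1 then 2^m else 0) = 0 := by
          have : k ≠ 1 := by omega
          simp [this]
        omega

end CompPartCount

/-- The total number of parts equal to `k` over all compositions of `n`
is `(n - k + 3)·2^(n-k-2)` for `1 ≤ k < n` (stated in the equivalent truncation-free
form `2^(k+2)·S = (n-k+3)·2^n`), and equals `1` when `k = n`. -/
theorem composition_k_part_count (n k : ℕ) (hk : 1 ≤ k) (hkn : k ≤ n) :
    (k < n → 2 ^ (k + 2) * (∑ c : Composition n, c.blocks.count k)
        = (n - k + 3) * 2 ^ n) ∧
    (k = n → (∑ c : Composition n, c.blocks.count k) = 1) := by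
  obtain ⟨h1, h2, _⟩ := CompPartCount.T_val n k hk
  exact ⟨h1, h2⟩
end

section
/- For all positive integers n, k, m with k ≤ n, the total number of parts equal to k over all compositions of n equals the total number of parts equal to k + m over all compositions of n + m. -/
open Finset

private lemma list_set_get_self (l : List ℕ) (i : ℕ) (h : i < l.length) :
    l.set i l[i] = l := by
  apply List.ext_getElem?
  intro j
  rw [List.getElem?_set]
  split
  · subst j; simp [h]
  · rfl

private lemma list_sum_set_aux (l : List ℕ) (i : ℕ) (h : i < l.length) (a : ℕ) :
    (l.set i a).sum + l[i] = l.sum + a := by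
  conv_rhs => rw [← list_set_get_self l i h]
  rw [List.sum_set, List.sum_set]
  simp only [if_pos h]
  omega

private lemma map_ite_sum (l : List ℕ) (a : ℕ) :
    (l.map fun x => if x = a then 1 else 0).sum = l.count a := by
  induction l with
  | nil => simp
  | cons b t ih =>
      simp only [List.count_cons, List.map_cons, List.sum_cons, ih]
      by_cases hb : b = a <;> simp [hb] <;> omega

private lemma count_eq_sum_fin (l : List ℕ) (a : ℕ) :
    l.count a = ∑ i : Fin l.length, if l.get i = a then 1 else 0 := by
  rw [Fin.sum_univ_def]
  have h : (fun i : Fin l.length => if l.get i = a then 1 else 0)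
      = (fun x : ℕ => if x = a then 1 else 0) ∘ l.get := rfl
  rw [h, ← List.map_map, List.map_get_finRange, map_ite_sum]

/-- Mark a position: the sum over compositions of counts equals the cardinality of a
filtered sigma finset of (composition, position) pairs. -/
private lemma sum_count_eq_card (n k : ℕ) :
    (∑ c : Composition n, c.blocks.count k)
      = ((Finset.univ.sigma fun c : Composition n => (Finset.univ : Finset (Fin c.blocks.length))).filter
          (fun p => p.1.blocks.get p.2 = k)).card := by
  rw [Finset.card_filter,
    show (∑ c : Composition n, c.blocks.count k)
        = ∑ c : Composition n, ∑ i : Fin c.blocks.length, if c.blocks.get i = k then 1 else 0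
      from Finset.sum_congr rfl fun c _ => count_eq_sum_fin _ _]
  exact Finset.sum_sigma' Finset.univ (fun _ => Finset.univ)
    (fun (c : Composition n) (i : Fin c.blocks.length) => if c.blocks.get i = k then 1 else 0)

/-- For positive integers `n, k, m` with `k ≤ n`, the total number of parts
equal to `k` over all compositions of `n` equals the total number of parts equal to
`k + m` over all compositions of `n + m`. -/
theorem composition_part_shift (n k m : ℕ) (hn : 1 ≤ n) (hk : 1 ≤ k) (hm : 1 ≤ m)
    (hkn : k ≤ n) :
    (∑ c : Composition n, c.blocks.count k)
      = ∑ c : Composition (n + m), c.blocks.count (k + m) := by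
  rw [sum_count_eq_card, sum_count_eq_card]
  -- Build the bijection: replace the marked block `k` by `k + m`.
  apply Finset.card_bij'
    (i := fun (p : Σ c : Composition n, Fin c.blocks.length) hp =>
      have hp' : p.1.blocks.get p.2 = k := (Finset.mem_filter.mp hp).2
      ⟨⟨p.1.blocks.set p.2 (k + m),
        fun hx => by
          rcases List.mem_or_eq_of_mem_set hx with h | h
          · exact p.1.blocks_pos h
          · omega,
        by
          have := list_sum_set_aux p.1.blocks p.2 p.2.isLt (k + m)
          have hg : p.1.blocks[(p.2 : ℕ)] = k := hp'
          have hs : p.1.blocks.sum = n := p.1.blocks_sum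
          omega⟩,
       ⟨p.2, by simpa using p.2.isLt⟩⟩)
    (j := fun (p : Σ c : Composition (n + m), Fin c.blocks.length) hp =>
      have hp' : p.1.blocks.get p.2 = k + m := (Finset.mem_filter.mp hp).2
      ⟨⟨p.1.blocks.set p.2 k,
        fun hx => by
          rcases List.mem_or_eq_of_mem_set hx with h | h
          · exact p.1.blocks_pos h
          · omega,
        by
          have := list_sum_set_aux p.1.blocks p.2 p.2.isLt k
          have hg : p.1.blocks[(p.2 : ℕ)] = k + m := hp'
          have hs : p.1.blocks.sum = n + m := p.1.blocks_sum
          omega⟩,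
       ⟨p.2, by simpa using p.2.isLt⟩⟩)
  · intro p hp
    have hp' : p.1.blocks.get p.2 = k := (Finset.mem_filter.mp hp).2
    have hg : p.1.blocks[(p.2 : ℕ)] = k := hp'
    have hb : (p.1.blocks.set p.2 (k + m)).set p.2 k = p.1.blocks := by
      rw [List.set_set, ← hg, list_set_get_self _ _ p.2.isLt]
    apply Sigma.ext
    · exact Composition.ext hb
    · exact (Fin.heq_ext_iff (congrArg List.length hb)).mpr rfl
  · intro p hp
    have hp' : p.1.blocks.get p.2 = k + m := (Finset.mem_filter.mp hp).2
    have hg : p.1.blocks[(p.2 : ℕ)] = k + m := hp'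
    have hb : (p.1.blocks.set p.2 k).set p.2 (k + m) = p.1.blocks := by
      rw [List.set_set, ← hg, list_set_get_self _ _ p.2.isLt]
    apply Sigma.ext
    · exact Composition.ext hb
    · exact (Fin.heq_ext_iff (congrArg List.length hb)).mpr rfl
  · intro p hp
    have hp' : p.1.blocks.get p.2 = k := (Finset.mem_filter.mp hp).2
    simp only [Finset.mem_filter, Finset.mem_sigma, Finset.mem_univ, true_and]
    show (p.1.blocks.set p.2 (k + m)).get _ = k + m
    simp [List.get_eq_getElem, List.getElem_set_self]
  · intro p hp
    have hp' : p.1.blocks.get p.2 = k + m := (Finset.mem_filter.mp hp).2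
    simp only [Finset.mem_filter, Finset.mem_sigma, Finset.mem_univ, true_and]
    show (p.1.blocks.set p.2 k).get _ = k
    simp [List.get_eq_getElem, List.getElem_set_self]
end

section
/- Fix k with 1 ≤ k ≤ n. Among permutations π of {1,...,n} with π(i) ≥ i - 1 (for i ∈ {2,...,n}), the number of permutations whose cycle with elements {1,...,k} (the 'first' potential k-cycle) occurs equals 2^(n-k-1) for k < n; hence the probability that this k-cycle occurs is 1/2^k. -/
def bigFun (n k : ℕ) (hk : 1 ≤ k) (hkn : k ≤ n) (e : Fin (n - k) → Fin (n - k))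
    (j : Fin n) : Fin n :=
  if h : (j : ℕ) < k then
    (if h0 : (j : ℕ) = 0 then ⟨k - 1, by omega⟩ else ⟨(j : ℕ) - 1, by omega⟩)
  else
    ⟨(e ⟨(j : ℕ) - k, by omega⟩ : ℕ) + k, by
      have := (e ⟨(j : ℕ) - k, by omega⟩).isLt; omega⟩

def bigInvFun (n k : ℕ) (hk : 1 ≤ k) (hkn : k ≤ n) (e : Fin (n - k) → Fin (n - k))
    (j : Fin n) : Fin n :=
  if h : (j : ℕ) < k then
    (if h0 : (j : ℕ) = k - 1 then ⟨0, by omega⟩ else ⟨(j : ℕ) + 1, by omega⟩)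
  else
    ⟨(e ⟨(j : ℕ) - k, by omega⟩ : ℕ) + k, by
      have := (e ⟨(j : ℕ) - k, by omega⟩).isLt; omega⟩

def bigPerm (n k : ℕ) (hk : 1 ≤ k) (hkn : k ≤ n) (e : Equiv.Perm (Fin (n - k))) :
    Equiv.Perm (Fin n) where
  toFun := bigFun n k hk hkn e
  invFun := bigInvFun n k hk hkn e.symm
  left_inv := by
    intro j
    unfold bigFun bigInvFun
    by_cases h : (j : ℕ) < k
    · by_cases h0 : (j : ℕ) = 0
      · rw [dif_pos h, dif_pos h0]
        rw [dif_pos (show ((⟨k-1, by omega⟩ : Fin n) : ℕ) < k by simp; omega)]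
        rw [dif_pos (by simp)]
        exact Fin.ext (by simp [h0])
      · rw [dif_pos h, dif_neg h0]
        rw [dif_pos (show ((⟨(j:ℕ)-1, by omega⟩ : Fin n) : ℕ) < k by simp; omega)]
        rw [dif_neg (by simp; omega)]
        exact Fin.ext (by simp; omega)
    · rw [dif_neg h]
      rw [dif_neg (show ¬ (((⟨(e ⟨(j : ℕ) - k, by omega⟩ : ℕ) + k, by
        have := (e ⟨(j : ℕ) - k, by omega⟩).isLt; omega⟩ : Fin n)) : ℕ) < k by simp)]
      apply Fin.ext
      simp only []
      have : (⟨((⟨(e ⟨(j : ℕ) - k, by omega⟩ : ℕ) + k, by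
          have := (e ⟨(j : ℕ) - k, by omega⟩).isLt; omega⟩ : Fin n) : ℕ) - k, by
          have := (e ⟨(j : ℕ) - k, by omega⟩).isLt; omega⟩ : Fin (n-k))
          = e ⟨(j : ℕ) - k, by omega⟩ := Fin.ext (by simp)
      simp only [this, Equiv.symm_apply_apply]
      omega
  right_inv := by
    intro j
    unfold bigFun bigInvFun
    by_cases h : (j : ℕ) < k
    · by_cases h0 : (j : ℕ) = k - 1
      · rw [dif_pos h, dif_pos h0]
        rw [dif_pos (show ((⟨0, by omega⟩ : Fin n) : ℕ) < k by simp; omega)]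
        rw [dif_pos (by simp)]
        exact Fin.ext (by simp; omega)
      · rw [dif_pos h, dif_neg h0]
        rw [dif_pos (show ((⟨(j:ℕ)+1, by omega⟩ : Fin n) : ℕ) < k by simp; omega)]
        rw [dif_neg (by simp)]
        exact Fin.ext (by simp)
    · rw [dif_neg h]
      rw [dif_neg (show ¬ (((⟨(e.symm ⟨(j : ℕ) - k, by omega⟩ : ℕ) + k, by
        have := (e.symm ⟨(j : ℕ) - k, by omega⟩).isLt; omega⟩ : Fin n)) : ℕ) < k by simp)]
      apply Fin.ext
      have : (⟨((⟨(e.symm ⟨(j : ℕ) - k, by omega⟩ : ℕ) + k, by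
          have := (e.symm ⟨(j : ℕ) - k, by omega⟩).isLt; omega⟩ : Fin n) : ℕ) - k, by
          have := (e.symm ⟨(j : ℕ) - k, by omega⟩).isLt; omega⟩ : Fin (n-k))
          = e.symm ⟨(j : ℕ) - k, by omega⟩ := Fin.ext (by simp)
      simp only [this, Equiv.apply_symm_apply]
      omega

lemma bigPerm_val_lt (n k : ℕ) (hk : 1 ≤ k) (hkn : k ≤ n) (e : Equiv.Perm (Fin (n - k)))
    (j : Fin n) (hj : (j : ℕ) < k) :
    (bigPerm n k hk hkn e j : ℕ) = if (j : ℕ) = 0 then k - 1 else (j : ℕ) - 1 := by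
  show (bigFun n k hk hkn e j : ℕ) = _
  unfold bigFun
  rw [dif_pos hj]
  by_cases h0 : (j : ℕ) = 0
  · rw [dif_pos h0, if_pos h0]
  · rw [dif_neg h0, if_neg h0]

lemma bigPerm_val_ge (n k : ℕ) (hk : 1 ≤ k) (hkn : k ≤ n) (e : Equiv.Perm (Fin (n - k)))
    (j : Fin n) (hj : ¬ (j : ℕ) < k) :
    (bigPerm n k hk hkn e j : ℕ) = (e ⟨(j : ℕ) - k, by omega⟩ : ℕ) + k := by
  show (bigFun n k hk hkn e j : ℕ) = _
  unfold bigFun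
  rw [dif_neg hj]

lemma high_of_high (n k : ℕ) (hk : 1 ≤ k) (hkn : k ≤ n) (π : Equiv.Perm (Fin n))
    (hC : ∀ t : Fin n, (t : ℕ) < k → (π t : ℕ) = if (t : ℕ) = 0 then k - 1 else (t : ℕ) - 1)
    (j : Fin n) (hj : k ≤ (j : ℕ)) : k ≤ (π j : ℕ) := by
  by_contra h
  push_neg at h
  by_cases hv : (π j : ℕ) = k - 1
  · have h0 : ((⟨0, by omega⟩ : Fin n) : ℕ) < k := by simp; omega
    have := hC ⟨0, by omega⟩ h0
    simp at this
    have heq : π ⟨0, by omega⟩ = π j := Fin.ext (by rw [this, hv])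
    have := π.injective heq
    have : ((⟨0, by omega⟩ : Fin n) : ℕ) = (j : ℕ) := by rw [this]
    simp at this
    omega
  · have hb : (π j : ℕ) + 1 < k := by omega
    have h0 : ((⟨(π j : ℕ) + 1, by omega⟩ : Fin n) : ℕ) < k := by simp; omega
    have := hC ⟨(π j : ℕ) + 1, by omega⟩ h0
    simp at this
    have heq : π ⟨(π j : ℕ) + 1, by omega⟩ = π j := Fin.ext (by rw [this])
    have := π.injective heq
    have : ((⟨(π j : ℕ) + 1, by omega⟩ : Fin n) : ℕ) = (j : ℕ) := by rw [this]
    simp at this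
    omega

lemma symm_high (n k : ℕ) (hk : 1 ≤ k) (hkn : k ≤ n) (π : Equiv.Perm (Fin n))
    (hC : ∀ t : Fin n, (t : ℕ) < k → (π t : ℕ) = if (t : ℕ) = 0 then k - 1 else (t : ℕ) - 1)
    (j : Fin n) (hj : k ≤ (j : ℕ)) : k ≤ (π.symm j : ℕ) := by
  by_contra h
  push_neg at h
  have h2 := hC (π.symm j) h
  rw [Equiv.apply_symm_apply] at h2
  by_cases h0 : ((π.symm j : Fin n) : ℕ) = 0 <;> simp [h0] at h2 <;> omega

def restrictPerm (n k : ℕ) (hk : 1 ≤ k) (hkn : k ≤ n) (π : Equiv.Perm (Fin n))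
    (hC : ∀ t : Fin n, (t : ℕ) < k → (π t : ℕ) = if (t : ℕ) = 0 then k - 1 else (t : ℕ) - 1) :
    Equiv.Perm (Fin (n - k)) where
  toFun i := ⟨(π ⟨(i : ℕ) + k, by omega⟩ : ℕ) - k, by
    have h1 := high_of_high n k hk hkn π hC ⟨(i : ℕ) + k, by omega⟩ (by simp)
    have h2 := (π ⟨(i : ℕ) + k, by omega⟩).isLt
    omega⟩
  invFun i := ⟨(π.symm ⟨(i : ℕ) + k, by omega⟩ : ℕ) - k, by
    have h1 := symm_high n k hk hkn π hC ⟨(i : ℕ) + k, by omega⟩ (by simp)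
    have h2 := (π.symm ⟨(i : ℕ) + k, by omega⟩).isLt
    omega⟩
  left_inv := by
    intro i
    have h1 := high_of_high n k hk hkn π hC ⟨(i : ℕ) + k, by omega⟩ (by simp)
    apply Fin.ext
    have : (⟨((⟨(π ⟨(i : ℕ) + k, by omega⟩ : ℕ) - k, by
        have h2 := (π ⟨(i : ℕ) + k, by omega⟩).isLt; omega⟩ : Fin (n - k)) : ℕ) + k,
        by have h2 := (π ⟨(i : ℕ) + k, by omega⟩).isLt; omega⟩ : Fin n)
        = π ⟨(i : ℕ) + k, by omega⟩ := Fin.ext (by simp; omega)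
    simp only [this, Equiv.symm_apply_apply]
    simp
  right_inv := by
    intro i
    have h1 := symm_high n k hk hkn π hC ⟨(i : ℕ) + k, by omega⟩ (by simp)
    apply Fin.ext
    have : (⟨((⟨(π.symm ⟨(i : ℕ) + k, by omega⟩ : ℕ) - k, by
        have h2 := (π.symm ⟨(i : ℕ) + k, by omega⟩).isLt; omega⟩ : Fin (n - k)) : ℕ) + k,
        by have h2 := (π.symm ⟨(i : ℕ) + k, by omega⟩).isLt; omega⟩ : Fin n)
        = π.symm ⟨(i : ℕ) + k, by omega⟩ := Fin.ext (by simp; omega)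
    simp only [this, Equiv.apply_symm_apply]
    simp

lemma restrictPerm_val (n k : ℕ) (hk : 1 ≤ k) (hkn : k ≤ n) (π : Equiv.Perm (Fin n))
    (hC : ∀ t : Fin n, (t : ℕ) < k → (π t : ℕ) = if (t : ℕ) = 0 then k - 1 else (t : ℕ) - 1)
    (i : Fin (n - k)) :
    (restrictPerm n k hk hkn π hC i : ℕ) = (π ⟨(i : ℕ) + k, by omega⟩ : ℕ) - k := rfl

open Finset

/-- The number of b₂-regular permutations of `Fin m`. -/
def Bcard (m : ℕ) : ℕ :=
  (univ.filter (fun e : Equiv.Perm (Fin m) => ∀ i : Fin m, (i : ℕ) ≤ (e i : ℕ) + 1)).card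

lemma cycle_count (n k : ℕ) (hk : 1 ≤ k) (hkn : k ≤ n) :
    (univ.filter (fun π : Equiv.Perm (Fin n) =>
        (∀ i : Fin n, (i : ℕ) ≤ (π i : ℕ) + 1) ∧
        ∀ t : Fin n, (t : ℕ) < k →
          (π t : ℕ) = if (t : ℕ) = 0 then k - 1 else (t : ℕ) - 1)).card
      = Bcard (n - k) := by
  unfold Bcard
  apply Finset.card_bij'
    (i := fun π hπ => restrictPerm n k hk hkn π (by
      simp only [mem_filter] at hπ; exact hπ.2.2))
    (j := fun e _ => bigPerm n k hk hkn e)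
  · -- hi : restrictPerm ∈ small filter
    intro π hπ
    simp only [mem_filter, mem_univ, true_and] at hπ ⊢
    intro i
    rw [restrictPerm_val]
    have hb := hπ.1 ⟨(i : ℕ) + k, by omega⟩
    have h1 := high_of_high n k hk hkn π hπ.2 ⟨(i : ℕ) + k, by omega⟩ (by simp)
    simp at hb
    omega
  · -- left_inv : bigPerm (restrictPerm π) = π
    intro π hπ
    simp only [mem_filter, mem_univ, true_and] at hπ
    apply Equiv.ext
    intro j
    apply Fin.ext
    by_cases hj : (j : ℕ) < k
    · rw [bigPerm_val_lt n k hk hkn _ j hj, hπ.2 j hj]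
    · rw [bigPerm_val_ge n k hk hkn _ j hj, restrictPerm_val]
      have harg : (⟨((⟨(j : ℕ) - k, by omega⟩ : Fin (n - k)) : ℕ) + k, by omega⟩ : Fin n)
          = j := Fin.ext (by simp; omega)
      rw [harg]
      have h1 := high_of_high n k hk hkn π hπ.2 j (by omega)
      omega
  · -- right_inv : restrictPerm (bigPerm e) = e
    intro e he
    apply Equiv.ext
    intro i
    apply Fin.ext
    rw [restrictPerm_val]
    rw [bigPerm_val_ge n k hk hkn e ⟨(i : ℕ) + k, by omega⟩ (by simp)]
    have harg : (⟨((⟨(i : ℕ) + k, by omega⟩ : Fin n) : ℕ) - k, by simp⟩ : Fin (n - k))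
        = i := Fin.ext (by simp)
    rw [harg]
    omega
  · -- hj : bigPerm ∈ big filter
    intro e he
    simp only [mem_filter, mem_univ, true_and] at he ⊢
    constructor
    · intro j
      by_cases hj : (j : ℕ) < k
      · rw [bigPerm_val_lt n k hk hkn e j hj]
        by_cases h0 : (j : ℕ) = 0 <;> simp [h0] <;> omega
      · rw [bigPerm_val_ge n k hk hkn e j hj]
        have := he ⟨(j : ℕ) - k, by omega⟩
        simp at this
        omega
    · intro t ht
      rw [bigPerm_val_lt n k hk hkn e t ht]


lemma Bcard_one : Bcard 1 = 1 := by decide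

lemma Bcard_step (m : ℕ) : Bcard (m + 2) = 2 * Bcard (m + 1) := by
  classical
  have fact1 : ∀ π : Equiv.Perm (Fin (m + 2)),
      (∀ i : Fin (m + 2), (i : ℕ) ≤ (π i : ℕ) + 1) → π 0 = 0 ∨ π 1 = 0 := by
    intro π hP
    have ht := hP (π.symm 0)
    rw [Equiv.apply_symm_apply] at ht
    simp at ht
    interval_cases h : ((π.symm 0 : Fin (m + 2)) : ℕ)
    · left
      have h2 : π.symm 0 = 0 := Fin.ext (by simp [h])
      exact ((Equiv.symm_apply_eq π).mp h2).symm
    · right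
      have h2 : π.symm 0 = 1 := Fin.ext (by simp [h])
      exact ((Equiv.symm_apply_eq π).mp h2).symm
  have fact2 : ∀ π : Equiv.Perm (Fin (m + 2)), ¬ (π 0 = 0 ∧ π 1 = 0) := by
    rintro π ⟨h0, h1⟩
    have : (0 : Fin (m + 2)) = 1 := π.injective (h0.trans h1.symm)
    simp at this
  set S0 := univ.filter (fun π : Equiv.Perm (Fin (m + 2)) =>
      (∀ i : Fin (m + 2), (i : ℕ) ≤ (π i : ℕ) + 1) ∧ π 0 = 0) with hS0
  set S1 := univ.filter (fun π : Equiv.Perm (Fin (m + 2)) =>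
      (∀ i : Fin (m + 2), (i : ℕ) ≤ (π i : ℕ) + 1) ∧ π 1 = 0) with hS1
  have hsplit : (univ.filter (fun π : Equiv.Perm (Fin (m + 2)) =>
      ∀ i : Fin (m + 2), (i : ℕ) ≤ (π i : ℕ) + 1)) = S0 ∪ S1 := by
    ext π
    simp only [hS0, hS1, mem_union, mem_filter, mem_univ, true_and]
    constructor
    · intro h
      rcases fact1 π h with h' | h'
      · exact Or.inl ⟨h, h'⟩
      · exact Or.inr ⟨h, h'⟩
    · rintro (⟨h, _⟩ | ⟨h, _⟩) <;> exact h
  have hdisj : Disjoint S0 S1 := by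
    rw [Finset.disjoint_left]
    intro π h0 h1
    simp only [hS0, hS1, mem_filter] at h0 h1
    exact fact2 π ⟨h0.2.2, h1.2.2⟩
  have memswap : ∀ (π : Equiv.Perm (Fin (m + 2))) (i : Fin (m + 2)),
      i ≠ 0 → i ≠ 1 → (π * Equiv.swap 0 1 : Equiv.Perm (Fin (m + 2))) i = π i := by
    intro π i h0 h1
    rw [Equiv.Perm.mul_apply, Equiv.swap_apply_of_ne_of_ne h0 h1]
  have hcard01 : S1.card = S0.card := by
    apply Finset.card_bij' (i := fun π _ => π * Equiv.swap 0 1)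
      (j := fun π _ => π * Equiv.swap 0 1)
    case hi =>
      intro π hπ
      simp only [hS0, hS1, mem_filter, mem_univ, true_and] at hπ ⊢
      constructor
      · intro i
        by_cases h0 : i = 0
        · simp [h0]
        by_cases h1 : i = 1
        · subst h1
          have h2 : (π * Equiv.swap 0 1 : Equiv.Perm (Fin (m + 2))) 1 = π 0 := by
            rw [Equiv.Perm.mul_apply, Equiv.swap_apply_right]
          rw [h2]
          simp
        · rw [memswap π i h0 h1]
          exact hπ.1 i
      · rw [Equiv.Perm.mul_apply, Equiv.swap_apply_left]
        exact hπ.2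
    case hj =>
      intro π hπ
      simp only [hS0, hS1, mem_filter, mem_univ, true_and] at hπ ⊢
      constructor
      · intro i
        by_cases h0 : i = 0
        · simp [h0]
        by_cases h1 : i = 1
        · simp [h1]
        · rw [memswap π i h0 h1]
          exact hπ.1 i
      · rw [Equiv.Perm.mul_apply, Equiv.swap_apply_right]
        exact hπ.2
    case left_inv =>
      intro π _
      rw [mul_assoc, Equiv.swap_mul_self, mul_one]
    case right_inv =>
      intro π _
      rw [mul_assoc, Equiv.swap_mul_self, mul_one]
  have hS0card : S0.card = Bcard (m + 1) := by
    have h1 : S0 = univ.filter (fun π : Equiv.Perm (Fin (m + 2)) =>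
        (∀ i : Fin (m + 2), (i : ℕ) ≤ (π i : ℕ) + 1) ∧
        ∀ t : Fin (m + 2), (t : ℕ) < 1 →
          (π t : ℕ) = if (t : ℕ) = 0 then 1 - 1 else (t : ℕ) - 1) := by
      ext π
      simp only [hS0, mem_filter, mem_univ, true_and]
      constructor
      · rintro ⟨h, h0⟩
        refine ⟨h, ?_⟩
        intro t ht
        have h2 : t = 0 := Fin.ext (by simp only [Fin.val_zero]; omega)
        subst h2
        simp [h0]
      · rintro ⟨h, hC⟩
        refine ⟨h, ?_⟩
        have h3 := hC 0 (by simp)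
        simp at h3
        exact Fin.ext (by simp [h3])
    rw [h1, cycle_count (m + 2) 1 le_rfl (by omega)]
    norm_num
  rw [Bcard, hsplit, Finset.card_union_of_disjoint hdisj, hcard01, hS0card]
  ring

lemma Bcard_pow (m : ℕ) : Bcard (m + 1) = 2 ^ m := by
  induction m with
  | zero => exact Bcard_one
  | succ m ih => rw [show m + 1 + 1 = m + 2 from rfl, Bcard_step, ih, pow_succ]; ring

/-- Fix `1 ≤ k < n`. Among permutations `π` of `{1,...,n}` with
`π(i) ≥ i - 1` for `i ∈ {2,...,n}` (encoded 0-based on `Fin n`), the number of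
permutations containing the unique possible `k`-cycle on the elements `{1,...,k}`
(0-based `{0,...,k-1}`: it maps `t` to `t-1` for `1 ≤ t ≤ k-1` and `0` to `k-1`)
equals `2^(n-k-1)`; hence the probability of this event is `1/2^k`. -/
theorem b2_first_k_cycle_count (n k : ℕ) (hk : 1 ≤ k) (hkn : k < n) :
    (Finset.univ.filter (fun π : Equiv.Perm (Fin n) =>
        (∀ i : Fin n, (i : ℕ) ≤ (π i : ℕ) + 1) ∧
        ∀ t : Fin n, (t : ℕ) < k →
          (π t : ℕ) = if (t : ℕ) = 0 then k - 1 else (t : ℕ) - 1)).card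
      = 2 ^ (n - k - 1) ∧
    ((Finset.univ.filter (fun π : Equiv.Perm (Fin n) =>
        (∀ i : Fin n, (i : ℕ) ≤ (π i : ℕ) + 1) ∧
        ∀ t : Fin n, (t : ℕ) < k →
          (π t : ℕ) = if (t : ℕ) = 0 then k - 1 else (t : ℕ) - 1)).card : ℚ)
        / 2 ^ (n - 1) = 1 / 2 ^ k := by
  have hcount : (Finset.univ.filter (fun π : Equiv.Perm (Fin n) =>
        (∀ i : Fin n, (i : ℕ) ≤ (π i : ℕ) + 1) ∧
        ∀ t : Fin n, (t : ℕ) < k →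
          (π t : ℕ) = if (t : ℕ) = 0 then k - 1 else (t : ℕ) - 1)).card
      = 2 ^ (n - k - 1) := by
    have h1 := Bcard_pow (n - k - 1)
    rw [show (n - k - 1) + 1 = n - k by omega] at h1
    rw [cycle_count n k hk hkn.le, h1]
  refine ⟨hcount, ?_⟩
  rw [hcount]
  have h2 : n - 1 = (n - k - 1) + k := by omega
  rw [h2, pow_add]
  push_cast
  rw [div_eq_div_iff (by positivity) (by positivity), one_mul]
end

section
/- Fix k and j with 2 ≤ j ≤ n - k. Among permutations π of {1,...,n} with π(i) ≥ i - 1 (for i ∈ {2,...,n}), the number of permutations containing the k-cycle on elements {j, j+1, ..., j+k-1} equals 2^(n-k-2); hence the probability that this 'mid' k-cycle occurs is 1/2^(k+1). -/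
open Equiv Finset

def bset (n s k : ℕ) : Finset (Equiv.Perm (Fin n)) :=
  Finset.univ.filter (fun π => (∀ i : Fin n, (i : ℕ) ≤ (π i : ℕ) + 1) ∧
    ∀ t : Fin n, s ≤ (t : ℕ) → (t : ℕ) < s + k →
      (π t : ℕ) = if (t : ℕ) = s then s + k - 1 else (t : ℕ) - 1)

lemma mem_bset {n s k : ℕ} {π : Equiv.Perm (Fin n)} :
    π ∈ bset n s k ↔ (∀ i : Fin n, (i : ℕ) ≤ (π i : ℕ) + 1) ∧
      ∀ t : Fin n, s ≤ (t : ℕ) → (t : ℕ) < s + k →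
        (π t : ℕ) = if (t : ℕ) = s then s + k - 1 else (t : ℕ) - 1 := by
  simp [bset]

def E (n : ℕ) : Equiv.Perm (Fin (n + 1)) ≃ (Option (Fin n) × Equiv.Perm (Fin n)) :=
  (Equiv.permCongr finSuccEquivLast).trans Equiv.Perm.decomposeOption

lemma E_symm_apply (n : ℕ) (p : Option (Fin n)) (e : Equiv.Perm (Fin n)) (a : Fin (n + 1)) :
    (E n).symm (p, e) a =
      finSuccEquivLast.symm ((Equiv.swap none p) ((Equiv.optionCongr e) (finSuccEquivLast a))) := by
  simp [E, Equiv.permCongr, Equiv.Perm.decomposeOption, Equiv.equivCongr, Equiv.Perm.mul_apply]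

lemma E_symm_last (n : ℕ) (p : Option (Fin n)) (e : Equiv.Perm (Fin n)) :
    (((E n).symm (p, e)) (Fin.last n) : ℕ) = Option.elim p n (fun q => (q : ℕ)) := by
  rw [E_symm_apply]
  cases p with
  | none => simp
  | some q => simp

lemma E_symm_castSucc (n : ℕ) (p : Option (Fin n)) (e : Equiv.Perm (Fin n)) (x : Fin n) :
    (((E n).symm (p, e)) (Fin.castSucc x) : ℕ) =
      if some (e x) = p then n else (e x : ℕ) := by
  rw [E_symm_apply]
  rw [finSuccEquivLast_castSucc]
  by_cases h : some (e x) = p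
  · simp [h, Equiv.swap_apply_right]
  · rw [if_neg h]
    simp only [Equiv.optionCongr_apply, Option.map_some]
    rw [Equiv.swap_apply_of_ne_of_ne (by simp) h]
    simp

lemma card_step {α β : Type*} (e : α ≃ β) (S : Finset α) (T : Finset β)
    (h : ∀ b, e.symm b ∈ S ↔ b ∈ T) : S.card = T.card := by
  refine Finset.card_equiv e (fun a => ?_)
  rw [← h (e a), Equiv.symm_apply_apply]
lemma step_mid (n s k : ℕ) (hn : 1 ≤ n) (h : k = 0 ∨ s + k < n) :
    (bset (n + 1) s k).card = 2 * (bset n s k).card := by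
  have hq : n - 1 < n := by omega
  set q : Fin n := ⟨n - 1, hq⟩ with hqdef
  have key : ∀ b : Option (Fin n) × Equiv.Perm (Fin n),
      (E n).symm b ∈ bset (n + 1) s k ↔ b ∈ (({none, some q} : Finset (Option (Fin n))) ×ˢ bset n s k) := by
    rintro ⟨p, e⟩
    rw [mem_bset, Finset.mem_product, mem_bset, Finset.mem_insert, Finset.mem_singleton]
    dsimp only
    constructor
    · rintro ⟨hb2, hbl⟩
      have hp : p = none ∨ p = some q := by
        have hl := hb2 (Fin.last n)
        rw [E_symm_last] at hl
        simp only [Fin.val_last] at hl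
        cases p with
        | none => exact Or.inl rfl
        | some q' =>
          right
          simp only [Option.elim] at hl
          have : (q' : ℕ) = n - 1 := by have := q'.isLt; omega
          congr 1
          exact Fin.ext this
      refine ⟨hp, ?_, ?_⟩
      · intro x
        have hx := hb2 (Fin.castSucc x)
        rw [E_symm_castSucc] at hx
        simp only [Fin.coe_castSucc] at hx
        by_cases hc : some (e x) = p
        · rcases hp with rfl | rfl
          · exact absurd hc (by simp)
          · have h1 : e x = q := Option.some_injective _ hc
            have h2 : (e x : ℕ) = n - 1 := by rw [h1]
            have := x.isLt; omega
        · rw [if_neg hc] at hx; exact hx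
      · intro t hst htk
        have hskn : s + k < n := by rcases h with h | h <;> omega
        have ht := hbl (Fin.castSucc t) (by simpa using hst) (by simpa using htk)
        rw [E_symm_castSucc] at ht
        simp only [Fin.coe_castSucc] at ht
        by_cases hc : some (e t) = p
        · rw [if_pos hc] at ht
          exfalso
          split_ifs at ht <;> omega
        · rw [if_neg hc] at ht; exact ht
    · rintro ⟨hp, hb2, hbl⟩
      constructor
      · intro i
        rcases Fin.eq_castSucc_or_eq_last i with ⟨x, rfl⟩ | rfl
        · rw [E_symm_castSucc]
          simp only [Fin.coe_castSucc]
          by_cases hc : some (e x) = p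
          · rw [if_pos hc]; have := x.isLt; omega
          · rw [if_neg hc]; exact hb2 x
        · rw [E_symm_last]
          simp only [Fin.val_last]
          rcases hp with rfl | rfl
          · simp
          · simp only [Option.elim]; exact (by omega : n ≤ n - 1 + 1)
      · intro t hst htk
        have hskn : s + k < n := by rcases h with h | h <;> omega
        have htn : (t : ℕ) < n := by omega
        obtain ⟨t', rfl⟩ : ∃ t' : Fin n, t = Fin.castSucc t' :=
          ⟨⟨(t : ℕ), htn⟩, by ext; simp⟩
        simp only [Fin.coe_castSucc] at hst htk ⊢
        have hbt := hbl t' hst htk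
        have hne : some (e t') ≠ p := by
          rcases hp with rfl | rfl
          · simp
          · intro hcc
            have h1 : e t' = q := Option.some_injective _ hcc
            have h2 : (e t' : ℕ) = n - 1 := by rw [h1]
            split_ifs at hbt <;> omega
        rw [E_symm_castSucc, if_neg hne]
        exact hbt
  rw [card_step (E n) _ _ key, Finset.card_product, Finset.card_insert_of_notMem (by simp),
    Finset.card_singleton]
lemma step_U (n s k : ℕ) (hk : 1 ≤ k) (h : s + k = n) :
    (bset (n + 1) s k).card = (bset n s k).card := by
  have hsn : s < n := by omega
  have key : ∀ b : Option (Fin n) × Equiv.Perm (Fin n),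
      (E n).symm b ∈ bset (n + 1) s k ↔ b ∈ (({none} : Finset (Option (Fin n))) ×ˢ bset n s k) := by
    rintro ⟨p, e⟩
    rw [mem_bset, Finset.mem_product, mem_bset, Finset.mem_singleton]
    dsimp only
    constructor
    · rintro ⟨hb2, hbl⟩
      have hp : p = none := by
        by_contra hpn
        obtain ⟨q', rfl⟩ := Option.ne_none_iff_exists'.mp hpn
        have hbs := hbl (Fin.castSucc ⟨s, hsn⟩) (by simp) (by simp; omega)
        rw [E_symm_castSucc] at hbs
        simp only [Fin.coe_castSucc, eq_self_iff_true, if_true] at hbs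
        by_cases hc : some (e ⟨s, hsn⟩) = some q'
        · rw [if_pos hc] at hbs; omega
        · rw [if_neg hc] at hbs
          have hql := hb2 (Fin.last n)
          rw [E_symm_last] at hql
          simp only [Fin.val_last, Option.elim] at hql
          have : e ⟨s, hsn⟩ = q' := Fin.ext (by have := q'.isLt; omega)
          exact hc (by rw [this])
      subst hp
      have hval : ∀ x : Fin n, (((E n).symm (none, e)) (Fin.castSucc x) : ℕ) = (e x : ℕ) := by
        intro x; rw [E_symm_castSucc, if_neg (by simp)]
      refine ⟨rfl, ?_, ?_⟩
      · intro x
        have hx := hb2 (Fin.castSucc x)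
        rw [hval] at hx
        simpa using hx
      · intro t hst htk
        have ht := hbl (Fin.castSucc t) (by simpa using hst) (by simpa using htk)
        rw [hval] at ht
        simpa using ht
    · rintro ⟨hp, hb2, hbl⟩
      subst hp
      have hval : ∀ x : Fin n, (((E n).symm (none, e)) (Fin.castSucc x) : ℕ) = (e x : ℕ) := by
        intro x; rw [E_symm_castSucc, if_neg (by simp)]
      constructor
      · intro i
        rcases Fin.eq_castSucc_or_eq_last i with ⟨x, rfl⟩ | rfl
        · rw [hval]; simpa using hb2 x
        · rw [E_symm_last]; simp
      · intro t hst htk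
        have htn : (t : ℕ) < n := by omega
        obtain ⟨t', rfl⟩ : ∃ t' : Fin n, t = Fin.castSucc t' :=
          ⟨⟨(t : ℕ), htn⟩, by ext; simp⟩
        rw [hval]
        simp only [Fin.coe_castSucc] at hst htk ⊢
        exact hbl t' hst htk
  rw [card_step (E n) _ _ key, Finset.card_product, Finset.card_singleton, one_mul]

lemma step_T (n s k : ℕ) (hk : 2 ≤ k) (h : s + k = n + 1) :
    (bset (n + 1) s k).card = (bset n s (k - 1)).card := by
  have hn1 : 1 ≤ n := by omega
  have hsn : s < n := by omega
  have hq : n - 1 < n := by omega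
  set q : Fin n := ⟨n - 1, hq⟩ with hqdef
  have hqv : (q : ℕ) = n - 1 := rfl
  have key : ∀ b : Option (Fin n) × Equiv.Perm (Fin n),
      (E n).symm b ∈ bset (n + 1) s k ↔
        b ∈ (({some q} : Finset (Option (Fin n))) ×ˢ bset n s (k - 1)) := by
    rintro ⟨p, e⟩
    rw [mem_bset, Finset.mem_product, mem_bset, Finset.mem_singleton]
    dsimp only
    constructor
    · rintro ⟨hb2, hbl⟩
      have hlast := hbl (Fin.last n) (by simp; omega) (by simp; omega)
      rw [E_symm_last] at hlast
      simp only [Fin.val_last] at hlast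
      rw [if_neg (by omega)] at hlast
      have hp : p = some q := by
        cases p with
        | none => simp only [Option.elim] at hlast; omega
        | some q' =>
          simp only [Option.elim] at hlast
          congr 1
          exact Fin.ext (show (q' : ℕ) = n - 1 by omega)
      subst hp
      refine ⟨rfl, ?_, ?_⟩
      · intro x
        have hx := hb2 (Fin.castSucc x)
        rw [E_symm_castSucc] at hx
        simp only [Fin.coe_castSucc] at hx
        by_cases hc : some (e x) = some q
        · have h1 : e x = q := Option.some_injective _ hc
          have h2 : (e x : ℕ) = n - 1 := by rw [h1]
          have := x.isLt; omega
        · rw [if_neg hc] at hx; exact hx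
      · intro t hst htk
        have ht := hbl (Fin.castSucc t) (by simpa using hst)
          (by simp only [Fin.coe_castSucc]; omega)
        rw [E_symm_castSucc] at ht
        simp only [Fin.coe_castSucc] at ht
        by_cases hc : some (e t) = some q
        · rw [if_pos hc] at ht
          have h1 : e t = q := Option.some_injective _ hc
          have h2 : (e t : ℕ) = n - 1 := by rw [h1]
          split_ifs at ht with hts
          · rw [if_pos hts]; omega
          · exfalso; omega
        · rw [if_neg hc] at ht
          split_ifs at ht with hts
          · exfalso
            -- value = s + k - 1 = n, but e t < n
            have := (e t).isLt; omega
          · rw [if_neg hts]; omega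
    · rintro ⟨hp, hb2, hbl⟩
      subst hp
      constructor
      · intro i
        rcases Fin.eq_castSucc_or_eq_last i with ⟨x, rfl⟩ | rfl
        · rw [E_symm_castSucc]
          simp only [Fin.coe_castSucc]
          by_cases hc : some (e x) = some q
          · rw [if_pos hc]; have := x.isLt; omega
          · rw [if_neg hc]; exact hb2 x
        · rw [E_symm_last]
          simp only [Fin.val_last, Option.elim]
          omega
      · intro t hst htk
        rcases Fin.eq_castSucc_or_eq_last t with ⟨t', rfl⟩ | rfl
        · simp only [Fin.coe_castSucc] at hst htk ⊢
          have hbt := hbl t' hst (by omega)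
          rw [E_symm_castSucc]
          by_cases hts : (t' : ℕ) = s
          · rw [if_pos hts] at hbt ⊢
            have h1 : e t' = q := Fin.ext (by rw [hbt]; omega)
            rw [if_pos (by rw [h1])]
            omega
          · rw [if_neg hts] at hbt ⊢
            have hc : some (e t') ≠ some q := by
              intro hcc
              have h1 : e t' = q := Option.some_injective _ hcc
              have h2 : (e t' : ℕ) = n - 1 := by rw [h1]
              omega
            rw [if_neg hc]
            exact hbt
        · rw [E_symm_last]
          simp only [Fin.val_last, Option.elim]
          rw [if_neg (by omega)]
  rw [card_step (E n) _ _ key, Finset.card_product, Finset.card_singleton, one_mul]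

lemma step_T1 (n : ℕ) : (bset (n + 1) n 1).card = (bset n 0 0).card := by
  have key : ∀ b : Option (Fin n) × Equiv.Perm (Fin n),
      (E n).symm b ∈ bset (n + 1) n 1 ↔
        b ∈ (({none} : Finset (Option (Fin n))) ×ˢ bset n 0 0) := by
    rintro ⟨p, e⟩
    rw [mem_bset, Finset.mem_product, mem_bset, Finset.mem_singleton]
    dsimp only
    constructor
    · rintro ⟨hb2, hbl⟩
      have hlast := hbl (Fin.last n) (by simp) (by simp)
      rw [E_symm_last] at hlast
      simp only [Fin.val_last, eq_self_iff_true, if_true] at hlast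
      have hp : p = none := by
        cases p with
        | none => rfl
        | some q' => simp only [Option.elim] at hlast; have := q'.isLt; omega
      subst hp
      refine ⟨rfl, ?_, fun t h0 h1 => absurd (lt_of_le_of_lt h0 h1) (by omega)⟩
      intro x
      have hx := hb2 (Fin.castSucc x)
      rw [E_symm_castSucc, if_neg (by simp)] at hx
      simpa using hx
    · rintro ⟨hp, hb2, _⟩
      subst hp
      constructor
      · intro i
        rcases Fin.eq_castSucc_or_eq_last i with ⟨x, rfl⟩ | rfl
        · rw [E_symm_castSucc, if_neg (by simp)]
          simpa using hb2 x
        · rw [E_symm_last]; simp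
      · intro t hst htk
        have ht : t = Fin.last n := Fin.ext (by simpa using le_antisymm (by omega) hst)
        subst ht
        rw [E_symm_last]
        simp
  rw [card_step (E n) _ _ key, Finset.card_product, Finset.card_singleton, one_mul]
lemma count0 (n : ℕ) (hn : 1 ≤ n) : (bset n 0 0).card = 2 ^ (n - 1) := by
  induction n with
  | zero => omega
  | succ m ih =>
    rcases Nat.eq_or_lt_of_le hn with h1 | h1
    · have hm : m = 0 := by omega
      subst hm
      have : bset 1 0 0 = Finset.univ := by
        apply Finset.eq_univ_iff_forall.mpr
        intro π
        rw [mem_bset]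
        exact ⟨fun i => by omega, fun t h0 h1 => by omega⟩
      rw [this]
      simp [Finset.card_univ]
    · have hm : 1 ≤ m := by omega
      rw [step_mid m 0 0 hm (Or.inl rfl), ih hm]
      rw [← pow_succ']
      congr 1
      omega

lemma countT (k s : ℕ) (hk : 1 ≤ k) (hs : 1 ≤ s) :
    (bset (s + k) s k).card = 2 ^ (s - 1) := by
  induction k with
  | zero => omega
  | succ m ih =>
    rcases Nat.eq_or_lt_of_le hk with h1 | h1
    · have hm : m = 0 := by omega
      subst hm
      rw [step_T1 s, count0 s hs]
    · have hm : 1 ≤ m := by omega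
      have := step_T (s + m) s (m + 1) (by omega) (by omega)
      rw [show s + (m + 1) = s + m + 1 from by omega] at *
      rw [this]
      simpa using ih hm

lemma count_main (m s k : ℕ) (hk : 1 ≤ k) (hs : 1 ≤ s) :
    (bset (s + k + 1 + m) s k).card = 2 ^ (s - 1 + m) := by
  induction m with
  | zero =>
    rw [show s + k + 1 + 0 = (s + k) + 1 from by omega, step_U (s + k) s k hk rfl,
      countT k s hk hs, add_zero]
  | succ m ih =>
    rw [show s + k + 1 + (m + 1) = (s + k + 1 + m) + 1 from by omega,
      step_mid (s + k + 1 + m) s k (by omega) (Or.inr (by omega)), ih, ← pow_succ']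
    congr 1
    try omega

/-- Fix `1 ≤ k` and `2 ≤ j` with `j + k ≤ n` (so the block
`{j,...,j+k-1}` of 1-based elements touches neither `1` nor `n`). Among permutations
`π` of `{1,...,n}` with `π(i) ≥ i - 1` for `i ∈ {2,...,n}` (encoded 0-based on
`Fin n`, block start `s = j - 1`), the number of permutations containing the unique
possible `k`-cycle on `{j,...,j+k-1}` (it maps `m` to `m-1` for `j+1 ≤ m ≤ j+k-1`
and `j` to `j+k-1`) equals `2^(n-k-2)`; hence the probability is `1/2^(k+1)`. -/
theorem b2_mid_k_cycle_count (n k j : ℕ) (hk : 1 ≤ k) (hj : 2 ≤ j) (hjk : j + k ≤ n) :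
    (Finset.univ.filter (fun π : Equiv.Perm (Fin n) =>
        (∀ i : Fin n, (i : ℕ) ≤ (π i : ℕ) + 1) ∧
        ∀ t : Fin n, j - 1 ≤ (t : ℕ) → (t : ℕ) < j - 1 + k →
          (π t : ℕ) = if (t : ℕ) = j - 1 then j - 1 + k - 1 else (t : ℕ) - 1)).card
      = 2 ^ (n - k - 2) ∧
    ((Finset.univ.filter (fun π : Equiv.Perm (Fin n) =>
        (∀ i : Fin n, (i : ℕ) ≤ (π i : ℕ) + 1) ∧
        ∀ t : Fin n, j - 1 ≤ (t : ℕ) → (t : ℕ) < j - 1 + k →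
          (π t : ℕ) = if (t : ℕ) = j - 1 then j - 1 + k - 1 else (t : ℕ) - 1)).card : ℚ)
        / 2 ^ (n - 1) = 1 / 2 ^ (k + 1) := by
  have hset : (Finset.univ.filter (fun π : Equiv.Perm (Fin n) =>
        (∀ i : Fin n, (i : ℕ) ≤ (π i : ℕ) + 1) ∧
        ∀ t : Fin n, j - 1 ≤ (t : ℕ) → (t : ℕ) < j - 1 + k →
          (π t : ℕ) = if (t : ℕ) = j - 1 then j - 1 + k - 1 else (t : ℕ) - 1))
      = bset n (j - 1) k := rfl
  rw [hset]
  obtain ⟨m, rfl⟩ : ∃ m, n = (j - 1) + k + 1 + m := ⟨n - j - k, by omega⟩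
  have hcard := count_main m (j - 1) k hk (by omega)
  rw [hcard]
  constructor
  · congr 1
    omega
  · have hden : ((2 : ℚ) ^ (j - 1 + k + 1 + m - 1)) = 2 ^ (j - 1 - 1 + m) * 2 ^ (k + 1) := by
      rw [← pow_add]
      congr 1
      omega
    rw [Nat.cast_pow, Nat.cast_ofNat, hden, div_mul_eq_div_div, div_self (by positivity)]
end

section
/- Let I_i denote the indicator of the event that the k-cycle on consecutive elements {i, ..., i+k-1} is a cycle of a uniformly random permutation π of {1,...,n} with π(m) ≥ m - 1 for m ∈ {2,...,n}. If |i - j| > k + 1, then the random variables I_i and I_j are independent, i.e., P(I_i = 1 and I_j = 1) = P(I_i = 1)·P(I_j = 1). -/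
open scoped Classical

/-- The b₂-restriction `π(i) ≥ i - 1` for `i ∈ {2,...,n}`, encoded 0-based on `Fin n`. -/
def IsB2 {n : ℕ} (π : Equiv.Perm (Fin n)) : Prop :=
  ∀ i : Fin n, (i : ℕ) ≤ (π i : ℕ) + 1

/-- The event that the unique possible `k`-cycle on the block of consecutive elements
`{s, s+1, ..., s+k-1}` (0-based; 1-based block `{s+1,...,s+k}`) is a cycle of `π`:
it maps `t` to `t-1` for `s < t ≤ s+k-1` and maps `s` to `s+k-1`. -/
def BlockCycle (n k s : ℕ) (π : Equiv.Perm (Fin n)) : Prop :=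
  ∀ t : Fin n, s ≤ (t : ℕ) → (t : ℕ) < s + k →
    (π t : ℕ) = if (t : ℕ) = s then s + k - 1 else (t : ℕ) - 1

namespace B2Aux

/-- Extension of a Boolean pattern on `Fin (n-1)` to `ℕ`, false outside. -/
def Gb (n : ℕ) (g : Fin (n-1) → Bool) (p : ℕ) : Bool :=
  if h : p < n - 1 then g ⟨p, h⟩ else false

lemma Gb_false_of_le {n : ℕ} {g : Fin (n-1) → Bool} {p : ℕ} (h : n - 1 ≤ p) :
    Gb n g p = false := dif_neg (by omega)

lemma bend_ex (n : ℕ) (g : Fin (n-1) → Bool) (t : ℕ) :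
    ∃ e, t ≤ e ∧ Gb n g e = false :=
  ⟨max t (n-1), le_max_left _ _, Gb_false_of_le (le_max_right _ _)⟩

/-- The end of the block starting at `t`. -/
noncomputable def bend (n : ℕ) (g : Fin (n-1) → Bool) (t : ℕ) : ℕ :=
  Nat.find (bend_ex n g t)

lemma le_bend (n : ℕ) (g : Fin (n-1) → Bool) (t : ℕ) : t ≤ bend n g t :=
  (Nat.find_spec (bend_ex n g t)).1

lemma Gb_bend (n : ℕ) (g : Fin (n-1) → Bool) (t : ℕ) : Gb n g (bend n g t) = false :=
  (Nat.find_spec (bend_ex n g t)).2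

lemma bend_le {n : ℕ} {g : Fin (n-1) → Bool} {t e : ℕ} (h1 : t ≤ e)
    (h2 : Gb n g e = false) : bend n g t ≤ e :=
  Nat.find_min' _ ⟨h1, h2⟩

lemma Gb_of_lt_bend {n : ℕ} {g : Fin (n-1) → Bool} {t p : ℕ} (h1 : t ≤ p)
    (h2 : p < bend n g t) : Gb n g p = true := by
  have := Nat.find_min (bend_ex n g t) h2
  simp only [not_and] at this
  have := this h1
  simpa using this

lemma bend_le_n {n : ℕ} {g : Fin (n-1) → Bool} {t : ℕ} (h : t ≤ n - 1) :
    bend n g t ≤ n - 1 :=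
  bend_le h (Gb_false_of_le le_rfl)

/-- The canonical b₂ permutation (as a function on ℕ) with pattern `g`. -/
noncomputable def sigf (n : ℕ) (g : Fin (n-1) → Bool) (t : ℕ) : ℕ :=
  if 1 ≤ t ∧ Gb n g (t-1) = true then t - 1 else bend n g t

lemma sigf_lt {n : ℕ} {g : Fin (n-1) → Bool} {t : ℕ} (ht : t < n) :
    sigf n g t < n := by
  unfold sigf
  split
  · omega
  · have := bend_le_n (g := g) (show t ≤ n - 1 by omega)
    omega

lemma le_sigf_add_one (n : ℕ) (g : Fin (n-1) → Bool) (t : ℕ) :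
    t ≤ sigf n g t + 1 := by
  unfold sigf
  split
  · omega
  · have := le_bend n g t; omega

lemma sigf_inj {n : ℕ} {g : Fin (n-1) → Bool} {a b : ℕ} (ha : a < n) (hb : b < n)
    (h : sigf n g a = sigf n g b) : a = b := by
  unfold sigf at h
  split_ifs at h with h1 h2 h2
  · omega
  · -- a-1 = bend b, Gb (a-1) = true but Gb (bend b) = false
    exfalso
    have := Gb_bend n g b
    rw [← h] at this
    rw [h1.2] at this
    exact absurd this (by simp)
  · exfalso
    have := Gb_bend n g a
    rw [h] at this
    rw [h2.2] at this
    exact absurd this (by simp)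
  · -- both starts
    by_contra hne
    rcases Nat.lt_or_ge a b with hab | hab
    · -- b start, b ≥ 1 so Gb (b-1) = false
      have hGb : Gb n g (b-1) = false := by
        rcases Bool.eq_false_or_eq_true (Gb n g (b-1)) with h' | h'
        · exact absurd ⟨by omega, h'⟩ h2
        · exact h'
      have : bend n g a ≤ b - 1 := bend_le (by omega) hGb
      have := le_bend n g b
      omega
    · have hab' : b < a := by omega
      have hGa : Gb n g (a-1) = false := by
        rcases Bool.eq_false_or_eq_true (Gb n g (a-1)) with h' | h'
        · exact absurd ⟨by omega, h'⟩ h1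
        · exact h'
      have : bend n g b ≤ a - 1 := bend_le (by omega) hGa
      have := le_bend n g a
      omega

/-- The canonical b₂ permutation with pattern `g`. -/
noncomputable def permOf (n : ℕ) (g : Fin (n-1) → Bool) : Equiv.Perm (Fin n) :=
  Equiv.ofBijective (fun t => ⟨sigf n g t.1, sigf_lt t.2⟩)
    ((Finite.injective_iff_bijective).1
      (fun a b hab => Fin.ext (sigf_inj a.2 b.2 (congrArg Fin.val hab))))

lemma permOf_apply (n : ℕ) (g : Fin (n-1) → Bool) (t : Fin n) :
    ((permOf n g t : Fin n) : ℕ) = sigf n g t.1 := rfl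

lemma isB2_permOf (n : ℕ) (g : Fin (n-1) → Bool) : IsB2 (permOf n g) :=
  fun t => by rw [permOf_apply]; exact le_sigf_add_one n g t.1

/-- Descent pattern of a permutation. -/
def Dmap {n : ℕ} (π : Equiv.Perm (Fin n)) : Fin (n-1) → Bool :=
  fun p => decide (π ⟨p.1+1, by have := p.isLt; omega⟩ = ⟨p.1, by have := p.isLt; omega⟩)

lemma Gb_Dmap_true_iff {n : ℕ} (π : Equiv.Perm (Fin n)) {p : ℕ} (h : p < n - 1) :
    Gb n (Dmap π) p = true ↔ π ⟨p+1, by omega⟩ = ⟨p, by omega⟩ := by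
  rw [Gb, dif_pos h]
  exact decide_eq_true_iff

end B2Aux
namespace B2Aux

lemma isB2_eq_sigf {n : ℕ} {π : Equiv.Perm (Fin n)} (hπ : IsB2 π) :
    ∀ t (ht : t < n), ((π ⟨t, ht⟩ : Fin n) : ℕ) = sigf n (Dmap π) t := by
  intro t
  induction t using Nat.strong_induction_on with
  | _ t IH =>
  intro ht
  by_cases hcase : 1 ≤ t ∧ Gb n (Dmap π) (t-1) = true
  · obtain ⟨h1, h2⟩ := hcase
    have htn : t - 1 < n - 1 := by omega
    have heq := (Gb_Dmap_true_iff π htn).1 h2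
    have ht1 : t - 1 + 1 = t := by omega
    have : π ⟨t, ht⟩ = ⟨t - 1, by omega⟩ := by
      convert heq using 2
      exact Fin.ext ht1.symm
    rw [this]
    unfold sigf
    rw [if_pos ⟨h1, h2⟩]
  · -- t is a block start; show π t = bend t
    set g := Dmap π with hg
    set e := bend n g t with he
    have hte : t ≤ e := le_bend n g t
    have hen : e ≤ n - 1 := bend_le_n (by omega)
    have hen' : e < n := by omega
    set x := π.symm ⟨e, hen'⟩ with hx
    have hπx : π x = ⟨e, hen'⟩ := Equiv.apply_symm_apply π _
    -- x ≤ e + 1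
    have hxe : x.1 ≤ e + 1 := by have := hπ x; rw [hπx] at this; exact this
    -- x ∉ (t, e]
    have hmid : ∀ p, t ≤ p → p < e → x.1 ≠ p + 1 := by
      intro p hp1 hp2 hxp
      have hpn : p < n - 1 := by omega
      have : Gb n g p = true := Gb_of_lt_bend hp1 hp2
      have heq := (Gb_Dmap_true_iff π hpn).1 this
      have hxeq : (⟨p+1, by omega⟩ : Fin n) = x := Fin.ext hxp.symm
      have : π ⟨p+1, by omega⟩ = ⟨e, hen'⟩ := by rw [hxeq]; exact hπx
      have h2 := heq.symm.trans this
      have := congrArg Fin.val h2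
      simp at this; omega
    -- x ≠ e + 1
    have hxe1 : x.1 ≠ e + 1 := by
      intro hxp
      have hpn : e < n - 1 := by omega
      have hfalse : Gb n g e = false := Gb_bend n g t
      have hxeq : (⟨e+1, by omega⟩ : Fin n) = x := Fin.ext hxp.symm
      have : π ⟨e+1, by omega⟩ = ⟨e, hen'⟩ := by rw [hxeq]; exact hπx
      have h2 : Gb n (Dmap π) e = true := (Gb_Dmap_true_iff π hpn).2 this
      rw [← hg, hfalse] at h2; simp at h2
    -- ¬ x < t
    have hxt : ¬ x.1 < t := by
      intro hlt
      have hIH := IH x.1 hlt x.isLt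
      have : π ⟨x.1, x.isLt⟩ = ⟨e, hen'⟩ := by
        rw [show (⟨x.1, x.isLt⟩ : Fin n) = x from Fin.ext rfl]; exact hπx
      have hIH2 := (congrArg Fin.val this).symm.trans hIH
      have hIH3 : e = sigf n g x.1 := hIH2
      -- hIH : e = sigf n g x.1 ; show sigf n g x.1 < e
      have ht1 : 1 ≤ t := by omega
      have hGt : Gb n g (t-1) = false := by
        rcases Bool.eq_false_or_eq_true (Gb n g (t-1)) with h' | h'
        · exact absurd ⟨ht1, h'⟩ hcase
        · exact h'
      have hlt' : sigf n g x.1 < e := by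
        unfold sigf
        split
        · omega
        · have : bend n g x.1 ≤ t - 1 := bend_le (by omega) hGt
          omega
      omega
    have hxt' : x.1 = t := by
      by_contra hne
      have h1 : t < x.1 := by omega
      have h2 : x.1 ≤ e + 1 := hxe
      rcases Nat.lt_or_ge (x.1 - 1) e with h3 | h3
      · exact hmid (x.1 - 1) (by omega) h3 (by omega)
      · exact hxe1 (by omega)
    have hxeq2 : (⟨t, ht⟩ : Fin n) = x := Fin.ext hxt'.symm
    have : π ⟨t, ht⟩ = ⟨e, hen'⟩ := by rw [hxeq2]; exact hπx
    rw [this]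
    unfold sigf
    rw [if_neg hcase]

lemma Dmap_permOf (n : ℕ) (g : Fin (n-1) → Bool) : Dmap (permOf n g) = g := by
  funext p
  have hpn := p.isLt
  have hGb : Gb n g p.1 = g p := by rw [Gb, dif_pos hpn]
  have hval : ((permOf n g ⟨p.1+1, by omega⟩ : Fin n) : ℕ) = sigf n g (p.1+1) :=
    permOf_apply n g _
  unfold Dmap
  rcases Bool.eq_false_or_eq_true (g p) with hgp | hgp
  · rw [hgp]
    have hsig : sigf n g (p.1+1) = p.1 := by
      unfold sigf
      rw [if_pos]
      · omega
      · exact ⟨by omega, by simpa [hGb] using hgp⟩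
    refine decide_eq_true ?_
    exact Fin.ext (hval.trans hsig)
  · rw [hgp]
    have hsig : sigf n g (p.1+1) = bend n g (p.1+1) := by
      unfold sigf
      rw [if_neg]
      intro hc
      rw [Nat.add_sub_cancel, hGb, hgp] at hc
      exact absurd hc.2 (by simp)
    have hle : p.1+1 ≤ bend n g (p.1+1) := le_bend n g _
    refine decide_eq_false ?_
    intro hcon
    have := congrArg Fin.val hcon
    rw [hval, hsig] at this
    simp at this
    omega

lemma permOf_Dmap {n : ℕ} {π : Equiv.Perm (Fin n)} (hπ : IsB2 π) :
    permOf n (Dmap π) = π := by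
  apply Equiv.ext
  intro t
  apply Fin.ext
  have h1 : ((permOf n (Dmap π) t : Fin n) : ℕ) = sigf n (Dmap π) t.1 := permOf_apply n _ t
  have h2 := isB2_eq_sigf hπ t.1 t.isLt
  rw [h1]
  rw [show (⟨t.1, t.isLt⟩ : Fin n) = t from Fin.ext rfl] at h2
  exact h2.symm

/-- The window condition on the pattern corresponding to `BlockCycle n k s`. -/
def Cnd (n k s : ℕ) (g : Fin (n-1) → Bool) : Prop :=
  ∀ p : Fin (n-1), s ≤ p.1 + 1 → p.1 ≤ s + k - 1 →
    g p = decide (s ≤ p.1 ∧ p.1 + 1 < s + k)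

lemma Gb_eq_apply {n : ℕ} (g : Fin (n-1) → Bool) (p : Fin (n-1)) :
    Gb n g p.1 = g p := by
  rw [Gb, dif_pos p.isLt]

lemma Cnd_spec {n k s : ℕ} {g : Fin (n-1) → Bool} (hC : Cnd n k s g)
    (q : ℕ) (hq : q < n-1) (h1 : s ≤ q+1) (h2 : q ≤ s+k-1) :
    Gb n g q = decide (s ≤ q ∧ q+1 < s+k) := by
  rw [Gb, dif_pos hq]
  exact hC ⟨q, hq⟩ h1 h2

lemma blockCycle_iff {n k s : ℕ} (hk : 1 ≤ k) (hs : s + k ≤ n)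
    {π : Equiv.Perm (Fin n)} (hπ : IsB2 π) :
    BlockCycle n k s π ↔ Cnd n k s (Dmap π) := by
  have hsn : s < n := by omega
  constructor
  · intro hB p hp1 hp2
    have hpn := p.isLt
    have hBspec : ∀ (q : ℕ) (hq : q < n), s ≤ q → q < s + k →
        ((π ⟨q, hq⟩ : Fin n) : ℕ) = if q = s then s+k-1 else q - 1 :=
      fun q hq h1 h2 => hB ⟨q, hq⟩ h1 h2
    have hD : Dmap π p = decide (π ⟨p.1+1, by omega⟩ = ⟨p.1, by omega⟩) := rfl
    rw [hD, decide_eq_decide]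
    constructor
    · intro hcon
      by_contra hin
      have hin' : ¬ (s ≤ p.1) ∨ ¬ (p.1+1 < s+k) := not_and_or.mp hin
      by_cases hc : p.1 + 1 = s
      · have h1 := hBspec s hsn le_rfl (by omega)
        rw [if_pos rfl] at h1
        have h2 : ((π ⟨s, hsn⟩ : Fin n) : ℕ) = p.1 := by
          rw [show (⟨s, hsn⟩ : Fin n) = ⟨p.1+1, by omega⟩ from Fin.ext hc.symm, hcon]
        omega
      · have hc2 : s ≤ p.1 ∧ p.1 + 1 = s + k := by omega
        have hskn : s+k-1 < n := by omega
        have h1 := hBspec s hsn le_rfl (by omega)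
        rw [if_pos rfl] at h1
        have h2 : π ⟨s, hsn⟩ = ⟨s+k-1, hskn⟩ := Fin.ext h1
        have h3 : π ⟨p.1+1, by omega⟩ = ⟨s+k-1, hskn⟩ := by
          rw [hcon]; exact Fin.ext (by simp only []; omega)
        have h4 := π.injective (h3.trans h2.symm)
        rw [Fin.mk.injEq] at h4
        omega
    · intro hin
      have h1 := hBspec (p.1+1) (by omega) (by omega) hin.2
      rw [if_neg (by omega)] at h1
      refine Fin.ext (show ((π ⟨p.1+1, by omega⟩ : Fin n) : ℕ) = p.1 from h1.trans (by omega))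
  · intro hC t ht1 ht2
    have htn := t.isLt
    have hval := isB2_eq_sigf hπ t.1 t.isLt
    rw [show (⟨t.1, t.isLt⟩ : Fin n) = t from Fin.ext rfl] at hval
    by_cases hts : t.1 = s
    · rw [if_pos hts, hval]
      have hstart : ¬ (1 ≤ t.1 ∧ Gb n (Dmap π) (t.1-1) = true) := by
        rintro ⟨h1, h2⟩
        have hlt : t.1 - 1 < n - 1 := by omega
        have := Cnd_spec hC (t.1-1) hlt (by omega) (by omega)
        rw [decide_eq_false (by omega)] at this
        rw [this] at h2
        exact absurd h2 (by simp)
      have hGfalse : Gb n (Dmap π) (s+k-1) = false := by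
        by_cases hlt : s+k-1 < n-1
        · have := Cnd_spec hC (s+k-1) hlt (by omega) (by omega)
          rw [decide_eq_false (by omega)] at this
          exact this
        · exact Gb_false_of_le (by omega)
      have hGtrue : ∀ q, s ≤ q → q < s+k-1 → Gb n (Dmap π) q = true := by
        intro q hq1 hq2
        have hlt : q < n - 1 := by omega
        have := Cnd_spec hC q hlt (by omega) (by omega)
        rw [decide_eq_true (by omega : s ≤ q ∧ q+1 < s+k)] at this
        exact this
      have hbend : bend n (Dmap π) t.1 = s + k - 1 := by
        apply le_antisymm
        · exact bend_le (by omega) hGfalse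
        · by_contra hcon
          have h1 : s ≤ bend n (Dmap π) t.1 := by
            have := le_bend n (Dmap π) t.1; omega
          have := hGtrue _ h1 (by omega)
          rw [Gb_bend] at this
          exact absurd this (by simp)
      unfold sigf
      rw [if_neg hstart, hbend]
    · rw [if_neg hts, hval]
      have h1 : s + 1 ≤ t.1 := by omega
      have hlt : t.1 - 1 < n - 1 := by omega
      have hGt := Cnd_spec hC (t.1-1) hlt (by omega) (by omega)
      rw [decide_eq_true (by omega : s ≤ t.1-1 ∧ t.1-1+1 < s+k)] at hGt
      unfold sigf
      rw [if_pos ⟨by omega, hGt⟩]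

end B2Aux
namespace B2Aux

noncomputable def equivOne (n k s : ℕ) (hk : 1 ≤ k) (hs : s + k ≤ n) :
    {π : Equiv.Perm (Fin n) // IsB2 π ∧ BlockCycle n k s π} ≃
      {g : Fin (n-1) → Bool // Cnd n k s g} where
  toFun x := ⟨Dmap x.1, (blockCycle_iff hk hs x.2.1).1 x.2.2⟩
  invFun g := ⟨permOf n g.1, isB2_permOf n g.1,
    (blockCycle_iff hk hs (isB2_permOf n g.1)).2 (by rw [Dmap_permOf]; exact g.2)⟩
  left_inv x := Subtype.ext (permOf_Dmap x.2.1)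
  right_inv g := Subtype.ext (Dmap_permOf n g.1)

noncomputable def equivTwo (n k s1 s2 : ℕ) (hk : 1 ≤ k) (hs1 : s1 + k ≤ n)
    (hs2 : s2 + k ≤ n) :
    {π : Equiv.Perm (Fin n) // IsB2 π ∧ BlockCycle n k s1 π ∧ BlockCycle n k s2 π} ≃
      {g : Fin (n-1) → Bool // Cnd n k s1 g ∧ Cnd n k s2 g} where
  toFun x := ⟨Dmap x.1, (blockCycle_iff hk hs1 x.2.1).1 x.2.2.1,
    (blockCycle_iff hk hs2 x.2.1).1 x.2.2.2⟩
  invFun g := ⟨permOf n g.1, isB2_permOf n g.1,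
    (blockCycle_iff hk hs1 (isB2_permOf n g.1)).2 (by rw [Dmap_permOf]; exact g.2.1),
    (blockCycle_iff hk hs2 (isB2_permOf n g.1)).2 (by rw [Dmap_permOf]; exact g.2.2)⟩
  left_inv x := Subtype.ext (permOf_Dmap x.2.1)
  right_inv g := Subtype.ext (Dmap_permOf n g.1)

noncomputable def swapEquiv (n k s1 s2 : ℕ)
    (hsep : ∀ p : ℕ, ¬(s1 ≤ p+1 ∧ p ≤ s1+k-1 ∧ s2 ≤ p+1 ∧ p ≤ s2+k-1)) :
    ({g : Fin (n-1) → Bool // Cnd n k s1 g ∧ Cnd n k s2 g} × (Fin (n-1) → Bool)) ≃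
      ({g : Fin (n-1) → Bool // Cnd n k s1 g} × {g : Fin (n-1) → Bool // Cnd n k s2 g}) where
  toFun x :=
    (⟨fun p => if s2 ≤ p.1+1 ∧ p.1 ≤ s2+k-1 then x.2 p else x.1.1 p, by
        intro p hp1 hp2
        beta_reduce
        rw [if_neg (fun h => hsep p.1 ⟨hp1, hp2, h.1, h.2⟩)]
        exact x.1.2.1 p hp1 hp2⟩,
     ⟨fun p => if s2 ≤ p.1+1 ∧ p.1 ≤ s2+k-1 then x.1.1 p else x.2 p, by
        intro p hp1 hp2
        beta_reduce
        rw [if_pos ⟨hp1, hp2⟩]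
        exact x.1.2.2 p hp1 hp2⟩)
  invFun y :=
    (⟨fun p => if s2 ≤ p.1+1 ∧ p.1 ≤ s2+k-1 then y.2.1 p else y.1.1 p,
      ⟨by
        intro p hp1 hp2
        beta_reduce
        rw [if_neg (fun h => hsep p.1 ⟨hp1, hp2, h.1, h.2⟩)]
        exact y.1.2 p hp1 hp2,
       by
        intro p hp1 hp2
        beta_reduce
        rw [if_pos ⟨hp1, hp2⟩]
        exact y.2.2 p hp1 hp2⟩⟩,
     fun p => if s2 ≤ p.1+1 ∧ p.1 ≤ s2+k-1 then y.1.1 p else y.2.1 p)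
  left_inv x := by
    obtain ⟨⟨f, hf⟩, h⟩ := x
    refine Prod.ext ?_ ?_
    · apply Subtype.ext
      funext p
      by_cases hp : s2 ≤ p.1+1 ∧ p.1 ≤ s2+k-1 <;> simp [hp]
    · funext p
      by_cases hp : s2 ≤ p.1+1 ∧ p.1 ≤ s2+k-1 <;> simp [hp]
  right_inv y := by
    obtain ⟨⟨g1, h1⟩, ⟨g2, h2⟩⟩ := y
    refine Prod.ext ?_ ?_
    · apply Subtype.ext
      funext p
      by_cases hp : s2 ≤ p.1+1 ∧ p.1 ≤ s2+k-1 <;> simp [hp]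
    · apply Subtype.ext
      funext p
      by_cases hp : s2 ≤ p.1+1 ∧ p.1 ≤ s2+k-1 <;> simp [hp]

lemma card_key (n k s1 s2 : ℕ)
    (hsep : ∀ p : ℕ, ¬(s1 ≤ p+1 ∧ p ≤ s1+k-1 ∧ s2 ≤ p+1 ∧ p ≤ s2+k-1)) :
    Fintype.card {g : Fin (n-1) → Bool // Cnd n k s1 g ∧ Cnd n k s2 g} * 2^(n-1)
      = Fintype.card {g : Fin (n-1) → Bool // Cnd n k s1 g} *
        Fintype.card {g : Fin (n-1) → Bool // Cnd n k s2 g} := by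
  have h := Fintype.card_congr (swapEquiv n k s1 s2 hsep)
  rw [Fintype.card_prod, Fintype.card_prod, Fintype.card_fun, Fintype.card_bool,
    Fintype.card_fin] at h
  exact h

end B2Aux

open B2Aux

/-- Under the uniform measure on the `2^(n-1)` b₂-regular permutations
of `{1,...,n}`, the indicators `I_i`, `I_j` of the `k`-cycles on the (1-based) blocks
`{i,...,i+k-1}` and `{j,...,j+k-1}` are independent whenever `|i - j| > k + 1`:
`P(I_i = 1 ∧ I_j = 1) = P(I_i = 1)·P(I_j = 1)`. -/
theorem b2_k_cycle_indicators_independent (n k i j : ℕ) (hk : 1 ≤ k)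
    (hi : 1 ≤ i) (hi' : i + k ≤ n + 1) (hj : 1 ≤ j) (hj' : j + k ≤ n + 1)
    (hfar : i + k + 1 < j ∨ j + k + 1 < i) :
    ((Finset.univ.filter (fun π : Equiv.Perm (Fin n) =>
        IsB2 π ∧ BlockCycle n k (i - 1) π ∧ BlockCycle n k (j - 1) π)).card : ℚ)
        / 2 ^ (n - 1)
      = (((Finset.univ.filter (fun π : Equiv.Perm (Fin n) =>
            IsB2 π ∧ BlockCycle n k (i - 1) π)).card : ℚ) / 2 ^ (n - 1)) *
        (((Finset.univ.filter (fun π : Equiv.Perm (Fin n) =>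
            IsB2 π ∧ BlockCycle n k (j - 1) π)).card : ℚ) / 2 ^ (n - 1)) := by
  have hs1 : (i-1) + k ≤ n := by omega
  have hs2 : (j-1) + k ≤ n := by omega
  have hsep : ∀ p : ℕ, ¬((i-1) ≤ p+1 ∧ p ≤ (i-1)+k-1 ∧ (j-1) ≤ p+1 ∧ p ≤ (j-1)+k-1) := by
    intro p; omega
  have c1 : (Finset.univ.filter (fun π : Equiv.Perm (Fin n) =>
      IsB2 π ∧ BlockCycle n k (i - 1) π)).card
      = Fintype.card {g : Fin (n-1) → Bool // Cnd n k (i-1) g} := by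
    rw [← Fintype.card_subtype]
    exact Fintype.card_congr (equivOne n k (i-1) hk hs1)
  have c2 : (Finset.univ.filter (fun π : Equiv.Perm (Fin n) =>
      IsB2 π ∧ BlockCycle n k (j - 1) π)).card
      = Fintype.card {g : Fin (n-1) → Bool // Cnd n k (j-1) g} := by
    rw [← Fintype.card_subtype]
    exact Fintype.card_congr (equivOne n k (j-1) hk hs2)
  have c12 : (Finset.univ.filter (fun π : Equiv.Perm (Fin n) =>
      IsB2 π ∧ BlockCycle n k (i - 1) π ∧ BlockCycle n k (j - 1) π)).card
      = Fintype.card {g : Fin (n-1) → Bool // Cnd n k (i-1) g ∧ Cnd n k (j-1) g} := by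
    rw [← Fintype.card_subtype]
    exact Fintype.card_congr (equivTwo n k (i-1) (j-1) hk hs1 hs2)
  have key := card_key n k (i-1) (j-1) hsep
  rw [c1, c2, c12]
  have h2 : ((2:ℚ))^(n-1) ≠ 0 := by positivity
  have hQ : (Fintype.card {g : Fin (n-1) → Bool // Cnd n k (i-1) g ∧ Cnd n k (j-1) g} : ℚ)
      * 2^(n-1)
      = (Fintype.card {g : Fin (n-1) → Bool // Cnd n k (i-1) g} : ℚ)
        * (Fintype.card {g : Fin (n-1) → Bool // Cnd n k (j-1) g} : ℚ) := by
    exact_mod_cast congrArg (Nat.cast (R := ℚ)) key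
  field_simp
  linear_combination hQ
end
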